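/- arXiv:2403.14901 — 10 statements merged into one kernel-verified Lean document; each statement's English description precedes it below -/
import Mathlib

section
/- Let η:(0,∞)→(0,∞) be concave and ω a modulus. Then ω_η is itself a modulus, i.e. ω_η is non-decreasing on [0,∞) and lim_{h→0+}ω_η(h)=0. -/
noncomputable def omegaEta (η ω : ℝ → ℝ) (h : ℝ) : ℝ :=
  sInf {s : ℝ | ∃ (n : ℕ) (x : ℕ → ℝ), 0 < n ∧ x 0 = 0 ∧ x n = h ∧
    (∀ j < n, x j < x (j + 1)) ∧
    s = ∑ j ∈ Finset.range n,
      max 1 ((x (j + 1) - x j) / η (x (j + 1))) * ω (x (j + 1) - x j)}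

namespace OmegaEtaAux

def PSet (η ω : ℝ → ℝ) (h : ℝ) : Set ℝ :=
  {s : ℝ | ∃ (n : ℕ) (x : ℕ → ℝ), 0 < n ∧ x 0 = 0 ∧ x n = h ∧
    (∀ j < n, x j < x (j + 1)) ∧
    s = ∑ j ∈ Finset.range n,
      max 1 ((x (j + 1) - x j) / η (x (j + 1))) * ω (x (j + 1) - x j)}

lemma omegaEta_eq (η ω : ℝ → ℝ) (h : ℝ) : omegaEta η ω h = sInf (PSet η ω h) := rfl

lemma ratio_lemma (η : ℝ → ℝ) (hη_pos : ∀ x > (0:ℝ), 0 < η x)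
    (hη_conc : ConcaveOn ℝ (Set.Ioi 0) η) {a b : ℝ} (ha : 0 < a) (hab : a ≤ b) :
    a * η b ≤ b * η a := by
  rcases eq_or_lt_of_le hab with rfl | hlt
  · exact le_refl _
  · have key : ∀ ε : ℝ, 0 < ε → ε < a → (a - ε) * η b ≤ (b - ε) * η a := by
      intro ε hε hεa
      have hbε : (0:ℝ) < b - ε := by linarith
      have hp : (0:ℝ) ≤ (b - a)/(b - ε) := div_nonneg (by linarith) hbε.le
      have hq : (0:ℝ) ≤ (a - ε)/(b - ε) := div_nonneg (by linarith) hbε.le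
      have hpq : (b - a)/(b - ε) + (a - ε)/(b - ε) = 1 := by field_simp; ring
      have hmem1 : ε ∈ Set.Ioi (0:ℝ) := hε
      have hmem2 : b ∈ Set.Ioi (0:ℝ) := lt_trans ha hlt
      have hcomb := hη_conc.2 hmem1 hmem2 hp hq hpq
      have hx : ((b - a)/(b - ε)) • ε + ((a - ε)/(b - ε)) • b = a := by
        rw [smul_eq_mul, smul_eq_mul, div_mul_eq_mul_div, div_mul_eq_mul_div, ← add_div,
          div_eq_iff hbε.ne']; ring
      rw [hx] at hcomb
      have hηε : 0 < η ε := hη_pos ε hε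
      have h1 : (a - ε)/(b - ε) * η b ≤ η a := by
        simp only [smul_eq_mul] at hcomb
        nlinarith [mul_nonneg hp hηε.le]
      calc (a - ε) * η b = ((a - ε)/(b - ε) * η b) * (b - ε) := by field_simp
        _ ≤ η a * (b - ε) := mul_le_mul_of_nonneg_right h1 hbε.le
        _ = (b - ε) * η a := mul_comm _ _
    by_contra hcon
    push_neg at hcon
    have hδpos : 0 < a * η b - b * η a := by linarith
    rcases le_or_gt (η b) (η a) with hc | hc
    · have h3 := key (a/2) (by linarith) (by linarith)
      nlinarith
    · have hcpos : 0 < η b - η a := by linarith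
      set ε := min (a/2) ((a * η b - b * η a)/(2*(η b - η a))) with hεdef
      have hε1 : 0 < ε := lt_min (by linarith) (div_pos hδpos (by linarith))
      have hε2 : ε < a := lt_of_le_of_lt (min_le_left _ _) (by linarith)
      have h3 := key ε hε1 hε2
      have h4 : ε * (η b - η a) ≤ (a * η b - b * η a)/2 := by
        have h5 : ε ≤ (a * η b - b * η a)/(2*(η b - η a)) := min_le_right _ _
        have h6 : (a * η b - b * η a)/(2*(η b - η a)) * (η b - η a)
            = (a * η b - b * η a)/2 := by
          field_simp
        calc ε * (η b - η a) ≤ (a * η b - b * η a)/(2*(η b - η a)) * (η b - η a) :=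
              mul_le_mul_of_nonneg_right h5 hcpos.le
          _ = (a * η b - b * η a)/2 := h6
      nlinarith

lemma chain_mono {x : ℕ → ℝ} {n : ℕ} (hinc : ∀ j < n, x j < x (j + 1)) :
    ∀ i j, i ≤ j → j ≤ n → x i ≤ x j := by
  intro i j hij hjn
  induction j with
  | zero => have : i = 0 := Nat.le_zero.mp hij; simp [this]
  | succ k ih =>
    by_cases h : i = k + 1
    · simp [h]
    · have hik : i ≤ k := Nat.le_of_lt_succ (lt_of_le_of_ne hij h)
      have h1 := ih hik (le_trans (Nat.le_succ k) hjn)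
      exact le_trans h1 (hinc k (by omega)).le

lemma mem_nonneg {η ω : ℝ → ℝ} (hω_nonneg : ∀ x ≥ (0:ℝ), 0 ≤ ω x)
    {h s : ℝ} (hs : s ∈ PSet η ω h) : 0 ≤ s := by
  obtain ⟨n, x, hn, hx0, hxn, hinc, rfl⟩ := hs
  apply Finset.sum_nonneg
  intro j hj
  have hj' : j < n := Finset.mem_range.mp hj
  have hlt := hinc j hj'
  apply mul_nonneg (le_trans zero_le_one (le_max_left _ _))
  exact hω_nonneg _ (by linarith)

lemma bdd_below {η ω : ℝ → ℝ} (hω_nonneg : ∀ x ≥ (0:ℝ), 0 ≤ ω x) (h : ℝ) :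
    BddBelow (PSet η ω h) :=
  ⟨0, fun _ hs => mem_nonneg hω_nonneg hs⟩

lemma single_mem (η ω : ℝ → ℝ) {h : ℝ} (hh : 0 < h) :
    max 1 (h / η h) * ω h ∈ PSet η ω h := by
  refine ⟨1, fun j => if j = 0 then 0 else h, one_pos, by simp, by simp, ?_, ?_⟩
  · intro j hj
    have : j = 0 := by omega
    simp [this, hh]
  · simp

lemma zero_empty (η ω : ℝ → ℝ) : PSet η ω 0 = ∅ := by
  ext s
  simp only [Set.mem_empty_iff_false, iff_false]
  rintro ⟨n, x, hn, hx0, hxn, hinc, -⟩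
  obtain ⟨m, rfl⟩ := Nat.exists_eq_succ_of_ne_zero hn.ne'
  have h1 : x 0 ≤ x m := chain_mono hinc 0 m (Nat.zero_le m) (Nat.le_succ m)
  have h2 := hinc m (Nat.lt_succ_self m)
  rw [hx0] at h1; rw [hxn] at h2
  linarith

lemma term_le (η ω : ℝ → ℝ) (hη_pos : ∀ x > (0:ℝ), 0 < η x)
    (hη_conc : ConcaveOn ℝ (Set.Ioi 0) η)
    (hω_nonneg : ∀ x ≥ (0:ℝ), 0 ≤ ω x) (hω_mono : MonotoneOn ω (Set.Ici 0))
    {a b c : ℝ} (hc : 0 ≤ c) (hca : c < a) (hab : a ≤ b) :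
    max 1 ((a - c) / η a) * ω (a - c) ≤ max 1 ((b - c) / η b) * ω (b - c) := by
  have ha : (0:ℝ) < a := lt_of_le_of_lt hc hca
  have hηa := hη_pos a ha
  have hηb := hη_pos b (by linarith)
  have hr := ratio_lemma η hη_pos hη_conc ha hab
  have h1 : (a - c) * η b ≤ (b - c) * η a := by
    rcases le_total (η a) (η b) with hcc | hcc
    · nlinarith [mul_le_mul_of_nonneg_left hcc hc]
    · nlinarith [mul_le_mul_of_nonneg_right hca.le (sub_nonneg.2 hcc),
        mul_le_mul_of_nonneg_right hab hηa.le]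
  have h2 : (a - c) / η a ≤ (b - c) / η b := (div_le_div_iff₀ hηa hηb).mpr h1
  have hmax : max 1 ((a - c) / η a) ≤ max 1 ((b - c) / η b) := max_le_max le_rfl h2
  have hω1 : 0 ≤ ω (a - c) := hω_nonneg _ (by linarith)
  have hω2 : ω (a - c) ≤ ω (b - c) := by
    apply hω_mono (Set.mem_Ici.mpr (by linarith)) (Set.mem_Ici.mpr (by linarith))
    linarith
  exact mul_le_mul hmax hω2 hω1 (le_trans zero_le_one (le_max_left _ _))

end OmegaEtaAux

namespace OmegaEtaAux

lemma key_le (η ω : ℝ → ℝ) (hη_pos : ∀ x > (0:ℝ), 0 < η x)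
    (hη_conc : ConcaveOn ℝ (Set.Ioi 0) η)
    (hω_nonneg : ∀ x ≥ (0:ℝ), 0 ≤ ω x) (hω_mono : MonotoneOn ω (Set.Ici 0))
    {h₁ h₂ : ℝ} (h1 : 0 < h₁) (h12 : h₁ ≤ h₂) :
    ∀ s ∈ PSet η ω h₂, omegaEta η ω h₁ ≤ s := by
  classical
  rintro s ⟨n, x, hn, hx0, hxn, hinc, rfl⟩
  have hmono := chain_mono hinc
  have hexP : ∃ k, h₁ ≤ x k := ⟨n, by rw [hxn]; exact h12⟩
  set k := Nat.find hexP with hkdef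
  have hk : h₁ ≤ x k := Nat.find_spec hexP
  have hkn : k ≤ n := Nat.find_min' hexP (by rw [hxn]; exact h12)
  have hk0 : 0 < k := by
    rcases Nat.eq_zero_or_pos k with hz | hz
    · exfalso
      have := hk
      rw [hz, hx0] at this
      linarith
    · exact hz
  obtain ⟨m, hm⟩ : ∃ m, k = m + 1 := ⟨k - 1, by omega⟩
  have hxm : x m < h₁ := not_le.mp (Nat.find_min hexP (show m < k by omega))
  set y : ℕ → ℝ := fun j => if j < k then x j else h₁ with hy
  have hy0 : y 0 = 0 := by simp only [hy, if_pos hk0]; exact hx0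
  have hyk : y k = h₁ := by simp [hy]
  have hyinc : ∀ j < k, y j < y (j + 1) := by
    intro j hj
    have hyj : y j = x j := if_pos hj
    by_cases hj1 : j + 1 < k
    · have : y (j + 1) = x (j + 1) := if_pos hj1
      rw [hyj, this]
      exact hinc j (by omega)
    · have hjk : j + 1 = k := by omega
      have hjm : j = m := by omega
      have : y (j + 1) = h₁ := by rw [hjk, hyk]
      rw [hyj, this, hjm]
      exact hxm
  have hmem : (∑ j ∈ Finset.range k,
      max 1 ((y (j + 1) - y j) / η (y (j + 1))) * ω (y (j + 1) - y j)) ∈ PSet η ω h₁ :=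
    ⟨k, y, hk0, hy0, hyk, hyinc, rfl⟩
  have step1 : omegaEta η ω h₁ ≤ ∑ j ∈ Finset.range k,
      max 1 ((y (j + 1) - y j) / η (y (j + 1))) * ω (y (j + 1) - y j) :=
    csInf_le (bdd_below hω_nonneg h₁) hmem
  have step2 : (∑ j ∈ Finset.range k,
        max 1 ((y (j + 1) - y j) / η (y (j + 1))) * ω (y (j + 1) - y j)) ≤
      ∑ j ∈ Finset.range k,
        max 1 ((x (j + 1) - x j) / η (x (j + 1))) * ω (x (j + 1) - x j) := by
    rw [hm, Finset.sum_range_succ, Finset.sum_range_succ]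
    apply add_le_add
    · apply le_of_eq
      apply Finset.sum_congr rfl
      intro j hj
      have hj' : j < m := Finset.mem_range.mp hj
      have e1 : y j = x j := if_pos (by omega)
      have e2 : y (j + 1) = x (j + 1) := if_pos (by omega)
      rw [e1, e2]
    · have e1 : y m = x m := if_pos (by omega)
      have e2 : y (m + 1) = h₁ := by rw [← hm, hyk]
      rw [e1, e2]
      have hc0 : 0 ≤ x m := by
        have := hmono 0 m (Nat.zero_le m) (by omega)
        rw [hx0] at this; exact this
      have hkk : x (m + 1) = x k := by rw [hm]
      rw [hkk]
      exact term_le η ω hη_pos hη_conc hω_nonneg hω_mono hc0 hxm hk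
  have step3 : (∑ j ∈ Finset.range k,
        max 1 ((x (j + 1) - x j) / η (x (j + 1))) * ω (x (j + 1) - x j)) ≤
      ∑ j ∈ Finset.range n,
        max 1 ((x (j + 1) - x j) / η (x (j + 1))) * ω (x (j + 1) - x j) := by
    apply Finset.sum_le_sum_of_subset_of_nonneg (Finset.range_subset_range.mpr hkn)
    intro j hj _
    have hj' : j < n := Finset.mem_range.mp hj
    have := hinc j hj'
    exact mul_nonneg (le_trans zero_le_one (le_max_left _ _)) (hω_nonneg _ (by linarith))
  linarith

end OmegaEtaAux

open OmegaEtaAux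
theorem omegaEta_modulus (η ω : ℝ → ℝ)
    (hη_pos : ∀ x > (0:ℝ), 0 < η x)
    (hη_conc : ConcaveOn ℝ (Set.Ioi 0) η)
    (hω_nonneg : ∀ x ≥ (0:ℝ), 0 ≤ ω x)
    (hω_mono : MonotoneOn ω (Set.Ici 0))
    (hω_lim : Filter.Tendsto ω (nhdsWithin 0 (Set.Ioi 0)) (nhds 0)) :
    (∀ h ≥ (0:ℝ), 0 ≤ omegaEta η ω h) ∧
    MonotoneOn (omegaEta η ω) (Set.Ici 0) ∧
    Filter.Tendsto (omegaEta η ω) (nhdsWithin 0 (Set.Ioi 0)) (nhds 0) := by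
  have nonneg : ∀ h : ℝ, 0 ≤ omegaEta η ω h := fun h =>
    Real.sInf_nonneg fun s hs => mem_nonneg hω_nonneg hs
  refine ⟨fun h _ => nonneg h, ?_, ?_⟩
  · intro h₁ hh₁ h₂ _ h12
    rcases eq_or_lt_of_le (Set.mem_Ici.mp hh₁) with h | h
    · have : omegaEta η ω h₁ = 0 := by
        rw [omegaEta_eq, ← h, zero_empty, Real.sInf_empty]
      rw [this]
      exact nonneg h₂
    · have hne : (PSet η ω h₂).Nonempty :=
        ⟨_, single_mem η ω (lt_of_lt_of_le h h12)⟩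
      rw [omegaEta_eq η ω h₂]
      exact le_csInf hne (key_le η ω hη_pos hη_conc hω_nonneg hω_mono h h12)
  · have hC : ∀ h ∈ Set.Ioc (0:ℝ) 1, omegaEta η ω h ≤ max 1 (1 / η 1) * ω h := by
      intro h hh
      have hb1 : omegaEta η ω h ≤ max 1 (h / η h) * ω h :=
        csInf_le (bdd_below hω_nonneg h) (single_mem η ω hh.1)
      have h2 : h / η h ≤ 1 / η 1 := by
        have hr := ratio_lemma η hη_pos hη_conc hh.1 hh.2
        exact (div_le_div_iff₀ (hη_pos h hh.1) (hη_pos 1 one_pos)).mpr (by linarith)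
      have h3 : max 1 (h / η h) ≤ max 1 (1 / η 1) := max_le_max le_rfl h2
      exact le_trans hb1 (mul_le_mul_of_nonneg_right h3 (hω_nonneg h hh.1.le))
    have hupper : Filter.Tendsto (fun h => max 1 (1 / η 1) * ω h)
        (nhdsWithin 0 (Set.Ioi 0)) (nhds 0) := by
      have := hω_lim.const_mul (max 1 (1 / η 1))
      simpa using this
    apply squeeze_zero' (Filter.Eventually.of_forall fun h => nonneg h) ?_ hupper
    filter_upwards [Ioc_mem_nhdsGT_of_mem (by simp : (0:ℝ) ∈ Set.Ico (0:ℝ) 1)]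
      with h hh using hC h hh
end

section
/- Let η:(0,∞)→(0,∞) be concave and ω a modulus. Then ω_η is sub-additive: ω_η(x+h) ≤ ω_η(x)+ω_η(h) for all x,h>0. -/
/-- A positive concave function on `(0,∞)` is monotone. -/
lemma eta_mono_aux (η : ℝ → ℝ) (hη_pos : ∀ x > (0:ℝ), 0 < η x)
    (hη_conc : ConcaveOn ℝ (Set.Ioi 0) η) :
    ∀ a b : ℝ, 0 < a → a < b → η a ≤ η b := by
  intro a b ha hab
  by_contra hlt
  push_neg at hlt
  have hηa : 0 < η a := hη_pos a ha
  have hηb : 0 < η b := hη_pos b (ha.trans hab)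
  set r : ℝ := η b / η a with hr_def
  have hr0 : 0 < r := div_pos hηb hηa
  have hr1 : r < 1 := (div_lt_one hηa).mpr hlt
  set c : ℝ := max (b + 1) ((b - r * a) / (1 - r) + 1) with hc_def
  have hcb : b < c := lt_of_lt_of_le (lt_add_one b) (le_max_left _ _)
  have hc2 : (b - r * a) / (1 - r) < c :=
    lt_of_lt_of_le (lt_add_one _) (le_max_right _ _)
  have hca : a < c := hab.trans hcb
  have hca0 : (0:ℝ) < c - a := by linarith
  set l : ℝ := (c - b) / (c - a) with hl_def
  have hl0 : 0 ≤ l := div_nonneg (by linarith) hca0.le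
  have hl1 : l ≤ 1 := by
    rw [hl_def, div_le_one hca0]; linarith
  have hcomb : l * a + (1 - l) * c = b := by
    rw [hl_def]; field_simp
    ring
  have hkey := hη_conc.2 (Set.mem_Ioi.mpr ha) (Set.mem_Ioi.mpr (ha.trans hca))
    hl0 (by linarith : (0:ℝ) ≤ 1 - l) (by ring : l + (1 - l) = 1)
  simp only [smul_eq_mul, hcomb] at hkey
  -- l > r
  have hlr : r < l := by
    rw [hl_def, lt_div_iff₀ hca0]
    have := (div_lt_iff₀ (by linarith : (0:ℝ) < 1 - r)).mp hc2
    nlinarith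
  have hrb : r * η a = η b := div_mul_cancel₀ _ (ne_of_gt hηa)
  have hl1' : 0 < 1 - l := by
    rw [hl_def]
    have : (c - b) / (c - a) < 1 := by rw [div_lt_one hca0]; linarith
    linarith
  have hηc : 0 < η c := hη_pos c (by linarith)
  nlinarith [mul_lt_mul_of_pos_right hlr hηa, mul_pos hl1' hηc]

lemma partition_nonneg (n : ℕ) (X : ℕ → ℝ) (h0 : X 0 = 0)
    (hinc : ∀ j < n, X j < X (j + 1)) : ∀ j ≤ n, 0 ≤ X j := by
  intro j hj
  induction j with
  | zero => simp [h0]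
  | succ k ih =>
    have h1 := hinc k (by omega)
    have h2 := ih (by omega)
    linarith

lemma omegaEta_set_nonneg (η ω : ℝ → ℝ) (hω_nonneg : ∀ x ≥ (0:ℝ), 0 ≤ ω x) (t : ℝ) :
    ∀ s ∈ {s : ℝ | ∃ (n : ℕ) (x : ℕ → ℝ), 0 < n ∧ x 0 = 0 ∧ x n = t ∧
      (∀ j < n, x j < x (j + 1)) ∧
      s = ∑ j ∈ Finset.range n,
        max 1 ((x (j + 1) - x j) / η (x (j + 1))) * ω (x (j + 1) - x j)}, 0 ≤ s := by
  rintro s ⟨n, X, hn, h0, hXn, hinc, rfl⟩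
  apply Finset.sum_nonneg
  intro j hj
  rw [Finset.mem_range] at hj
  have hΔ : 0 < X (j + 1) - X j := by have := hinc j hj; linarith
  exact mul_nonneg (le_trans zero_le_one (le_max_left _ _)) (hω_nonneg _ hΔ.le)

theorem omegaEta_subadditive (η ω : ℝ → ℝ)
    (hη_pos : ∀ x > (0:ℝ), 0 < η x)
    (hη_conc : ConcaveOn ℝ (Set.Ioi 0) η)
    (hω_nonneg : ∀ x ≥ (0:ℝ), 0 ≤ ω x)
    (hω_mono : MonotoneOn ω (Set.Ici 0))
    (hω_lim : Filter.Tendsto ω (nhdsWithin 0 (Set.Ioi 0)) (nhds 0)) :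
    ∀ x > (0:ℝ), ∀ h > (0:ℝ),
      omegaEta η ω (x + h) ≤ omegaEta η ω x + omegaEta η ω h := by
  intro x hx h hh
  -- notation for the sets
  set Sxy := {s : ℝ | ∃ (n : ℕ) (X : ℕ → ℝ), 0 < n ∧ X 0 = 0 ∧ X n = x + h ∧
    (∀ j < n, X j < X (j + 1)) ∧
    s = ∑ j ∈ Finset.range n,
      max 1 ((X (j + 1) - X j) / η (X (j + 1))) * ω (X (j + 1) - X j)} with hSxy
  have hbdd : ∀ t : ℝ, BddBelow {s : ℝ | ∃ (n : ℕ) (X : ℕ → ℝ), 0 < n ∧ X 0 = 0 ∧ X n = t ∧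
      (∀ j < n, X j < X (j + 1)) ∧
      s = ∑ j ∈ Finset.range n,
        max 1 ((X (j + 1) - X j) / η (X (j + 1))) * ω (X (j + 1) - X j)} :=
    fun t => ⟨0, fun s hs => omegaEta_set_nonneg η ω hω_nonneg t s hs⟩
  have hne : ∀ t : ℝ, 0 < t → Set.Nonempty {s : ℝ | ∃ (n : ℕ) (X : ℕ → ℝ),
      0 < n ∧ X 0 = 0 ∧ X n = t ∧ (∀ j < n, X j < X (j + 1)) ∧
      s = ∑ j ∈ Finset.range n,
        max 1 ((X (j + 1) - X j) / η (X (j + 1))) * ω (X (j + 1) - X j)} := by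
    intro t ht
    refine ⟨_, ⟨1, fun j => if j = 0 then 0 else t, one_pos, by simp, by simp, ?_, rfl⟩⟩
    intro j hj
    interval_cases j
    simpa using ht
  -- Key: for any admissible sums a (for x) and b (for h), omegaEta (x+h) ≤ a + b
  have key : ∀ a ∈ {s : ℝ | ∃ (n : ℕ) (X : ℕ → ℝ), 0 < n ∧ X 0 = 0 ∧ X n = x ∧
      (∀ j < n, X j < X (j + 1)) ∧
      s = ∑ j ∈ Finset.range n,
        max 1 ((X (j + 1) - X j) / η (X (j + 1))) * ω (X (j + 1) - X j)},
      ∀ b ∈ {s : ℝ | ∃ (n : ℕ) (X : ℕ → ℝ), 0 < n ∧ X 0 = 0 ∧ X n = h ∧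
      (∀ j < n, X j < X (j + 1)) ∧
      s = ∑ j ∈ Finset.range n,
        max 1 ((X (j + 1) - X j) / η (X (j + 1))) * ω (X (j + 1) - X j)},
      omegaEta η ω (x + h) ≤ a + b := by
    rintro a ⟨n, X, hn, hX0, hXn, hXinc, rfl⟩ b ⟨m, Y, hm, hY0, hYm, hYinc, rfl⟩
    -- concatenated partition
    set Z : ℕ → ℝ := fun j => if j < n then X j else x + Y (j - n) with hZ_def
    have hZX : ∀ j ≤ n, Z j = X j := by
      intro j hj
      rcases lt_or_eq_of_le hj with hj | hj
      · simp [hZ_def, hj]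
      · subst hj; simp [hZ_def, hY0, hXn]
    have hZY : ∀ k, Z (n + k) = x + Y k := by
      intro k
      simp [hZ_def]
    have hZ0 : Z 0 = 0 := by rw [hZX 0 (Nat.zero_le n), hX0]
    have hZnm : Z (n + m) = x + h := by rw [hZY m, hYm]
    have hZinc : ∀ j < n + m, Z j < Z (j + 1) := by
      intro j hj
      rcases lt_or_ge j n with hjn | hjn
      · rw [hZX j hjn.le, hZX (j + 1) hjn]
        exact hXinc j hjn
      · obtain ⟨k, rfl⟩ := Nat.exists_eq_add_of_le hjn
        have hk : k < m := by omega
        have : n + k + 1 = n + (k + 1) := by omega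
        rw [hZY k, this, hZY (k + 1)]
        have := hYinc k hk
        linarith
    -- positivity of Y values
    have hYnn : ∀ k ≤ m, 0 ≤ Y k := partition_nonneg m Y hY0 hYinc
    -- the concatenated sum is admissible
    have hmem : (∑ j ∈ Finset.range (n + m),
        max 1 ((Z (j + 1) - Z j) / η (Z (j + 1))) * ω (Z (j + 1) - Z j)) ∈ Sxy :=
      ⟨n + m, Z, by omega, hZ0, hZnm, hZinc, rfl⟩
    have hsplit : (∑ j ∈ Finset.range (n + m),
        max 1 ((Z (j + 1) - Z j) / η (Z (j + 1))) * ω (Z (j + 1) - Z j))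
        = (∑ j ∈ Finset.range n,
            max 1 ((Z (j + 1) - Z j) / η (Z (j + 1))) * ω (Z (j + 1) - Z j))
        + ∑ j ∈ Finset.range m,
            max 1 ((Z (n + j + 1) - Z (n + j)) / η (Z (n + j + 1))) * ω (Z (n + j + 1) - Z (n + j)) := by
      rw [Finset.sum_range_add]
    have hfirst : (∑ j ∈ Finset.range n,
        max 1 ((Z (j + 1) - Z j) / η (Z (j + 1))) * ω (Z (j + 1) - Z j))
        = ∑ j ∈ Finset.range n,
            max 1 ((X (j + 1) - X j) / η (X (j + 1))) * ω (X (j + 1) - X j) := by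
      apply Finset.sum_congr rfl
      intro j hj
      rw [Finset.mem_range] at hj
      rw [hZX j hj.le, hZX (j + 1) hj]
    have hsecond : (∑ j ∈ Finset.range m,
        max 1 ((Z (n + j + 1) - Z (n + j)) / η (Z (n + j + 1))) * ω (Z (n + j + 1) - Z (n + j)))
        ≤ ∑ j ∈ Finset.range m,
            max 1 ((Y (j + 1) - Y j) / η (Y (j + 1))) * ω (Y (j + 1) - Y j) := by
      apply Finset.sum_le_sum
      intro j hj
      rw [Finset.mem_range] at hj
      have e1 : n + j + 1 = n + (j + 1) := by omega
      rw [e1, hZY (j + 1), hZY j]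
      have hsub : x + Y (j + 1) - (x + Y j) = Y (j + 1) - Y j := by ring
      rw [hsub]
      have hΔ : 0 < Y (j + 1) - Y j := by have := hYinc j hj; linarith
      have hYj1 : 0 < Y (j + 1) := by
        have h1 := hYnn j (by omega)
        have h2 := hYinc j hj
        linarith
      have hη1 : 0 < η (Y (j + 1)) := hη_pos _ hYj1
      have hη2 : 0 < η (x + Y (j + 1)) := hη_pos _ (by linarith)
      have hmono : η (Y (j + 1)) ≤ η (x + Y (j + 1)) :=
        eta_mono_aux η hη_pos hη_conc _ _ hYj1 (by linarith)
      have hdiv : (Y (j + 1) - Y j) / η (x + Y (j + 1)) ≤ (Y (j + 1) - Y j) / η (Y (j + 1)) :=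
        div_le_div_of_nonneg_left hΔ.le hη1 hmono
      exact mul_le_mul_of_nonneg_right (max_le_max le_rfl hdiv) (hω_nonneg _ hΔ.le)
    have h1 : omegaEta η ω (x + h) ≤ ∑ j ∈ Finset.range (n + m),
        max 1 ((Z (j + 1) - Z j) / η (Z (j + 1))) * ω (Z (j + 1) - Z j) :=
      csInf_le (hbdd (x + h)) hmem
    calc omegaEta η ω (x + h) ≤ _ := h1
      _ ≤ _ := by rw [hsplit, hfirst]; exact add_le_add_right hsecond _
  -- conclude
  rw [omegaEta, omegaEta, omegaEta]
  rw [← sub_le_iff_le_add']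
  apply le_csInf (hne h hh)
  intro b hb
  rw [sub_le_iff_le_add', ← sub_le_iff_le_add]
  apply le_csInf (hne x hx)
  intro a ha
  rw [sub_le_iff_le_add']
  have := key a ha b hb
  rw [omegaEta] at this
  linarith
end

section
/- Let η:(0,∞)→(0,∞) be non-decreasing and let ω be a concave modulus. Then h·ω(η(h))/η(h) ≤ ω_η(h) for all h>0. -/
lemma concave_ratio (ω : ℝ → ℝ) (hω_conc : ConcaveOn ℝ (Set.Ici 0) ω)
    (hω0 : 0 ≤ ω 0) {s t : ℝ} (hs : 0 < s) (hst : s ≤ t) :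
    s / t * ω t ≤ ω s := by
  have ht : 0 < t := hs.trans_le hst
  have h1 : (1 - s / t) + s / t = 1 := by ring
  have h2 : 0 ≤ s / t := div_nonneg hs.le ht.le
  have h3 : 0 ≤ 1 - s / t := by
    have : s / t ≤ 1 := (div_le_one ht).mpr hst
    linarith
  have := hω_conc.2 (Set.mem_Ici.mpr le_rfl) (Set.mem_Ici.mpr ht.le) h3 h2 h1
  simp only [smul_eq_mul, mul_zero, zero_add] at this
  rw [div_mul_cancel₀ _ ht.ne'] at this
  nlinarith

theorem omegaEta_lower_estimate (η ω : ℝ → ℝ)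
    (hη_pos : ∀ x > (0:ℝ), 0 < η x)
    (hη_mono : MonotoneOn η (Set.Ioi 0))
    (hω_nonneg : ∀ x ≥ (0:ℝ), 0 ≤ ω x)
    (hω_mono : MonotoneOn ω (Set.Ici 0))
    (hω_lim : Filter.Tendsto ω (nhdsWithin 0 (Set.Ioi 0)) (nhds 0))
    (hω_conc : ConcaveOn ℝ (Set.Ici 0) ω) :
    ∀ h > (0:ℝ), h * ω (η h) / η h ≤ omegaEta η ω h := by
  intro h hh
  have hηh : 0 < η h := hη_pos h hh
  set c : ℝ := ω (η h) / η h with hc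
  have hc0 : 0 ≤ c := div_nonneg (hω_nonneg _ hηh.le) hηh.le
  have hgoal : h * ω (η h) / η h = h * c := by rw [hc]; ring
  rw [hgoal]
  apply le_csInf
  · refine ⟨max 1 (h / η h) * ω h, 1, fun j => if j = 0 then 0 else h, one_pos, rfl, rfl,
      ?_, ?_⟩
    · intro j hj
      interval_cases j
      simpa using hh
    · simp
  · rintro s ⟨n, x, hn, hx0, hxn, hlt, rfl⟩
    have hle : ∀ i j, i ≤ j → j ≤ n → x i ≤ x j := by
      intro i j hij hjn
      induction j with
      | zero => rw [Nat.le_zero.mp hij]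
      | succ k ih =>
        rcases Nat.lt_or_ge i (k + 1) with hi | hi
        · exact (ih (Nat.lt_succ_iff.mp hi) (Nat.le_of_succ_le hjn)).trans
            (hlt k (Nat.lt_of_succ_le hjn)).le
        · have : i = k + 1 := le_antisymm hij hi
          rw [this]
    have key : ∀ j ∈ Finset.range n, (x (j + 1) - x j) * c ≤
        max 1 ((x (j + 1) - x j) / η (x (j + 1))) * ω (x (j + 1) - x j) := by
      intro j hj
      rw [Finset.mem_range] at hj
      set Δ := x (j + 1) - x j with hΔdef
      have hΔ : 0 < Δ := sub_pos.mpr (hlt j hj)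
      have hxj1pos : 0 < x (j + 1) := by
        have h1 : x 0 < x 1 := hlt 0 hn
        have h2 : x 1 ≤ x (j + 1) := hle 1 (j + 1) (by omega) (by omega)
        linarith [hx0 ▸ h1]
      have hxj1le : x (j + 1) ≤ h := hxn ▸ hle (j + 1) n hj le_rfl
      have hηj : 0 < η (x (j + 1)) := hη_pos _ hxj1pos
      have hηle : η (x (j + 1)) ≤ η h := hη_mono hxj1pos hh hxj1le
      rcases le_or_gt Δ (η h) with hcase | hcase
      · have hr : Δ / η h * ω (η h) ≤ ω Δ :=
          concave_ratio ω hω_conc (hω_nonneg 0 le_rfl) hΔ hcase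
        have h1 : Δ * c = Δ / η h * ω (η h) := by rw [hc]; ring
        have h2 : (1 : ℝ) ≤ max 1 (Δ / η (x (j + 1))) := le_max_left _ _
        have h3 : 0 ≤ ω Δ := hω_nonneg Δ hΔ.le
        nlinarith
      · have hr : Δ / η h ≤ Δ / η (x (j + 1)) :=
          div_le_div_of_nonneg_left hΔ.le hηj hηle
        have h2 : Δ / η (x (j + 1)) ≤ max 1 (Δ / η (x (j + 1))) := le_max_right _ _
        have h3 : ω (η h) ≤ ω Δ := hω_mono hηh.le hΔ.le hcase.le
        have h4 : 0 ≤ ω (η h) := hω_nonneg _ hηh.le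
        have h5 : Δ * c = Δ / η h * ω (η h) := by rw [hc]; ring
        have h6 : 0 ≤ Δ / η h := div_nonneg hΔ.le hηh.le
        nlinarith
    calc h * c = (x n - x 0) * c := by rw [hx0, hxn]; ring
      _ = (∑ j ∈ Finset.range n, (x (j + 1) - x j)) * c := by
          rw [Finset.sum_range_sub]
      _ = ∑ j ∈ Finset.range n, (x (j + 1) - x j) * c := Finset.sum_mul _ _ _
      _ ≤ _ := Finset.sum_le_sum key
end

section
/- Let η:(0,∞)→(0,∞) and ω a modulus. Then ω_η(x+h) ≤ ω_η(x) + max{1, h/η(x+h)}·ω(h) for all x,h>0. -/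
theorem omegaEta_est (η ω : ℝ → ℝ)
    (hη_pos : ∀ x > (0:ℝ), 0 < η x)
    (hω_nonneg : ∀ x ≥ (0:ℝ), 0 ≤ ω x)
    (hω_mono : MonotoneOn ω (Set.Ici 0))
    (hω_lim : Filter.Tendsto ω (nhdsWithin 0 (Set.Ioi 0)) (nhds 0)) :
    ∀ x > (0:ℝ), ∀ h > (0:ℝ),
      omegaEta η ω (x + h) ≤ omegaEta η ω x + max 1 (h / η (x + h)) * ω h := by
  intro X hX h hh
  set C : ℝ := max 1 (h / η (X + h)) * ω h with hC
  -- the set defining omegaEta at X+h is bounded below by 0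
  have hbdd : BddBelow {s : ℝ | ∃ (n : ℕ) (x : ℕ → ℝ), 0 < n ∧ x 0 = 0 ∧ x n = X + h ∧
      (∀ j < n, x j < x (j + 1)) ∧
      s = ∑ j ∈ Finset.range n,
        max 1 ((x (j + 1) - x j) / η (x (j + 1))) * ω (x (j + 1) - x j)} := by
    refine ⟨0, ?_⟩
    rintro s ⟨n, x, hn, h0, hXn, hmono, rfl⟩
    apply Finset.sum_nonneg
    intro j hj
    have hj' := hmono j (Finset.mem_range.mp hj)
    exact mul_nonneg (le_trans zero_le_one (le_max_left _ _))
      (hω_nonneg _ (by linarith))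
  -- the set at X is nonempty
  have hne : {s : ℝ | ∃ (n : ℕ) (x : ℕ → ℝ), 0 < n ∧ x 0 = 0 ∧ x n = X ∧
      (∀ j < n, x j < x (j + 1)) ∧
      s = ∑ j ∈ Finset.range n,
        max 1 ((x (j + 1) - x j) / η (x (j + 1))) * ω (x (j + 1) - x j)}.Nonempty := by
    refine ⟨_, 1, fun j => if j = 0 then 0 else X, one_pos, by simp, by simp, ?_, rfl⟩
    intro j hj
    interval_cases j
    simpa using hX
  -- key: extend partitions of X by one point
  have key : ∀ s ∈ {s : ℝ | ∃ (n : ℕ) (x : ℕ → ℝ), 0 < n ∧ x 0 = 0 ∧ x n = X ∧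
      (∀ j < n, x j < x (j + 1)) ∧
      s = ∑ j ∈ Finset.range n,
        max 1 ((x (j + 1) - x j) / η (x (j + 1))) * ω (x (j + 1) - x j)},
      omegaEta η ω (X + h) ≤ s + C := by
    rintro s ⟨n, x, hn, h0, hXn, hmono, rfl⟩
    apply csInf_le hbdd
    refine ⟨n + 1, fun j => if j ≤ n then x j else X + h, Nat.succ_pos n,
      by simp [h0], by simp, ?_, ?_⟩
    · intro j hj
      rcases lt_or_eq_of_le (Nat.lt_succ_iff.mp hj) with hjn | rfl
      · simp only [le_of_lt hjn, Nat.succ_le_of_lt hjn, if_true]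
        exact hmono j hjn
      · simp only [le_refl, if_true, Nat.lt_irrefl, Nat.succ_le_iff.symm]
        simp [hXn]
        linarith
    · rw [Finset.sum_range_succ]
      congr 1
      · apply Finset.sum_congr rfl
        intro j hj
        have hj' := Finset.mem_range.mp hj
        simp [le_of_lt hj', Nat.succ_le_of_lt hj']
      · have : ¬ (n + 1 ≤ n) := by omega
        simp [this, hXn, hC]
  -- conclude
  have h1 : omegaEta η ω (X + h) - C ≤ omegaEta η ω X := by
    apply le_csInf hne
    intro s hs
    linarith [key s hs]
  linarith
end

section
/- Let η:(0,∞)→(0,∞) be non-decreasing and ω a modulus. Then for all x,h>0 with h ≥ η(x)/2, one has ω_η(x+h) ≤ ω_η(x) + 2h·ω(η(x))/η(x). -/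
def partSums (η ω : ℝ → ℝ) (h : ℝ) : Set ℝ :=
  {s : ℝ | ∃ (n : ℕ) (x : ℕ → ℝ), 0 < n ∧ x 0 = 0 ∧ x n = h ∧
    (∀ j < n, x j < x (j + 1)) ∧
    s = ∑ j ∈ Finset.range n,
      max 1 ((x (j + 1) - x j) / η (x (j + 1))) * ω (x (j + 1) - x j)}

lemma omegaEta_eq_sInf (η ω : ℝ → ℝ) (h : ℝ) :
    omegaEta η ω h = sInf (partSums η ω h) := rfl

lemma partSums_nonneg (η ω : ℝ → ℝ) (hω_nonneg : ∀ x ≥ (0:ℝ), 0 ≤ ω x)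
    (t : ℝ) : ∀ s ∈ partSums η ω t, 0 ≤ s := by
  rintro s ⟨n, x, hn, h0, hnval, hmono, rfl⟩
  apply Finset.sum_nonneg
  intro j hj
  rw [Finset.mem_range] at hj
  have hx : x j < x (j + 1) := hmono j hj
  have h1 : (0:ℝ) ≤ ω (x (j + 1) - x j) := hω_nonneg _ (by linarith)
  have h2 : (0:ℝ) ≤ max 1 ((x (j + 1) - x j) / η (x (j + 1))) :=
    le_trans zero_le_one (le_max_left _ _)
  positivity

lemma partSums_bddBelow (η ω : ℝ → ℝ) (hω_nonneg : ∀ x ≥ (0:ℝ), 0 ≤ ω x)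
    (t : ℝ) : BddBelow (partSums η ω t) :=
  ⟨0, fun s hs => partSums_nonneg η ω hω_nonneg t s hs⟩

lemma partSums_nonempty (η ω : ℝ → ℝ) (t : ℝ) (ht : 0 < t) :
    (partSums η ω t).Nonempty := by
  refine ⟨_, 1, fun j => if j = 0 then 0 else t, Nat.one_pos, by simp, by simp, ?_, rfl⟩
  intro j hj
  interval_cases j
  simpa using ht

theorem omegaEta_est2 (η ω : ℝ → ℝ)
    (hη_pos : ∀ x > (0:ℝ), 0 < η x)
    (hη_mono : MonotoneOn η (Set.Ioi 0))
    (hω_nonneg : ∀ x ≥ (0:ℝ), 0 ≤ ω x)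
    (hω_mono : MonotoneOn ω (Set.Ici 0))
    (hω_lim : Filter.Tendsto ω (nhdsWithin 0 (Set.Ioi 0)) (nhds 0)) :
    ∀ x > (0:ℝ), ∀ h > (0:ℝ), η x / 2 ≤ h →
      omegaEta η ω (x + h) ≤ omegaEta η ω x + 2 * (h * ω (η x) / η x) := by
  intro x hx h hh hhe
  have hcpos : 0 < η x := hη_pos x hx
  set N : ℕ := ⌈h / η x⌉₊ with hN
  have htpos : 0 < h / η x := div_pos hh hcpos
  have hNpos : 0 < N := Nat.ceil_pos.mpr htpos
  have hNR : (0:ℝ) < N := by exact_mod_cast hNpos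
  set d : ℝ := h / N with hd
  have hdpos : 0 < d := div_pos hh hNR
  have hdle : d ≤ η x := by
    rw [hd, div_le_iff₀ hNR]
    have h1 : h / η x ≤ (N : ℝ) := Nat.le_ceil (h / η x)
    rw [div_le_iff₀ hcpos] at h1
    linarith
  have hNd : (N : ℝ) * d = h := by
    rw [hd]; field_simp
  have hNle : (N : ℝ) ≤ 2 * h / η x := by
    rcases le_or_gt 1 (h / η x) with h1 | h1
    · have h2 : (N : ℝ) < h / η x + 1 := Nat.ceil_lt_add_one htpos.le
      rw [one_le_div hcpos] at h1
      rw [le_div_iff₀ hcpos]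
      have h3 : (N : ℝ) * η x < (h / η x + 1) * η x :=
        mul_lt_mul_of_pos_right h2 hcpos
      have h4 : (h / η x + 1) * η x = h + η x := by field_simp
      nlinarith
    · have h2 : N ≤ 1 := Nat.ceil_le.mpr (by simpa using h1.le)
      have h3 : (N : ℝ) ≤ 1 := by exact_mod_cast h2
      have h4 : (1:ℝ) / 2 ≤ h / η x := by
        rw [le_div_iff₀ hcpos]; linarith
      calc (N : ℝ) ≤ 1 := h3
        _ ≤ 2 * (h / η x) := by linarith
        _ = 2 * h / η x := by ring
  have hωc : 0 ≤ ω (η x) := hω_nonneg _ hcpos.le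
  set C : ℝ := 2 * (h * ω (η x) / η x) with hC
  have hNωC : (N : ℝ) * ω (η x) ≤ C := by
    have := mul_le_mul_of_nonneg_right hNle hωc
    rw [hC]
    calc (N : ℝ) * ω (η x) ≤ 2 * h / η x * ω (η x) := this
      _ = 2 * (h * ω (η x) / η x) := by ring
  -- key step: from any partition of [0,x] build one of [0,x+h]
  have key : ∀ s ∈ partSums η ω x, sInf (partSums η ω (x + h)) ≤ s + C := by
    rintro s ⟨n, xs, hn, h0, hnval, hmono, rfl⟩
    set y : ℕ → ℝ := fun j => if j < n then xs j else x + ((j - n : ℕ) : ℝ) * d with hy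
    have hyle : ∀ j ≤ n, y j = xs j := by
      intro j hj
      rcases lt_or_eq_of_le hj with hj' | hj'
      · simp [hy, hj']
      · subst hj'; simp [hy, hnval]
    have hyge : ∀ k : ℕ, y (n + k) = x + (k : ℝ) * d := by
      intro k
      simp [hy]
    have hmono' : ∀ j < n + N, y j < y (j + 1) := by
      intro j hj
      rcases lt_or_ge j n with hjn | hjn
      · rw [hyle j hjn.le, hyle (j + 1) (by omega)]
        exact hmono j hjn
      · obtain ⟨k, rfl⟩ := Nat.exists_eq_add_of_le hjn
        have e1 := hyge k
        have e2 : y (n + k + 1) = x + ((k : ℝ) + 1) * d := by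
          have := hyge (k + 1)
          rw [← Nat.add_assoc] at this
          rw [this]; push_cast; ring
        rw [e1, e2]; nlinarith
    have hmem : (∑ j ∈ Finset.range (n + N),
        max 1 ((y (j + 1) - y j) / η (y (j + 1))) * ω (y (j + 1) - y j))
        ∈ partSums η ω (x + h) := by
      refine ⟨n + N, y, by omega, ?_, ?_, hmono', rfl⟩
      · rw [hyle 0 (by omega)]; exact h0
      · rw [hyge N, hNd]
    have hsum : ∑ j ∈ Finset.range (n + N),
        max 1 ((y (j + 1) - y j) / η (y (j + 1))) * ω (y (j + 1) - y j)
        ≤ (∑ j ∈ Finset.range n,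
          max 1 ((xs (j + 1) - xs j) / η (xs (j + 1))) * ω (xs (j + 1) - xs j)) + C := by
      rw [Finset.sum_range_add]
      have e1 : ∀ j ∈ Finset.range n,
          max 1 ((y (j + 1) - y j) / η (y (j + 1))) * ω (y (j + 1) - y j)
          = max 1 ((xs (j + 1) - xs j) / η (xs (j + 1))) * ω (xs (j + 1) - xs j) := by
        intro j hj
        rw [Finset.mem_range] at hj
        rw [hyle j hj.le, hyle (j + 1) (by omega)]
      rw [Finset.sum_congr rfl e1]
      have e2 : ∀ k ∈ Finset.range N,
          max 1 ((y (n + k + 1) - y (n + k)) / η (y (n + k + 1))) * ω (y (n + k + 1) - y (n + k))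
          ≤ ω (η x) := by
        intro k hk
        have ha : y (n + k) = x + (k : ℝ) * d := hyge k
        have hb : y (n + k + 1) = x + ((k : ℝ) + 1) * d := by
          have := hyge (k + 1)
          rw [← Nat.add_assoc] at this
          rw [this]; push_cast; ring
        have hdiff : y (n + k + 1) - y (n + k) = d := by rw [ha, hb]; ring
        have hbx : x < y (n + k + 1) := by rw [hb]; nlinarith
        have hbpos : (0:ℝ) < y (n + k + 1) := lt_trans hx hbx
        have hηb : η x ≤ η (y (n + k + 1)) :=
          hη_mono (Set.mem_Ioi.mpr hx) (Set.mem_Ioi.mpr hbpos) hbx.le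
        have hηbpos : 0 < η (y (n + k + 1)) := lt_of_lt_of_le hcpos hηb
        have hmax : max 1 ((y (n + k + 1) - y (n + k)) / η (y (n + k + 1))) = 1 := by
          rw [max_eq_left]
          rw [hdiff, div_le_one hηbpos]
          linarith
        rw [hmax, one_mul, hdiff]
        exact hω_mono (Set.mem_Ici.mpr hdpos.le) (Set.mem_Ici.mpr hcpos.le) hdle
      have e3 : ∑ k ∈ Finset.range N,
          max 1 ((y (n + k + 1) - y (n + k)) / η (y (n + k + 1))) * ω (y (n + k + 1) - y (n + k))
          ≤ (N : ℝ) * ω (η x) := by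
        calc _ ≤ ∑ _k ∈ Finset.range N, ω (η x) := Finset.sum_le_sum e2
          _ = (N : ℝ) * ω (η x) := by rw [Finset.sum_const, Finset.card_range]; simp
      have := le_trans e3 hNωC
      linarith
    calc sInf (partSums η ω (x + h)) ≤ _ :=
          csInf_le (partSums_bddBelow η ω hω_nonneg _) hmem
      _ ≤ _ := hsum
  rw [omegaEta_eq_sInf, omegaEta_eq_sInf]
  have hne : (partSums η ω x).Nonempty := partSums_nonempty η ω x hx
  have : sInf (partSums η ω (x + h)) - C ≤ sInf (partSums η ω x) := by
    apply le_csInf hne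
    intro s hs
    have := key s hs
    linarith
  linarith
end

section
/- Let η:(0,∞)→(0,∞) be concave and ω a concave modulus. Let ψ be the upper concave envelope of ω_η on [0,∞), i.e. ψ(x) = sup{λω_η(x₁)+(1−λ)ω_η(x₂) : x₁,x₂≥0, λ∈[0,1], x=λx₁+(1−λ)x₂}. Then ψ is a concave modulus, ω_η ≤ ψ ≤ 2ω_η, and ψ(t+η(t)) ≤ ψ(t)+2ω(η(t)) for every t>0 with η(t) ≤ t. -/
set_option maxHeartbeats 1000000

namespace OE

def PS (η ω : ℝ → ℝ) (h : ℝ) : Set ℝ :=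
  {s : ℝ | ∃ (n : ℕ) (x : ℕ → ℝ), 0 < n ∧ x 0 = 0 ∧ x n = h ∧
    (∀ j < n, x j < x (j + 1)) ∧
    s = ∑ j ∈ Finset.range n,
      max 1 ((x (j + 1) - x j) / η (x (j + 1))) * ω (x (j + 1) - x j)}

lemma omegaEta_eq (η ω : ℝ → ℝ) (h : ℝ) : omegaEta η ω h = sInf (PS η ω h) := rfl

variable {η ω : ℝ → ℝ}

section eta

variable (hη_pos : ∀ x > (0:ℝ), 0 < η x) (hη_conc : ConcaveOn ℝ (Set.Ioi 0) η)
include hη_pos hη_conc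

lemma eta_mono : ∀ a b : ℝ, 0 < a → a ≤ b → η a ≤ η b := by
  intro a b ha hab
  rcases eq_or_lt_of_le hab with rfl | hab
  · exact le_rfl
  by_contra hlt
  push_neg at hlt
  have hδpos : 0 < η a - η b := by linarith
  set δ : ℝ := η a - η b with hδ
  have hbpos : 0 < η b := hη_pos b (ha.trans hab)
  set c : ℝ := b + (b - a) * η b / δ + (b - a) with hc
  have hcb : b < c := by
    have : 0 < (b - a) * η b / δ := div_pos (by nlinarith) hδpos
    rw [hc]; linarith
  set l : ℝ := (c - b) / (c - a) with hl
  have hca : 0 < c - a := by linarith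
  have hl0 : 0 ≤ l := div_nonneg (by linarith) (by linarith)
  have hl1 : l ≤ 1 := by
    rw [hl, div_le_one hca]; linarith
  have hlca : l * (c - a) = c - b := by
    rw [hl]; field_simp
  have hcomb : l * a + (1 - l) * c = b := by
    rw [hl]; field_simp; ring
  have key := hη_conc.2 (Set.mem_Ioi.2 ha) (Set.mem_Ioi.2 (ha.trans (hab.trans hcb)))
      hl0 (by linarith : (0:ℝ) ≤ 1 - l) (by ring)
  rw [smul_eq_mul, smul_eq_mul, smul_eq_mul, smul_eq_mul, hcomb] at key
  have hcpos : 0 < η c := hη_pos c (by linarith)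
  have h2 := mul_le_mul_of_nonneg_left key hca.le
  rw [mul_add] at h2
  have e1 : (c - a) * (l * η a) = (c - b) * η a := by
    rw [show (c - a) * (l * η a) = l * (c - a) * η a by ring, hlca]
  have e2 : (c - a) * ((1 - l) * η c) = (b - a) * η c := by
    rw [show (c - a) * ((1 - l) * η c) = ((c - a) - l * (c - a)) * η c by ring, hlca]
    ring
  rw [e1, e2] at h2
  -- h2 : (c - b) * η a + (b - a) * η c ≤ (c - a) * η b
  have hcb' : (c - b) * δ = (b - a) * η b + (b - a) * δ := by
    have hcc : c - b = (b - a) * η b / δ + (b - a) := by rw [hc]; ring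
    rw [hcc]; field_simp
  have e3 : (c - b) * η a = (c - b) * η b + (c - b) * δ := by rw [hδ]; ring
  have e4 : (c - a) * η b = (c - b) * η b + (b - a) * η b := by ring
  nlinarith [mul_pos (sub_pos.2 hab) hcpos]

lemma eta_scale : ∀ x > (0:ℝ), ∀ c : ℝ, 0 < c → c ≤ 1 → c * η x ≤ η (c * x) := by
  intro x hx c hc0 hc1
  rcases eq_or_lt_of_le hc1 with rfl | hc1
  · simp
  have hxpos : 0 < η x := hη_pos x hx
  by_contra hlt
  push_neg at hlt
  have hgpos : 0 < c * η x - η (c * x) := by linarith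
  set g : ℝ := c * η x - η (c * x) with hg
  set ε : ℝ := min (c * x / 2) (g * x / (2 * η x)) with hε
  have hε0 : 0 < ε := by
    rw [hε]; apply lt_min
    · positivity
    · positivity
  have hεcx : ε < c * x := by
    have h1 : ε ≤ c * x / 2 := min_le_left _ _
    nlinarith
  have hεx : ε < x := by nlinarith
  set l : ℝ := (c * x - ε) / (x - ε) with hl
  have hxε : 0 < x - ε := by linarith
  have hl0 : 0 ≤ l := div_nonneg (by linarith) (by linarith)
  have hl1 : l ≤ 1 := by
    rw [hl, div_le_one hxε]; nlinarith
  have hcomb : l * x + (1 - l) * ε = c * x := by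
    rw [hl]; field_simp; ring
  have hconc := hη_conc.2 (Set.mem_Ioi.2 hx) (Set.mem_Ioi.2 hε0) hl0
      (by linarith : (0:ℝ) ≤ 1 - l) (by ring)
  rw [smul_eq_mul, smul_eq_mul, smul_eq_mul, smul_eq_mul, hcomb] at hconc
  -- hconc : l * η x + (1 - l) * η ε ≤ η (c * x)
  have hηε : 0 < η ε := hη_pos ε hε0
  have hlge : c - ε / x ≤ l := by
    rw [hl, le_div_iff₀ hxε]
    have e : (c - ε / x) * (x - ε) = c * x - ε - (c * ε - ε * ε / x) := by
      field_simp
    rw [e]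
    have h3 : ε / x ≤ c := by
      rw [div_le_iff₀ hx]; nlinarith
    have h4 : 0 ≤ c * ε - ε * ε / x := by
      have h5 : ε * ε / x = ε * (ε / x) := by ring
      nlinarith
    linarith
  have hstep : (c - ε / x) * η x ≤ η (c * x) :=
    calc (c - ε / x) * η x ≤ l * η x := by nlinarith
    _ ≤ l * η x + (1 - l) * η ε := by nlinarith
    _ ≤ η (c * x) := hconc
  have hεsmall : ε * η x / x ≤ g / 2 := by
    have hεle : ε ≤ g * x / (2 * η x) := min_le_right _ _
    rw [div_le_div_iff₀ hx (by norm_num : (0:ℝ) < 2)]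
    calc ε * η x * 2 ≤ (g * x / (2 * η x)) * η x * 2 := by nlinarith
    _ = g * x := by field_simp
  have e : (c - ε / x) * η x = c * η x - ε * η x / x := by ring
  nlinarith [hstep, hεsmall]

end eta

section omega

variable (hω_nonneg : ∀ x ≥ (0:ℝ), 0 ≤ ω x) (hω_conc : ConcaveOn ℝ (Set.Ici 0) ω)
include hω_nonneg hω_conc

lemma omega_scale : ∀ x ≥ (0:ℝ), ∀ c : ℝ, 0 ≤ c → c ≤ 1 → c * ω x ≤ ω (c * x) := by
  intro x hx c hc0 hc1
  have key := hω_conc.2 (Set.mem_Ici.2 hx) (Set.mem_Ici.2 (le_refl (0:ℝ))) hc0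
      (by linarith : (0:ℝ) ≤ 1 - c) (by ring)
  rw [smul_eq_mul, smul_eq_mul, smul_eq_mul, smul_eq_mul] at key
  simp only [mul_zero, add_zero] at key
  have h0 : 0 ≤ ω 0 := hω_nonneg 0 le_rfl
  nlinarith

end omega

section partitions

variable (hη_pos : ∀ x > (0:ℝ), 0 < η x) (hη_conc : ConcaveOn ℝ (Set.Ioi 0) η)
variable (hω_nonneg : ∀ x ≥ (0:ℝ), 0 ≤ ω x) (hω_mono : MonotoneOn ω (Set.Ici 0))
variable (hω_conc : ConcaveOn ℝ (Set.Ici 0) ω)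

lemma part_nonneg {n : ℕ} {x : ℕ → ℝ} (h0 : x 0 = 0)
    (hinc : ∀ j < n, x j < x (j + 1)) : ∀ j ≤ n, 0 ≤ x j := by
  intro j hj
  induction j with
  | zero => simp [h0]
  | succ k ih =>
    have h1 := hinc k (by omega)
    have h2 := ih (by omega)
    linarith

lemma part_pos {n : ℕ} {x : ℕ → ℝ} (h0 : x 0 = 0)
    (hinc : ∀ j < n, x j < x (j + 1)) : ∀ j < n, 0 < x (j + 1) := by
  intro j hj
  have h1 := part_nonneg h0 hinc j (by omega)
  have h2 := hinc j hj
  linarith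

include hω_nonneg in
lemma term_nonneg {n : ℕ} {x : ℕ → ℝ} (hinc : ∀ j < n, x j < x (j + 1)) :
    ∀ j < n, 0 ≤ max 1 ((x (j + 1) - x j) / η (x (j + 1))) * ω (x (j + 1) - x j) := by
  intro j hj
  have hΔ := hinc j hj
  exact mul_nonneg (le_trans zero_le_one (le_max_left _ _)) (hω_nonneg _ (by linarith))

include hω_nonneg in
lemma PS_nonneg {h : ℝ} : ∀ s ∈ PS η ω h, 0 ≤ s := by
  rintro s ⟨n, x, hn, h0, hxn, hinc, rfl⟩
  exact Finset.sum_nonneg fun j hj =>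
    term_nonneg hω_nonneg hinc j (Finset.mem_range.mp hj)

include hω_nonneg in
lemma omegaEta_nonneg (h : ℝ) : 0 ≤ omegaEta η ω h := by
  rw [omegaEta_eq]
  exact Real.sInf_nonneg (PS_nonneg hω_nonneg)

include hω_nonneg in
lemma PS_bddBelow (h : ℝ) : BddBelow (PS η ω h) :=
  ⟨0, fun s hs => PS_nonneg hω_nonneg s hs⟩

lemma trivial_mem {h : ℝ} (hh : 0 < h) :
    max 1 (h / η h) * ω h ∈ PS η ω h := by
  refine ⟨1, fun j => if j = 0 then 0 else h, one_pos, by simp, by simp, ?_, ?_⟩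
  · intro j hj
    interval_cases j
    simpa using hh
  · simp

lemma PS_nonempty {h : ℝ} (hh : 0 < h) : (PS η ω h).Nonempty :=
  ⟨_, trivial_mem hh⟩

include hω_nonneg in
lemma omegaEta_le_trivial {h : ℝ} (hh : 0 < h) :
    omegaEta η ω h ≤ max 1 (h / η h) * ω h := by
  rw [omegaEta_eq]
  exact csInf_le (PS_bddBelow hω_nonneg h) (trivial_mem hh)

lemma omegaEta_zero : omegaEta η ω 0 = 0 := by
  rw [omegaEta_eq]
  convert Real.sInf_empty
  rw [Set.eq_empty_iff_forall_notMem]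
  rintro s ⟨n, x, hn, h0, hxn, hinc, rfl⟩
  have := part_pos h0 hinc (n - 1) (by omega)
  rw [show n - 1 + 1 = n by omega, hxn] at this
  exact lt_irrefl 0 this

include hη_pos hη_conc hω_nonneg hω_mono in
lemma omegaEta_mono : ∀ a b : ℝ, 0 ≤ a → a ≤ b → omegaEta η ω a ≤ omegaEta η ω b := by
  intro a b ha0 hab
  rcases eq_or_lt_of_le ha0 with rfl | ha
  · rw [omegaEta_zero]; exact omegaEta_nonneg hω_nonneg b
  rcases eq_or_lt_of_le hab with rfl | hab
  · exact le_rfl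
  have hb : 0 < b := ha.trans hab
  rw [omegaEta_eq η ω b]
  refine le_csInf (PS_nonempty hb) ?_
  rintro s ⟨n, x, hn, h0, hxn, hinc, rfl⟩
  set c : ℝ := a / b with hcdef
  have hc0 : 0 < c := div_pos ha hb
  have hc1 : c < 1 := (div_lt_one hb).2 hab
  have hle : omegaEta η ω a ≤ ∑ j ∈ Finset.range n,
      max 1 ((c * x (j + 1) - c * x j) / η (c * x (j + 1))) * ω (c * x (j + 1) - c * x j) := by
    rw [omegaEta_eq]
    refine csInf_le (PS_bddBelow hω_nonneg a) ⟨n, fun j => c * x j, hn, by simp [h0], ?_, ?_, rfl⟩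
    · show c * x n = a
      rw [hxn, hcdef]; field_simp
    · intro j hj
      exact mul_lt_mul_of_pos_left (hinc j hj) hc0
  refine hle.trans (Finset.sum_le_sum ?_)
  intro j hj
  rw [Finset.mem_range] at hj
  have hX : 0 < x (j + 1) := part_pos h0 hinc j hj
  have hΔ : 0 < x (j + 1) - x j := by linarith [hinc j hj]
  have hηX : 0 < η (x (j + 1)) := hη_pos _ hX
  have hηcX : 0 < η (c * x (j + 1)) := hη_pos _ (by positivity)
  have hscale : c * η (x (j + 1)) ≤ η (c * x (j + 1)) :=
    eta_scale hη_pos hη_conc _ hX c hc0 hc1.le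
  have hd1 : (c * x (j + 1) - c * x j) / η (c * x (j + 1))
      ≤ (c * x (j + 1) - c * x j) / (c * η (x (j + 1))) := by
    apply div_le_div_of_nonneg_left (by nlinarith) (by positivity) hscale
  have hd2 : (c * x (j + 1) - c * x j) / (c * η (x (j + 1)))
      = (x (j + 1) - x j) / η (x (j + 1)) := by
    rw [show c * x (j + 1) - c * x j = c * (x (j + 1) - x j) by ring,
      mul_div_mul_left _ _ (ne_of_gt hc0)]
  have hmax : max 1 ((c * x (j + 1) - c * x j) / η (c * x (j + 1)))
      ≤ max 1 ((x (j + 1) - x j) / η (x (j + 1))) :=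
    max_le_max le_rfl (by rw [← hd2]; exact hd1)
  have hωle : ω (c * x (j + 1) - c * x j) ≤ ω (x (j + 1) - x j) := by
    apply hω_mono (Set.mem_Ici.2 (by nlinarith)) (Set.mem_Ici.2 hΔ.le)
    nlinarith
  exact mul_le_mul hmax hωle (hω_nonneg _ (by nlinarith))
    (le_trans zero_le_one (le_max_left _ _))

end partitions

section subadd

variable (hη_pos : ∀ x > (0:ℝ), 0 < η x) (hη_conc : ConcaveOn ℝ (Set.Ioi 0) η)
variable (hω_nonneg : ∀ x ≥ (0:ℝ), 0 ≤ ω x) (hω_mono : MonotoneOn ω (Set.Ici 0))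

include hη_pos hη_conc hω_nonneg in
lemma concat {a b : ℝ} (ha : 0 < a) (hb : 0 < b) :
    ∀ s ∈ PS η ω a, ∀ u ∈ PS η ω b, omegaEta η ω (a + b) ≤ s + u := by
  rintro s ⟨n, x, hn, h0, hxn, hinc, rfl⟩ u ⟨m, y, hm, hy0, hym, hyinc, rfl⟩
  set z : ℕ → ℝ := fun j => if j ≤ n then x j else a + y (j - n) with hzdef
  have hz : ∀ k : ℕ, z (n + k) = a + y k := by
    intro k
    cases k with
    | zero => simp [hzdef, hxn, hy0]
    | succ k =>
      have h1 : ¬ (n + (k + 1) ≤ n) := by omega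
      have h2 : n + (k + 1) - n = k + 1 := by omega
      simp only [hzdef, h1, if_false, h2]
  have hz1 : ∀ j ≤ n, z j = x j := by
    intro j hj; simp [hzdef, hj]
  have hsum : ∑ j ∈ Finset.range (n + m),
      max 1 ((z (j + 1) - z j) / η (z (j + 1))) * ω (z (j + 1) - z j)
      ≤ (∑ j ∈ Finset.range n,
          max 1 ((x (j + 1) - x j) / η (x (j + 1))) * ω (x (j + 1) - x j))
        + ∑ j ∈ Finset.range m,
          max 1 ((y (j + 1) - y j) / η (y (j + 1))) * ω (y (j + 1) - y j) := by
    rw [Finset.sum_range_add]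
    apply add_le_add
    · apply le_of_eq
      apply Finset.sum_congr rfl
      intro j hj
      rw [Finset.mem_range] at hj
      rw [hz1 j (by omega), hz1 (j + 1) (by omega)]
    · apply Finset.sum_le_sum
      intro k hk
      rw [Finset.mem_range] at hk
      have e1 : z (n + k + 1) = a + y (k + 1) := by
        rw [show n + k + 1 = n + (k + 1) by ring, hz]
      rw [e1, hz k]
      have hY : 0 < y (k + 1) := part_pos hy0 hyinc k hk
      have hΔ : 0 < y (k + 1) - y k := by linarith [hyinc k hk]
      have hηY : 0 < η (y (k + 1)) := hη_pos _ hY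
      have hηaY : 0 < η (a + y (k + 1)) := hη_pos _ (by linarith)
      have hmono : η (y (k + 1)) ≤ η (a + y (k + 1)) :=
        eta_mono hη_pos hη_conc _ _ hY (by linarith)
      have e2 : a + y (k + 1) - (a + y k) = y (k + 1) - y k := by ring
      rw [e2]
      apply mul_le_mul _ le_rfl (hω_nonneg _ hΔ.le) (le_trans zero_le_one (le_max_left _ _))
      exact max_le_max le_rfl (div_le_div_of_nonneg_left hΔ.le hηY hmono)
  refine le_trans ?_ hsum
  rw [omegaEta_eq]
  refine csInf_le (PS_bddBelow hω_nonneg _) ⟨n + m, z, by omega, ?_, ?_, ?_, rfl⟩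
  · rw [hz1 0 (by omega), h0]
  · rw [hz m, hym]
  · intro j hj
    by_cases hjn : j < n
    · rw [hz1 j (by omega), hz1 (j + 1) (by omega)]
      exact hinc j hjn
    · obtain ⟨k, rfl⟩ : ∃ k, j = n + k := ⟨j - n, by omega⟩
      rw [hz k, show n + k + 1 = n + (k + 1) by ring, hz]
      have := hyinc k (by omega)
      linarith

include hη_pos hη_conc hω_nonneg in
lemma omegaEta_subadd {a b : ℝ} (ha : 0 < a) (hb : 0 < b) :
    omegaEta η ω (a + b) ≤ omegaEta η ω a + omegaEta η ω b := by
  have h1 : ∀ s ∈ PS η ω a, omegaEta η ω (a + b) - s ≤ omegaEta η ω b := by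
    intro s hs
    rw [omegaEta_eq η ω b]
    refine le_csInf (PS_nonempty hb) fun u hu => ?_
    linarith [concat hη_pos hη_conc hω_nonneg ha hb s hs u hu]
  have h2 : omegaEta η ω (a + b) - omegaEta η ω b ≤ omegaEta η ω a := by
    rw [omegaEta_eq η ω a]
    refine le_csInf (PS_nonempty ha) fun s hs => ?_
    linarith [h1 s hs]
  linarith

include hη_pos hη_conc hω_nonneg in
lemma omegaEta_nsmul : ∀ k : ℕ, ∀ x : ℝ, 0 < x →
    omegaEta η ω ((k + 1) * x) ≤ (k + 1) * omegaEta η ω x := by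
  intro k
  induction k with
  | zero => intro x hx; simp
  | succ k ih =>
    intro x hx
    have e : ((k : ℝ) + 1 + 1) * x = (k + 1) * x + x := by ring
    push_cast
    rw [e]
    have h1 := omegaEta_subadd hη_pos hη_conc hω_nonneg
      (show (0:ℝ) < ((k : ℝ) + 1) * x by positivity) hx
    have h2 := ih x hx
    push_cast at h2
    linarith

include hη_pos hω_nonneg in
lemma omegaEta_step {y δ : ℝ} (hy : 0 ≤ y) (hδ : 0 < δ) (hηδ : δ ≤ η (y + δ)) :
    omegaEta η ω (y + δ) ≤ omegaEta η ω y + ω δ := by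
  have hηpos : 0 < η (y + δ) := hη_pos _ (by linarith)
  have hmax : max 1 (δ / η (y + δ)) = 1 := by
    apply max_eq_left
    rw [div_le_one hηpos]; exact hηδ
  rcases eq_or_lt_of_le hy with rfl | hy
  · simp only [zero_add] at hmax hηδ hηpos ⊢
    rw [omegaEta_zero, zero_add]
    calc omegaEta η ω δ ≤ max 1 (δ / η δ) * ω δ := omegaEta_le_trivial hω_nonneg hδ
    _ = 1 * ω δ := by rw [hmax]
    _ = ω δ := by ring
  have key : ∀ s ∈ PS η ω y, omegaEta η ω (y + δ) ≤ s + ω δ := by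
    rintro s ⟨n, x, hn, h0, hxn, hinc, rfl⟩
    set z : ℕ → ℝ := fun j => if j ≤ n then x j else y + δ with hzdef
    have hz1 : ∀ j ≤ n, z j = x j := by intro j hj; simp [hzdef, hj]
    have hz2 : z (n + 1) = y + δ := by simp [hzdef]
    rw [omegaEta_eq]
    refine le_trans (csInf_le (PS_bddBelow hω_nonneg _)
      ⟨n + 1, z, by omega, ?_, hz2, ?_, rfl⟩) ?_
    · rw [hz1 0 (by omega), h0]
    · intro j hj
      by_cases hjn : j < n
      · rw [hz1 j (by omega), hz1 (j + 1) (by omega)]; exact hinc j hjn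
      · have hjeq : j = n := by omega
        subst hjeq
        rw [hz1 j le_rfl, hz2, hxn]
        linarith
    · rw [Finset.sum_range_succ]
      apply add_le_add
      · apply le_of_eq
        apply Finset.sum_congr rfl
        intro j hj
        rw [Finset.mem_range] at hj
        rw [hz1 j (by omega), hz1 (j + 1) (by omega)]
      · rw [hz2, hz1 n le_rfl, hxn]
        rw [show y + δ - y = δ by ring, hmax, one_mul]
  have h2 : omegaEta η ω (y + δ) - ω δ ≤ omegaEta η ω y := by
    rw [omegaEta_eq η ω y]
    refine le_csInf (PS_nonempty hy) fun s hs => ?_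
    linarith [key s hs]
  linarith

end subadd

section steps

variable (hη_pos : ∀ x > (0:ℝ), 0 < η x) (hη_conc : ConcaveOn ℝ (Set.Ioi 0) η)
variable (hω_nonneg : ∀ x ≥ (0:ℝ), 0 ≤ ω x) (hω_mono : MonotoneOn ω (Set.Ici 0))

include hη_pos hη_conc hω_nonneg hω_mono in
lemma omegaEta_steps {t : ℝ} (ht : 0 < t) :
    ∀ n : ℕ, ∀ y d : ℝ, t ≤ y → 0 ≤ d → d ≤ (n + 1) * η t →
      omegaEta η ω (y + d) ≤ omegaEta η ω y + (n + 1) * ω (η t) := by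
  have hηt : 0 < η t := hη_pos t ht
  have hωηt : 0 ≤ ω (η t) := hω_nonneg _ hηt.le
  intro n
  induction n with
  | zero =>
    intro y d hty hd0 hdle
    push_cast at hdle ⊢
    rcases eq_or_lt_of_le hd0 with rfl | hd
    · simp; linarith
    have hstep : omegaEta η ω (y + d) ≤ omegaEta η ω y + ω d := by
      apply omegaEta_step hη_pos hω_nonneg (by linarith) hd
      calc d ≤ η t := by linarith
      _ ≤ η (y + d) := eta_mono hη_pos hη_conc t (y + d) ht (by linarith)
    have : ω d ≤ ω (η t) := hω_mono (Set.mem_Ici.2 hd.le) (Set.mem_Ici.2 hηt.le)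
      (by linarith)
    linarith
  | succ n ih =>
    intro y d hty hd0 hdle
    by_cases hcase : d ≤ (n + 1) * η t
    · have := ih y d hty hd0 hcase
      push_cast at this ⊢
      linarith
    push_neg at hcase
    have hd1 : η t ≤ d := by
      nlinarith [hηt]
    have e : y + d = (y + (d - η t)) + η t := by ring
    rw [e]
    have hy' : t ≤ y + (d - η t) := by linarith
    have hstep : omegaEta η ω ((y + (d - η t)) + η t)
        ≤ omegaEta η ω (y + (d - η t)) + ω (η t) := by
      apply omegaEta_step hη_pos hω_nonneg (by linarith) hηt
      exact eta_mono hη_pos hη_conc t _ ht (by linarith)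
    have hih := ih y (d - η t) hty (by linarith) (by push_cast at hdle ⊢; linarith)
    push_cast at hih ⊢
    linarith

end steps

section psiset

def TS (η ω : ℝ → ℝ) (x : ℝ) : Set ℝ :=
  {y : ℝ | ∃ x₁ ≥ (0:ℝ), ∃ x₂ ≥ (0:ℝ),
      ∃ l ∈ Set.Icc (0:ℝ) 1, x = l * x₁ + (1 - l) * x₂ ∧
        y = l * omegaEta η ω x₁ + (1 - l) * omegaEta η ω x₂}

variable (hη_pos : ∀ x > (0:ℝ), 0 < η x) (hη_conc : ConcaveOn ℝ (Set.Ioi 0) η)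
variable (hω_nonneg : ∀ x ≥ (0:ℝ), 0 ≤ ω x) (hω_mono : MonotoneOn ω (Set.Ici 0))

include hη_pos hη_conc hω_nonneg hω_mono in
lemma combo_le {x x₁ x₂ l : ℝ} (hx : 0 < x) (h1 : 0 ≤ x₁) (hle : x₁ ≤ x)
    (hx2 : x ≤ x₂) (hl : l ∈ Set.Icc (0:ℝ) 1) (hcomb : x = l * x₁ + (1 - l) * x₂) :
    l * omegaEta η ω x₁ + (1 - l) * omegaEta η ω x₂ ≤ 2 * omegaEta η ω x := by
  obtain ⟨hl0, hl1⟩ := hl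
  have hfx : 0 ≤ omegaEta η ω x := omegaEta_nonneg hω_nonneg x
  have hf1 : omegaEta η ω x₁ ≤ omegaEta η ω x :=
    omegaEta_mono hη_pos hη_conc hω_nonneg hω_mono x₁ x h1 hle
  rcases eq_or_lt_of_le hl1 with rfl | hl1
  · simp only [sub_self, zero_mul, add_zero, one_mul]
    linarith
  have hx2pos : 0 < x₂ := hx.trans_le hx2
  set N : ℕ := ⌈x₂ / x⌉₊ with hN
  have hN1 : 1 ≤ N := by
    rw [hN]
    exact Nat.one_le_iff_ne_zero.2 (by
      have : 0 < x₂ / x := div_pos hx2pos hx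
      simpa [Nat.ceil_eq_zero, not_le] using (Nat.ceil_pos.2 this).ne')
  obtain ⟨k, hk⟩ : ∃ k : ℕ, N = k + 1 := ⟨N - 1, by omega⟩
  have hx2N : x₂ ≤ (N : ℝ) * x := by
    have := Nat.le_ceil (x₂ / x)
    rw [← hN] at this
    calc x₂ = (x₂ / x) * x := by field_simp
    _ ≤ (N : ℝ) * x := by nlinarith
  have hf2 : omegaEta η ω x₂ ≤ (N : ℝ) * omegaEta η ω x := by
    calc omegaEta η ω x₂ ≤ omegaEta η ω ((N : ℝ) * x) :=
          omegaEta_mono hη_pos hη_conc hω_nonneg hω_mono _ _ hx2pos.le hx2N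
    _ ≤ (N : ℝ) * omegaEta η ω x := by
        have := omegaEta_nsmul hη_pos hη_conc hω_nonneg k x hx
        rw [hk]; push_cast at this ⊢; linarith
  have hNlt : (N : ℝ) < x₂ / x + 1 := by
    rw [hN]; exact Nat.ceil_lt_add_one (by positivity)
  have hxx : (1 - l) * x₂ ≤ x := by nlinarith
  have hNle : (1 - l) * (N : ℝ) ≤ 2 - l := by
    have h5 : (1 - l) * (N : ℝ) ≤ (1 - l) * (x₂ / x + 1) := by nlinarith
    have h6 : (1 - l) * (x₂ / x) ≤ 1 := by
      rw [mul_div_assoc']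
      rw [div_le_one hx]
      linarith
    nlinarith
  have hfx2' : (1 - l) * omegaEta η ω x₂ ≤ (2 - l) * omegaEta η ω x := by
    calc (1 - l) * omegaEta η ω x₂ ≤ (1 - l) * ((N : ℝ) * omegaEta η ω x) := by nlinarith
    _ = ((1 - l) * (N : ℝ)) * omegaEta η ω x := by ring
    _ ≤ (2 - l) * omegaEta η ω x := by nlinarith
  nlinarith [mul_le_mul_of_nonneg_left hf1 hl0]

include hη_pos hη_conc hω_nonneg hω_mono in
lemma TS_le {x : ℝ} (hx : 0 ≤ x) : ∀ yv ∈ TS η ω x, yv ≤ 2 * omegaEta η ω x := by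
  rintro yv ⟨x₁, h1, x₂, h2, l, hl, hcomb, rfl⟩
  rcases eq_or_lt_of_le hx with rfl | hx
  · have ht1 : l * x₁ = 0 := by nlinarith [hl.1, hl.2]
    have ht2 : (1 - l) * x₂ = 0 := by nlinarith [hl.1, hl.2]
    have hv1 : l * omegaEta η ω x₁ = 0 := by
      rcases mul_eq_zero.1 ht1 with h | h
      · rw [h, zero_mul]
      · rw [h] at h1 ⊢
        rcases eq_or_lt_of_le h1 with h' | h'
        · rw [← h', omegaEta_zero, mul_zero]
        · linarith
    have hv2 : (1 - l) * omegaEta η ω x₂ = 0 := by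
      rcases mul_eq_zero.1 ht2 with h | h
      · rw [h, zero_mul]
      · rw [h] at h2 ⊢
        rcases eq_or_lt_of_le h2 with h' | h'
        · rw [← h', omegaEta_zero, mul_zero]
        · linarith
    rw [hv1, hv2, omegaEta_zero]
    norm_num
  rcases le_total x₁ x₂ with hc | hc
  · have hxle : x₁ ≤ x ∧ x ≤ x₂ := by
      constructor <;> nlinarith [hl.1, hl.2]
    exact combo_le hη_pos hη_conc hω_nonneg hω_mono hx h1 hxle.1 hxle.2 hl hcomb
  · have hxle : x₂ ≤ x ∧ x ≤ x₁ := by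
      constructor <;> nlinarith [hl.1, hl.2]
    have := combo_le hη_pos hη_conc hω_nonneg hω_mono hx h2 hxle.1 hxle.2
      (l := 1 - l) ⟨by linarith [hl.2], by linarith [hl.1]⟩ (by rw [hcomb]; ring)
    linarith

lemma TS_self_mem {x : ℝ} (hx : 0 ≤ x) : omegaEta η ω x ∈ TS η ω x :=
  ⟨x, hx, x, hx, 0, ⟨le_rfl, zero_le_one⟩, by ring, by ring⟩

lemma TS_nonempty {x : ℝ} (hx : 0 ≤ x) : (TS η ω x).Nonempty :=
  ⟨_, TS_self_mem (η := η) (ω := ω) hx⟩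

include hη_pos hη_conc hω_nonneg hω_mono in
lemma TS_bddAbove {x : ℝ} (hx : 0 ≤ x) : BddAbove (TS η ω x) :=
  ⟨2 * omegaEta η ω x, fun yv hyv => TS_le hη_pos hη_conc hω_nonneg hω_mono hx yv hyv⟩

end psiset

section reduce

lemma reduce3sorted (w1 w2 w3 y1 y2 y3 a1 a2 a3 : ℝ)
    (ha1 : 0 ≤ a1) (ha2 : 0 ≤ a2) (ha3 : 0 ≤ a3)
    (h12 : w1 ≤ w2) (h23 : w2 ≤ w3) :
    ∃ u yu v yv μ ν : ℝ,
      ((u = w1 ∧ yu = y1) ∨ (u = w2 ∧ yu = y2) ∨ (u = w3 ∧ yu = y3)) ∧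
      ((v = w1 ∧ yv = y1) ∨ (v = w2 ∧ yv = y2) ∨ (v = w3 ∧ yv = y3)) ∧
      0 ≤ μ ∧ 0 ≤ ν ∧ μ + ν = a1 + a2 + a3 ∧
      μ * u + ν * v = a1 * w1 + a2 * w2 + a3 * w3 ∧
      a1 * y1 + a2 * y2 + a3 * y3 ≤ μ * yu + ν * yv := by
  rcases eq_or_lt_of_le (h12.trans h23) with h13 | h13
  · -- w1 = w2 = w3
    have hw2 : w2 = w1 := le_antisymm (h13 ▸ h23) h12
    have hw3 : w3 = w1 := h13.symm
    rcases le_total y1 y2 with hy | hy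
    · rcases le_total y2 y3 with hy' | hy'
      · refine ⟨w3, y3, w3, y3, a1 + a2 + a3, 0, Or.inr (Or.inr ⟨rfl, rfl⟩),
          Or.inr (Or.inr ⟨rfl, rfl⟩), by linarith, le_rfl, by ring,
          by rw [hw2, hw3]; ring, ?_⟩
        nlinarith [mul_le_mul_of_nonneg_left hy' ha2,
          mul_le_mul_of_nonneg_left (hy.trans hy') ha1]
      · refine ⟨w2, y2, w2, y2, a1 + a2 + a3, 0, Or.inr (Or.inl ⟨rfl, rfl⟩),
          Or.inr (Or.inl ⟨rfl, rfl⟩), by linarith, le_rfl, by ring,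
          by rw [hw2, hw3]; ring, ?_⟩
        nlinarith [mul_le_mul_of_nonneg_left hy ha1, mul_le_mul_of_nonneg_left hy' ha3]
    · rcases le_total y1 y3 with hy' | hy'
      · refine ⟨w3, y3, w3, y3, a1 + a2 + a3, 0, Or.inr (Or.inr ⟨rfl, rfl⟩),
          Or.inr (Or.inr ⟨rfl, rfl⟩), by linarith, le_rfl, by ring,
          by rw [hw2, hw3]; ring, ?_⟩
        nlinarith [mul_le_mul_of_nonneg_left hy' ha1,
          mul_le_mul_of_nonneg_left (hy.trans hy') ha2]
      · refine ⟨w1, y1, w1, y1, a1 + a2 + a3, 0, Or.inl ⟨rfl, rfl⟩,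
          Or.inl ⟨rfl, rfl⟩, by linarith, le_rfl, by ring,
          by rw [hw2, hw3]; ring, ?_⟩
        nlinarith [mul_le_mul_of_nonneg_left hy ha2, mul_le_mul_of_nonneg_left hy' ha3]
  -- w1 < w3
  have hw31 : 0 < w3 - w1 := by linarith
  obtain ⟨t, htdef⟩ : ∃ t : ℝ, t = (w2 - w1) / (w3 - w1) := ⟨_, rfl⟩
  have ht0 : 0 ≤ t := by rw [htdef]; apply div_nonneg <;> linarith
  have ht1 : t ≤ 1 := by rw [htdef, div_le_one hw31]; linarith
  have htw : t * (w3 - w1) = w2 - w1 := by rw [htdef]; field_simp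
  by_cases hch : y2 ≤ (1 - t) * y1 + t * y3
  · refine ⟨w1, y1, w3, y3, a1 + a2 * (1 - t), a3 + a2 * t, Or.inl ⟨rfl, rfl⟩,
      Or.inr (Or.inr ⟨rfl, rfl⟩),
      by nlinarith [mul_nonneg ha2 (by linarith : (0:ℝ) ≤ 1 - t)],
      by nlinarith [mul_nonneg ha2 ht0], by ring, ?_, ?_⟩
    · linear_combination a2 * htw
    · nlinarith [mul_le_mul_of_nonneg_left hch ha2]
  push_neg at hch
  have hch' : t * (y3 - y1) < y2 - y1 := by linarith [hch]
  have hkey : (w2 - w1) * (y3 - y1) < (w3 - w1) * (y2 - y1) := by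
    have e : t * (y3 - y1) * (w3 - w1) = (w2 - w1) * (y3 - y1) := by
      linear_combination (y3 - y1) * htw
    nlinarith [mul_lt_mul_of_pos_right hch' hw31]
  by_cases hc2 : a1 * w1 + a2 * w2 + a3 * w3 ≤ (a1 + a2 + a3) * w2
  · -- use pair (w1, w2)
    rcases eq_or_lt_of_le h12 with hw12 | hw12
    · -- w1 = w2
      have ht' : t = 0 := by rw [htdef, ← hw12]; simp
      rw [ht'] at hch
      have hy12 : y1 < y2 := by linarith
      have ha3' : a3 = 0 := by nlinarith
      have e0 : a3 * y3 = 0 := by rw [ha3']; ring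
      have e1 : a3 * y2 = 0 := by rw [ha3']; ring
      refine ⟨w2, y2, w2, y2, a1 + a2 + a3, 0, Or.inr (Or.inl ⟨rfl, rfl⟩),
        Or.inr (Or.inl ⟨rfl, rfl⟩), by linarith, le_rfl, by ring, ?_, ?_⟩
      · rw [← hw12]; linear_combination (w1 - w3) * ha3'
      · nlinarith [mul_le_mul_of_nonneg_left hy12.le ha1]
    · have hw21 : 0 < w2 - w1 := by linarith
      obtain ⟨ν, hνdef⟩ : ∃ ν : ℝ, ν = a2 + a3 * (w3 - w1) / (w2 - w1) := ⟨_, rfl⟩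
      have hν0 : 0 ≤ ν := by
        rw [hνdef]; positivity
      have hν2 : ν * (w2 - w1) = a2 * (w2 - w1) + a3 * (w3 - w1) := by
        rw [hνdef]; field_simp; try ring
      have hνs : ν ≤ a1 + a2 + a3 := by
        have h6 : a3 * (w3 - w1) / (w2 - w1) ≤ a1 + a3 := by
          rw [div_le_iff₀ hw21]; nlinarith [hc2, ha1, ha3, hw21.le]
        rw [hνdef]; linarith
      refine ⟨w1, y1, w2, y2, (a1 + a2 + a3) - ν, ν, Or.inl ⟨rfl, rfl⟩,
        Or.inr (Or.inl ⟨rfl, rfl⟩), by linarith, hν0, by ring, ?_, ?_⟩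
      · linear_combination hν2
      · have hν3 : ν * ((y2 - y1) * (w2 - w1))
            = (a2 * (w2 - w1) + a3 * (w3 - w1)) * (y2 - y1) := by
          linear_combination (y2 - y1) * hν2
        nlinarith [hν3, mul_le_mul_of_nonneg_left hkey.le ha3, hw21]
  · push_neg at hc2
    rcases eq_or_lt_of_le h23 with hw23 | hw23
    · exfalso; rw [← hw23] at hc2; nlinarith
    have hw32 : 0 < w3 - w2 := by linarith
    obtain ⟨μ, hμdef⟩ : ∃ μ : ℝ, μ = a2 + a1 * (w3 - w1) / (w3 - w2) := ⟨_, rfl⟩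
    have hμ0 : 0 ≤ μ := by rw [hμdef]; positivity
    have hμ2 : μ * (w3 - w2) = a2 * (w3 - w2) + a1 * (w3 - w1) := by
      rw [hμdef]; field_simp; try ring
    have hμs : μ ≤ a1 + a2 + a3 := by
      have h6 : a1 * (w3 - w1) / (w3 - w2) ≤ a1 + a3 := by
        rw [div_le_iff₀ hw32]; linarith [hc2]
      rw [hμdef]; linarith
    refine ⟨w2, y2, w3, y3, μ, (a1 + a2 + a3) - μ, Or.inr (Or.inl ⟨rfl, rfl⟩),
      Or.inr (Or.inr ⟨rfl, rfl⟩), hμ0, by linarith, by ring, ?_, ?_⟩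
    · linear_combination - hμ2
    · have hμ3 : μ * ((y3 - y2) * (w3 - w2))
          = (a2 * (w3 - w2) + a1 * (w3 - w1)) * (y3 - y2) := by
        linear_combination (y3 - y2) * hμ2
      have hkey2 : (w3 - w2) * (y1 - y3) < (w3 - w1) * (y2 - y3) := by linarith [hkey]
      have step1 : a1 * ((w3 - w1) * (y3 - y2)) ≤ a1 * ((w3 - w2) * (y3 - y1)) :=
        mul_le_mul_of_nonneg_left (by linarith [hkey2]) ha1
      have step2 : μ * (y3 - y2) * (w3 - w2)
          ≤ (a1 * (y3 - y1) + a2 * (y3 - y2)) * (w3 - w2) := by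
        have e2 : μ * (y3 - y2) * (w3 - w2)
            = a2 * (w3 - w2) * (y3 - y2) + a1 * ((w3 - w1) * (y3 - y2)) := by
          linear_combination hμ3
        rw [e2]
        linarith [step1]
      have step3 := le_of_mul_le_mul_right step2 hw32
      linarith [step3]

lemma reduce3 (w1 w2 w3 y1 y2 y3 a1 a2 a3 : ℝ)
    (ha1 : 0 ≤ a1) (ha2 : 0 ≤ a2) (ha3 : 0 ≤ a3) :
    ∃ u yu v yv μ ν : ℝ,
      ((u = w1 ∧ yu = y1) ∨ (u = w2 ∧ yu = y2) ∨ (u = w3 ∧ yu = y3)) ∧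
      ((v = w1 ∧ yv = y1) ∨ (v = w2 ∧ yv = y2) ∨ (v = w3 ∧ yv = y3)) ∧
      0 ≤ μ ∧ 0 ≤ ν ∧ μ + ν = a1 + a2 + a3 ∧
      μ * u + ν * v = a1 * w1 + a2 * w2 + a3 * w3 ∧
      a1 * y1 + a2 * y2 + a3 * y3 ≤ μ * yu + ν * yv := by
  rcases le_total w1 w2 with h12 | h12
  · rcases le_total w2 w3 with h23 | h23
    · exact reduce3sorted w1 w2 w3 y1 y2 y3 a1 a2 a3 ha1 ha2 ha3 h12 h23
    · rcases le_total w1 w3 with h13 | h13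
      · obtain ⟨u, yu, v, yv, μ, ν, hu, hv, hμ, hν, hs, hc, hi⟩ :=
          reduce3sorted w1 w3 w2 y1 y3 y2 a1 a3 a2 ha1 ha3 ha2 h13 h23
        exact ⟨u, yu, v, yv, μ, ν, by tauto, by tauto, hμ, hν, by linarith,
          by linarith, by linarith⟩
      · obtain ⟨u, yu, v, yv, μ, ν, hu, hv, hμ, hν, hs, hc, hi⟩ :=
          reduce3sorted w3 w1 w2 y3 y1 y2 a3 a1 a2 ha3 ha1 ha2 h13 h12
        exact ⟨u, yu, v, yv, μ, ν, by tauto, by tauto, hμ, hν, by linarith,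
          by linarith, by linarith⟩
  · rcases le_total w1 w3 with h13 | h13
    · obtain ⟨u, yu, v, yv, μ, ν, hu, hv, hμ, hν, hs, hc, hi⟩ :=
        reduce3sorted w2 w1 w3 y2 y1 y3 a2 a1 a3 ha2 ha1 ha3 h12 h13
      exact ⟨u, yu, v, yv, μ, ν, by tauto, by tauto, hμ, hν, by linarith,
        by linarith, by linarith⟩
    · rcases le_total w2 w3 with h23 | h23
      · obtain ⟨u, yu, v, yv, μ, ν, hu, hv, hμ, hν, hs, hc, hi⟩ :=
          reduce3sorted w2 w3 w1 y2 y3 y1 a2 a3 a1 ha2 ha3 ha1 h23 h13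
        exact ⟨u, yu, v, yv, μ, ν, by tauto, by tauto, hμ, hν, by linarith,
          by linarith, by linarith⟩
      · obtain ⟨u, yu, v, yv, μ, ν, hu, hv, hμ, hν, hs, hc, hi⟩ :=
          reduce3sorted w3 w2 w1 y3 y2 y1 a3 a2 a1 ha3 ha2 ha1 h23 h12
        exact ⟨u, yu, v, yv, μ, ν, by tauto, by tauto, hμ, hν, by linarith,
          by linarith, by linarith⟩

lemma reduce4 (w1 w2 w3 w4 y1 y2 y3 y4 a1 a2 a3 a4 : ℝ)
    (ha1 : 0 ≤ a1) (ha2 : 0 ≤ a2) (ha3 : 0 ≤ a3) (ha4 : 0 ≤ a4) :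
    ∃ u yu v yv μ ν : ℝ,
      ((u = w1 ∧ yu = y1) ∨ (u = w2 ∧ yu = y2) ∨ (u = w3 ∧ yu = y3) ∨ (u = w4 ∧ yu = y4)) ∧
      ((v = w1 ∧ yv = y1) ∨ (v = w2 ∧ yv = y2) ∨ (v = w3 ∧ yv = y3) ∨ (v = w4 ∧ yv = y4)) ∧
      0 ≤ μ ∧ 0 ≤ ν ∧ μ + ν = a1 + a2 + a3 + a4 ∧
      μ * u + ν * v = a1 * w1 + a2 * w2 + a3 * w3 + a4 * w4 ∧
      a1 * y1 + a2 * y2 + a3 * y3 + a4 * y4 ≤ μ * yu + ν * yv := by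
  obtain ⟨u, yu, v, yv, μ, ν, hu, hv, hμ, hν, hs, hc, hi⟩ :=
    reduce3 w1 w2 w3 y1 y2 y3 a1 a2 a3 ha1 ha2 ha3
  obtain ⟨u', yu', v', yv', μ', ν', hu', hv', hμ', hν', hs', hc', hi'⟩ :=
    reduce3 u v w4 yu yv y4 μ ν a4 hμ hν ha4
  have lift : ∀ p q : ℝ, (p = u ∧ q = yu) ∨ (p = v ∧ q = yv) ∨ (p = w4 ∧ q = y4) →
      ((p = w1 ∧ q = y1) ∨ (p = w2 ∧ q = y2) ∨ (p = w3 ∧ q = y3) ∨ (p = w4 ∧ q = y4)) := by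
    rintro p q (⟨rfl, rfl⟩ | ⟨rfl, rfl⟩ | ⟨rfl, rfl⟩)
    · rcases hu with ⟨rfl, rfl⟩ | ⟨rfl, rfl⟩ | ⟨rfl, rfl⟩
      exacts [Or.inl ⟨rfl, rfl⟩, Or.inr (Or.inl ⟨rfl, rfl⟩),
        Or.inr (Or.inr (Or.inl ⟨rfl, rfl⟩))]
    · rcases hv with ⟨rfl, rfl⟩ | ⟨rfl, rfl⟩ | ⟨rfl, rfl⟩
      exacts [Or.inl ⟨rfl, rfl⟩, Or.inr (Or.inl ⟨rfl, rfl⟩),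
        Or.inr (Or.inr (Or.inl ⟨rfl, rfl⟩))]
    · exact Or.inr (Or.inr (Or.inr ⟨rfl, rfl⟩))
  refine ⟨u', yu', v', yv', μ', ν', lift u' yu' hu', lift v' yv' hv', hμ', hν',
    by linarith, ?_, ?_⟩
  · rw [hc']; linarith [hc]
  · calc a1 * y1 + a2 * y2 + a3 * y3 + a4 * y4 ≤ (μ * yu + ν * yv) + a4 * y4 := by linarith
    _ ≤ μ' * yu' + ν' * yv' := hi'

end reduce

section psi

variable {ψ : ℝ → ℝ}
variable (hη_pos : ∀ x > (0:ℝ), 0 < η x) (hη_conc : ConcaveOn ℝ (Set.Ioi 0) η)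
variable (hω_nonneg : ∀ x ≥ (0:ℝ), 0 ≤ ω x) (hω_mono : MonotoneOn ω (Set.Ici 0))
variable (hψ : ∀ x ≥ (0:ℝ), ψ x = sSup (TS η ω x))

include hη_pos hη_conc hω_nonneg hω_mono hψ

lemma psi_ge : ∀ x ≥ (0:ℝ), omegaEta η ω x ≤ ψ x := by
  intro x hx
  rw [hψ x hx]
  exact le_csSup (TS_bddAbove hη_pos hη_conc hω_nonneg hω_mono hx) (TS_self_mem hx)

lemma psi_le2 : ∀ x ≥ (0:ℝ), ψ x ≤ 2 * omegaEta η ω x := by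
  intro x hx
  rw [hψ x hx]
  exact csSup_le (TS_nonempty hx) (TS_le hη_pos hη_conc hω_nonneg hω_mono hx)

lemma psi_nonneg : ∀ x ≥ (0:ℝ), 0 ≤ ψ x := fun x hx =>
  le_trans (omegaEta_nonneg hω_nonneg x) (psi_ge hη_pos hη_conc hω_nonneg hω_mono hψ x hx)

lemma psi_mono : MonotoneOn ψ (Set.Ici 0) := by
  rintro a ha b hb hab
  rw [Set.mem_Ici] at ha hb
  rw [hψ a ha, hψ b hb]
  apply csSup_le (TS_nonempty ha)
  rintro yv ⟨x₁, hx1, x₂, hx2, l, hl, hcomb, rfl⟩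
  rcases eq_or_lt_of_le ha with rfl | hapos
  · have h0 : l * omegaEta η ω x₁ + (1 - l) * omegaEta η ω x₂ ≤ 0 := by
      have := TS_le hη_pos hη_conc hω_nonneg hω_mono (le_refl (0:ℝ)) _
        ⟨x₁, hx1, x₂, hx2, l, hl, hcomb, rfl⟩
      rwa [omegaEta_zero, mul_zero] at this
    exact h0.trans ((omegaEta_nonneg hω_nonneg b).trans
      (le_csSup (TS_bddAbove hη_pos hη_conc hω_nonneg hω_mono hb) (TS_self_mem hb)))
  · obtain ⟨c, hc⟩ : ∃ c : ℝ, c = b / a := ⟨_, rfl⟩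
    have hc1 : 1 ≤ c := by rw [hc, le_div_iff₀ hapos]; linarith
    have hca : c * a = b := by rw [hc]; field_simp
    have hmem : l * omegaEta η ω (c * x₁) + (1 - l) * omegaEta η ω (c * x₂) ∈ TS η ω b := by
      refine ⟨c * x₁, by nlinarith, c * x₂, by nlinarith, l, hl, ?_, rfl⟩
      linear_combination c * hcomb - hca
    have hle : l * omegaEta η ω x₁ + (1 - l) * omegaEta η ω x₂
        ≤ l * omegaEta η ω (c * x₁) + (1 - l) * omegaEta η ω (c * x₂) := by
      have m1 : omegaEta η ω x₁ ≤ omegaEta η ω (c * x₁) :=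
        omegaEta_mono hη_pos hη_conc hω_nonneg hω_mono _ _ hx1 (by nlinarith)
      have m2 : omegaEta η ω x₂ ≤ omegaEta η ω (c * x₂) :=
        omegaEta_mono hη_pos hη_conc hω_nonneg hω_mono _ _ hx2 (by nlinarith)
      have := mul_le_mul_of_nonneg_left m1 hl.1
      have := mul_le_mul_of_nonneg_left m2 (by linarith [hl.2] : (0:ℝ) ≤ 1 - l)
      linarith
    exact hle.trans (le_csSup (TS_bddAbove hη_pos hη_conc hω_nonneg hω_mono hb) hmem)

lemma psi_concave : ConcaveOn ℝ (Set.Ici 0) ψ := by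
  refine ⟨convex_Ici 0, ?_⟩
  rintro a ha b hb la lb hla hlb hsum
  rw [Set.mem_Ici] at ha hb
  simp only [smul_eq_mul]
  have hcnn : (0:ℝ) ≤ la * a + lb * b := by positivity
  have key : ∀ ya ∈ TS η ω a, ∀ yb ∈ TS η ω b,
      la * ya + lb * yb ≤ ψ (la * a + lb * b) := by
    rintro ya ⟨x₁, hx1, x₂, hx2, l, hl, hcomb, rfl⟩
      yb ⟨x₃, hx3, x₄, hx4, m, hm, hcomb', rfl⟩
    obtain ⟨u, yu, v, yv, μ, ν, hu, hv, hμ, hν, hs2, hcombo, hineq⟩ :=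
      reduce4 x₁ x₂ x₃ x₄ (omegaEta η ω x₁) (omegaEta η ω x₂) (omegaEta η ω x₃)
        (omegaEta η ω x₄) (la * l) (la * (1 - l)) (lb * m) (lb * (1 - m))
        (mul_nonneg hla hl.1) (mul_nonneg hla (by linarith [hl.2]))
        (mul_nonneg hlb hm.1) (mul_nonneg hlb (by linarith [hm.2]))
    have h1 : μ + ν = 1 := by linear_combination hs2 + hsum
    obtain ⟨hyu, hu0⟩ : yu = omegaEta η ω u ∧ 0 ≤ u := by
      rcases hu with ⟨rfl, rfl⟩ | ⟨rfl, rfl⟩ | ⟨rfl, rfl⟩ | ⟨rfl, rfl⟩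
      exacts [⟨rfl, hx1⟩, ⟨rfl, hx2⟩, ⟨rfl, hx3⟩, ⟨rfl, hx4⟩]
    obtain ⟨hyv, hv0⟩ : yv = omegaEta η ω v ∧ 0 ≤ v := by
      rcases hv with ⟨rfl, rfl⟩ | ⟨rfl, rfl⟩ | ⟨rfl, rfl⟩ | ⟨rfl, rfl⟩
      exacts [⟨rfl, hx1⟩, ⟨rfl, hx2⟩, ⟨rfl, hx3⟩, ⟨rfl, hx4⟩]
    have hmem : μ * omegaEta η ω u + ν * omegaEta η ω v ∈ TS η ω (la * a + lb * b) := by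
      refine ⟨u, hu0, v, hv0, μ, ⟨hμ, by linarith⟩, ?_, by rw [show (1:ℝ) - μ = ν by linarith]⟩
      have : la * a + lb * b = μ * u + ν * v := by
        linear_combination la * hcomb + lb * hcomb' - hcombo
      rw [this, show (1:ℝ) - μ = ν by linarith]
    calc la * (l * omegaEta η ω x₁ + (1 - l) * omegaEta η ω x₂)
          + lb * (m * omegaEta η ω x₃ + (1 - m) * omegaEta η ω x₄)
        = la * l * omegaEta η ω x₁ + la * (1 - l) * omegaEta η ω x₂
          + lb * m * omegaEta η ω x₃ + lb * (1 - m) * omegaEta η ω x₄ := by ring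
      _ ≤ μ * yu + ν * yv := hineq
      _ = μ * omegaEta η ω u + ν * omegaEta η ω v := by rw [hyu, hyv]
      _ ≤ sSup (TS η ω (la * a + lb * b)) :=
          le_csSup (TS_bddAbove hη_pos hη_conc hω_nonneg hω_mono hcnn) hmem
      _ = ψ (la * a + lb * b) := (hψ _ hcnn).symm
  rcases eq_or_lt_of_le hla with rfl | hla'
  · have hlb1 : lb = 1 := by linarith
    subst hlb1
    norm_num
  rcases eq_or_lt_of_le hlb with rfl | hlb'
  · have hla1 : la = 1 := by linarith
    subst hla1
    norm_num
  have H : ∀ ya ∈ TS η ω a, la * ya + lb * ψ b ≤ ψ (la * a + lb * b) := by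
    intro ya hya
    have h2 : ψ b ≤ (ψ (la * a + lb * b) - la * ya) / lb := by
      rw [hψ b hb]
      apply csSup_le (TS_nonempty hb)
      intro yb hyb
      rw [le_div_iff₀ hlb']
      linarith [key ya hya yb hyb]
    have e : lb * ((ψ (la * a + lb * b) - la * ya) / lb)
        = ψ (la * a + lb * b) - la * ya := by field_simp
    have h3 := mul_le_mul_of_nonneg_left h2 hlb'.le
    rw [e] at h3
    linarith
  have H2 : ψ a ≤ (ψ (la * a + lb * b) - lb * ψ b) / la := by
    rw [hψ a ha]
    apply csSup_le (TS_nonempty ha)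
    intro ya hya
    rw [le_div_iff₀ hla']
    linarith [H ya hya]
  have e : la * ((ψ (la * a + lb * b) - lb * ψ b) / la)
      = ψ (la * a + lb * b) - lb * ψ b := by field_simp
  have h4 := mul_le_mul_of_nonneg_left H2 hla'.le
  rw [e] at h4
  linarith

lemma psi_last : ∀ t > (0:ℝ), η t ≤ t → ψ (t + η t) ≤ ψ t + 2 * ω (η t) := by
  intro t ht hηle
  have hh : 0 < η t := hη_pos t ht
  have hωh : 0 ≤ ω (η t) := hω_nonneg _ hh.le
  have htnn : (0:ℝ) ≤ t := ht.le
  have hthnn : (0:ℝ) ≤ t + η t := by linarith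
  rw [hψ _ hthnn]
  apply csSup_le (TS_nonempty hthnn)
  rintro yv ⟨x₁, hx1, x₂, hx2, l, hl, hcomb, rfl⟩
  suffices H : ∀ u1 u2 m : ℝ, 0 ≤ u1 → 0 ≤ u2 → m ∈ Set.Icc (0:ℝ) 1 →
      t + η t = m * u1 + (1 - m) * u2 → u1 ≤ u2 →
      m * omegaEta η ω u1 + (1 - m) * omegaEta η ω u2 ≤ ψ t + 2 * ω (η t) by
    rcases le_total x₁ x₂ with hcs | hcs
    · exact H x₁ x₂ l hx1 hx2 hl hcomb hcs
    · have := H x₂ x₁ (1 - l) hx2 hx1 ⟨by linarith [hl.2], by linarith [hl.1]⟩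
        (by rw [hcomb]; ring) hcs
      linarith [this]
  intro u1 u2 m hu1 hu2 hm hcomb2 hu12
  have hm1 : (0:ℝ) ≤ 1 - m := by linarith [hm.2]
  have hx2ge : t + η t ≤ u2 := by nlinarith [hm.1, hm.2]
  have hψt : ∀ z ∈ TS η ω t, z ≤ ψ t := by
    intro z hz
    rw [hψ t htnn]
    exact le_csSup (TS_bddAbove hη_pos hη_conc hω_nonneg hω_mono htnn) hz
  rcases le_or_gt t u1 with hcase | hcase
  · -- both points at least t: shift both down by η t
    have hstep1 : omegaEta η ω u1 ≤ omegaEta η ω (u1 - η t) + ω (η t) := by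
      have hcond : η t ≤ η ((u1 - η t) + η t) := by
        rw [show u1 - η t + η t = u1 by ring]
        exact eta_mono hη_pos hη_conc t u1 ht hcase
      have := omegaEta_step hη_pos hω_nonneg (y := u1 - η t) (δ := η t)
        (by linarith) hh hcond
      rwa [show u1 - η t + η t = u1 by ring] at this
    have hstep2 : omegaEta η ω u2 ≤ omegaEta η ω (u2 - η t) + ω (η t) := by
      have hcond : η t ≤ η ((u2 - η t) + η t) := by
        rw [show u2 - η t + η t = u2 by ring]
        exact eta_mono hη_pos hη_conc t u2 ht (by linarith)
      have := omegaEta_step hη_pos hω_nonneg (y := u2 - η t) (δ := η t)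
        (by linarith) hh hcond
      rwa [show u2 - η t + η t = u2 by ring] at this
    have hmem : m * omegaEta η ω (u1 - η t) + (1 - m) * omegaEta η ω (u2 - η t)
        ∈ TS η ω t :=
      ⟨u1 - η t, by linarith, u2 - η t, by linarith, m, hm,
        by linear_combination hcomb2, rfl⟩
    have h5 := mul_le_mul_of_nonneg_left hstep1 hm.1
    have h6 := mul_le_mul_of_nonneg_left hstep2 hm1
    have h7 := hψt _ hmem
    nlinarith [h5, h6, h7]
  · -- u1 < t
    have hl1 : m < 1 := by
      rcases eq_or_lt_of_le hm.2 with rfl | h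
      · exfalso; nlinarith [hcomb2]
      · exact h
    have h1m : 0 < 1 - m := by linarith
    obtain ⟨d, hd⟩ : ∃ d : ℝ, d = η t / (1 - m) := ⟨_, rfl⟩
    have hd0 : 0 < d := by rw [hd]; positivity
    have hdl : (1 - m) * d = η t := by rw [hd]; field_simp
    have hcomb3 : t = m * u1 + (1 - m) * (u2 - d) := by
      linear_combination hcomb2 + hdl
    have e5 : (1 - m) * (u2 - d - t) = m * (t - u1) := by linear_combination - hcomb3
    have hx2't : t ≤ u2 - d := by
      have h8 : 0 ≤ (1 - m) * (u2 - d - t) := by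
        rw [e5]; exact mul_nonneg hm.1 (by linarith)
      nlinarith [h8, h1m]
    obtain ⟨N, hN⟩ : ∃ N : ℕ, N = ⌈1 / (1 - m)⌉₊ := ⟨_, rfl⟩
    have hN1 : 1 ≤ N := by
      have : 0 < ⌈1 / (1 - m)⌉₊ := Nat.ceil_pos.2 (by positivity)
      omega
    obtain ⟨k, hk⟩ : ∃ k : ℕ, N = k + 1 := ⟨N - 1, by omega⟩
    have hceil : 1 / (1 - m) ≤ (N : ℝ) := by rw [hN]; exact Nat.le_ceil _
    have hdN : d ≤ ((k : ℝ) + 1) * η t := by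
      have : d = η t * (1 / (1 - m)) := by rw [hd]; ring
      rw [this]
      have := mul_le_mul_of_nonneg_left hceil hh.le
      rw [hk] at this
      push_cast at this
      linarith
    have hsteps : omegaEta η ω u2 ≤ omegaEta η ω (u2 - d) + ((k : ℝ) + 1) * ω (η t) := by
      have := omegaEta_steps hη_pos hη_conc hω_nonneg hω_mono ht k (u2 - d) d
        hx2't hd0.le hdN
      rwa [show u2 - d + d = u2 by ring] at this
    have hNle : (1 - m) * ((k : ℝ) + 1) ≤ 2 := by
      have h7 : ((N : ℝ)) < 1 / (1 - m) + 1 := by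
        rw [hN]; exact Nat.ceil_lt_add_one (by positivity)
      have h8 : (1 - m) * (1 / (1 - m)) = 1 := by field_simp
      rw [hk] at h7
      push_cast at h7
      nlinarith [h7, h8, h1m]
    have hmem : m * omegaEta η ω u1 + (1 - m) * omegaEta η ω (u2 - d) ∈ TS η ω t :=
      ⟨u1, hu1, u2 - d, by linarith, m, hm, hcomb3, rfl⟩
    have h5 := mul_le_mul_of_nonneg_left hsteps hm1
    have h6 := hψt _ hmem
    have h9 : ((1 - m) * ((k : ℝ) + 1)) * ω (η t) ≤ 2 * ω (η t) :=
      mul_le_mul_of_nonneg_right hNle hωh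
    nlinarith [h5, h6, h9]

end psi

section tendsto

variable {ψ : ℝ → ℝ}
variable (hη_pos : ∀ x > (0:ℝ), 0 < η x) (hη_conc : ConcaveOn ℝ (Set.Ioi 0) η)
variable (hω_nonneg : ∀ x ≥ (0:ℝ), 0 ≤ ω x) (hω_mono : MonotoneOn ω (Set.Ici 0))
variable (hψ : ∀ x ≥ (0:ℝ), ψ x = sSup (TS η ω x))

include hη_pos hη_conc hω_nonneg hω_mono hψ

lemma psi_tendsto (hω_lim : Filter.Tendsto ω (nhdsWithin 0 (Set.Ioi 0)) (nhds 0)) :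
    Filter.Tendsto ψ (nhdsWithin 0 (Set.Ioi 0)) (nhds 0) := by
  have hev : Set.Ioc (0:ℝ) 1 ∈ nhdsWithin (0:ℝ) (Set.Ioi 0) :=
    Ioc_mem_nhdsGT_of_mem ⟨le_rfl, zero_lt_one⟩
  refine squeeze_zero' (g := fun x => (2 * max 1 (1 / η 1)) * ω x) ?_ ?_ ?_
  · filter_upwards [hev] with x hx
    exact psi_nonneg hη_pos hη_conc hω_nonneg hω_mono hψ x hx.1.le
  · filter_upwards [hev] with x hx
    have hx0 : 0 < x := hx.1
    have hb1 : ψ x ≤ 2 * omegaEta η ω x :=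
      psi_le2 hη_pos hη_conc hω_nonneg hω_mono hψ x hx0.le
    have hb2 : omegaEta η ω x ≤ max 1 (x / η x) * ω x := omegaEta_le_trivial hω_nonneg hx0
    have hscale : x * η 1 ≤ η x := by
      have := eta_scale hη_pos hη_conc 1 one_pos x hx0 hx.2
      rwa [mul_one] at this
    have hη1 : 0 < η 1 := hη_pos 1 one_pos
    have hηx : 0 < η x := hη_pos x hx0
    have hdiv : x / η x ≤ 1 / η 1 := by
      have hxη1 : 0 < x * η 1 := by positivity
      have h1 : x / η x ≤ x / (x * η 1) :=
        div_le_div_of_nonneg_left hx0.le hxη1 hscale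
      have h2 : x / (x * η 1) = 1 / η 1 := by field_simp
      linarith
    have hmax : max 1 (x / η x) ≤ max 1 (1 / η 1) := max_le_max le_rfl hdiv
    have hωx : 0 ≤ ω x := hω_nonneg x hx0.le
    calc ψ x ≤ 2 * omegaEta η ω x := hb1
    _ ≤ 2 * (max 1 (x / η x) * ω x) := by linarith
    _ ≤ 2 * (max 1 (1 / η 1) * ω x) := by nlinarith [hmax, hωx]
    _ = (2 * max 1 (1 / η 1)) * ω x := by ring
  · have := hω_lim.const_mul (2 * max 1 (1 / η 1))
    simpa using this

end tendsto

end OE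

theorem omegaEta_concave_envelope (η ω ψ : ℝ → ℝ)
    (hη_pos : ∀ x > (0:ℝ), 0 < η x)
    (hη_conc : ConcaveOn ℝ (Set.Ioi 0) η)
    (hω_nonneg : ∀ x ≥ (0:ℝ), 0 ≤ ω x)
    (hω_mono : MonotoneOn ω (Set.Ici 0))
    (hω_lim : Filter.Tendsto ω (nhdsWithin 0 (Set.Ioi 0)) (nhds 0))
    (hω_conc : ConcaveOn ℝ (Set.Ici 0) ω)
    (hψ : ∀ x ≥ (0:ℝ), ψ x = sSup {y : ℝ | ∃ x₁ ≥ (0:ℝ), ∃ x₂ ≥ (0:ℝ),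
      ∃ l ∈ Set.Icc (0:ℝ) 1, x = l * x₁ + (1 - l) * x₂ ∧
        y = l * omegaEta η ω x₁ + (1 - l) * omegaEta η ω x₂}) :
    (∀ x ≥ (0:ℝ), 0 ≤ ψ x) ∧
    MonotoneOn ψ (Set.Ici 0) ∧
    Filter.Tendsto ψ (nhdsWithin 0 (Set.Ioi 0)) (nhds 0) ∧
    ConcaveOn ℝ (Set.Ici 0) ψ ∧
    (∀ x ≥ (0:ℝ), omegaEta η ω x ≤ ψ x ∧ ψ x ≤ 2 * omegaEta η ω x) ∧
    (∀ t > (0:ℝ), η t ≤ t → ψ (t + η t) ≤ ψ t + 2 * ω (η t)) := by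
  have hψ' : ∀ x ≥ (0:ℝ), ψ x = sSup (OE.TS η ω x) := hψ
  exact ⟨OE.psi_nonneg hη_pos hη_conc hω_nonneg hω_mono hψ',
    OE.psi_mono hη_pos hη_conc hω_nonneg hω_mono hψ',
    OE.psi_tendsto hη_pos hη_conc hω_nonneg hω_mono hψ' hω_lim,
    OE.psi_concave hη_pos hη_conc hω_nonneg hω_mono hψ',
    fun x hx => ⟨OE.psi_ge hη_pos hη_conc hω_nonneg hω_mono hψ' x hx,
      OE.psi_le2 hη_pos hη_conc hω_nonneg hω_mono hψ' x hx⟩,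
    OE.psi_last hη_pos hη_conc hω_nonneg hω_mono hψ'⟩
end

section
/- Let η:(0,∞)→(0,∞) be concave, ψ a concave modulus, ω a modulus, and C>0. Suppose ψ(t+η(t))−ψ(t) ≤ Cω(η(t)) for all t>0 with η(t) ≤ t, and ψ(h) ≤ C·max{1,h/η(h)}·ω(h) for all h>0. Then ψ(x+h)−ψ(x) ≤ 2C·max{1,h/η(x+h)}·ω(h) for all x,h>0. -/
/-- Ratio lemma: for a concave positive function on `(0,∞)`, `a * η b ≤ b * η a` for `0 < a ≤ b`. -/
lemma eta_ratio (η : ℝ → ℝ) (hη_pos : ∀ x > (0:ℝ), 0 < η x)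
    (hη_conc : ConcaveOn ℝ (Set.Ioi 0) η) {a b : ℝ} (ha : 0 < a) (hab : a ≤ b) :
    a * η b ≤ b * η a := by
  rcases eq_or_lt_of_le hab with rfl | hlt
  · nlinarith
  have hb : 0 < b := ha.trans hlt
  have key : ∀ ε : ℝ, 0 < ε → ε < a → a * η b - b * η a ≤ ε * η b := by
    intro ε hε hεa
    set lam : ℝ := (b - a) / (b - ε) with hlam
    have hbε : 0 < b - ε := by linarith
    have hlam0 : 0 ≤ lam := div_nonneg (by linarith) hbε.le
    have hlam1 : 0 ≤ 1 - lam := by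
      rw [hlam]; rw [sub_nonneg, div_le_one hbε]; linarith
    have hsum : lam + (1 - lam) = 1 := by ring
    have hcomb : lam * ε + (1 - lam) * b = a := by
      rw [hlam]; field_simp; ring
    have := hη_conc.2 (show ε ∈ Set.Ioi (0:ℝ) from hε) (show b ∈ Set.Ioi (0:ℝ) from hb)
      hlam0 hlam1 hsum
    simp only [smul_eq_mul, hcomb] at this
    -- η a ≥ (1-lam) * η b = (a-ε)/(b-ε) * η b ≥ (a-ε)/b * η b
    have hεb : 0 < η ε := hη_pos ε hε
    have h1 : (1 - lam) * η b ≤ η a := by nlinarith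
    have h2 : (1 - lam) = (a - ε) / (b - ε) := by
      rw [hlam]; field_simp; ring
    have hηb : 0 ≤ η b := (hη_pos b hb).le
    have h3 : (a - ε) / b ≤ (a - ε) / (b - ε) := by
      apply div_le_div_of_nonneg_left (by linarith) hbε (by linarith)
    have h4 : (a - ε) / b * η b ≤ η a := by
      calc (a - ε) / b * η b ≤ (a - ε) / (b - ε) * η b := by nlinarith
        _ = (1 - lam) * η b := by rw [h2]
        _ ≤ η a := h1
    have h5 : (a - ε) * η b ≤ b * η a := by
      rw [div_mul_eq_mul_div, div_le_iff₀ hb] at h4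
      linarith
    linarith
  by_contra hcon
  push_neg at hcon
  have hηb : 0 < η b := hη_pos b hb
  set d : ℝ := a * η b - b * η a with hd
  have hd0 : 0 < d := by linarith
  set ε : ℝ := min (a / 2) (d / (2 * η b)) with hε
  have hε0 : 0 < ε := lt_min (by linarith) (by positivity)
  have hεa : ε < a := lt_of_le_of_lt (min_le_left _ _) (by linarith)
  have := key ε hε0 hεa
  have h6 : ε * η b ≤ (d / (2 * η b)) * η b :=
    mul_le_mul_of_nonneg_right (min_le_right _ _) hηb.le
  have h7 : (d / (2 * η b)) * η b = d / 2 := by field_simp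
  rw [h7] at h6
  linarith

/-- Subadditivity of a nonneg concave function on `[0,∞)`. -/
lemma psi_subadd (ψ : ℝ → ℝ) (hψ_nonneg : ∀ x ≥ (0:ℝ), 0 ≤ ψ x)
    (hψ_conc : ConcaveOn ℝ (Set.Ici 0) ψ) {a b : ℝ} (ha : 0 < a) (hb : 0 < b) :
    ψ (a + b) ≤ ψ a + ψ b := by
  have hab : 0 < a + b := by linarith
  have h0 : (0:ℝ) ∈ Set.Ici (0:ℝ) := Set.mem_Ici.mpr le_rfl
  have hmem : a + b ∈ Set.Ici (0:ℝ) := hab.le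
  have hψ0 : 0 ≤ ψ 0 := hψ_nonneg 0 le_rfl
  have key : ∀ c : ℝ, 0 < c → c < a + b → c / (a + b) * ψ (a + b) ≤ ψ c := by
    intro c hc hcab
    have hlam0 : (0:ℝ) ≤ 1 - c / (a + b) := by
      rw [sub_nonneg, div_le_one hab]; linarith
    have hlam1 : (0:ℝ) ≤ c / (a + b) := by positivity
    have hcomb : (1 - c / (a + b)) * 0 + (c / (a + b)) * (a + b) = c := by
      field_simp; ring
    have := hψ_conc.2 h0 hmem hlam0 hlam1 (by ring)
    simp only [smul_eq_mul, hcomb] at this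
    nlinarith
  rcases lt_trichotomy a (a + b) with h | h | h
  · have h1 := key a ha h
    have h2 := key b hb (by linarith)
    have : a / (a + b) * ψ (a + b) + b / (a + b) * ψ (a + b) = ψ (a + b) := by
      field_simp
    linarith
  · linarith
  · linarith

theorem psi_uniform_estimate (η ψ ω : ℝ → ℝ) (C : ℝ) (hC : 0 < C)
    (hη_pos : ∀ x > (0:ℝ), 0 < η x)
    (hη_conc : ConcaveOn ℝ (Set.Ioi 0) η)
    (hψ_nonneg : ∀ x ≥ (0:ℝ), 0 ≤ ψ x)
    (hψ_mono : MonotoneOn ψ (Set.Ici 0))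
    (hψ_lim : Filter.Tendsto ψ (nhdsWithin 0 (Set.Ioi 0)) (nhds 0))
    (hψ_conc : ConcaveOn ℝ (Set.Ici 0) ψ)
    (hω_nonneg : ∀ x ≥ (0:ℝ), 0 ≤ ω x)
    (hω_mono : MonotoneOn ω (Set.Ici 0))
    (hω_lim : Filter.Tendsto ω (nhdsWithin 0 (Set.Ioi 0)) (nhds 0))
    (h1 : ∀ t > (0:ℝ), η t ≤ t → ψ (t + η t) - ψ t ≤ C * ω (η t))
    (h2 : ∀ h > (0:ℝ), ψ h ≤ C * max 1 (h / η h) * ω h) :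
    ∀ x > (0:ℝ), ∀ h > (0:ℝ),
      ψ (x + h) - ψ x ≤ 2 * C * max 1 (h / η (x + h)) * ω h := by
  -- decreasing increments: for 0 ≤ t ≤ x, 0 < h, ψ(x+h) + ψ t ≤ ψ(t+h) + ψ x
  have decr : ∀ t x h : ℝ, 0 ≤ t → t ≤ x → 0 < h →
      ψ (x + h) + ψ t ≤ ψ (t + h) + ψ x := by
    intro t x h ht htx hh
    rcases eq_or_lt_of_le htx with rfl | hlt
    · linarith
    have hd : 0 < x - t + h := by linarith
    set lam : ℝ := (x - t) / (x - t + h) with hlam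
    have hlam0 : 0 ≤ lam := div_nonneg (by linarith) hd.le
    have hlam1 : 0 ≤ 1 - lam := by
      rw [sub_nonneg, hlam, div_le_one hd]; linarith
    have hmem1 : t ∈ Set.Ici (0:ℝ) := ht
    have hmem2 : x + h ∈ Set.Ici (0:ℝ) := by
      simp only [Set.mem_Ici]; linarith
    have hc1 : lam * t + (1 - lam) * (x + h) = t + h := by
      rw [hlam]; field_simp; ring
    have hc2 : (1 - lam) * t + lam * (x + h) = x := by
      rw [hlam]; field_simp; ring
    have k1 := hψ_conc.2 hmem1 hmem2 hlam0 hlam1 (by ring)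
    have k2 := hψ_conc.2 hmem1 hmem2 hlam1 hlam0 (by ring)
    simp only [smul_eq_mul, hc1] at k1
    simp only [smul_eq_mul, hc2] at k2
    linarith
  intro x hx h hh
  have hxh : 0 < x + h := by linarith
  have hηxh : 0 < η (x + h) := hη_pos _ hxh
  have hηh : 0 < η h := hη_pos _ hh
  have hωh : 0 ≤ ω h := hω_nonneg h hh.le
  set M : ℝ := max 1 (h / η (x + h)) with hM
  have hM1 : 1 ≤ M := le_max_left _ _
  have hMr : h / η (x + h) ≤ M := le_max_right _ _
  rcases lt_or_ge x h with hcase | hcase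
  · -- Case 1 : x < h
    have hsub := psi_subadd ψ hψ_nonneg hψ_conc hx hh
    have hψh := h2 h hh
    -- η h ≥ η(x+h)/2 : ratio lemma with a = h, b = x+h
    have hr := eta_ratio η hη_pos hη_conc hh (show h ≤ x + h by linarith)
    have hdiv : h / η h ≤ 2 * M := by
      have h0 : h / η h ≤ 2 * (h / η (x + h)) := by
        rw [div_le_iff₀ hηh, mul_comm 2 (h / η (x+h)), mul_assoc, div_mul_eq_mul_div,
          le_div_iff₀ hηxh]
        nlinarith
      linarith [mul_le_mul_of_nonneg_left hMr (by norm_num : (0:ℝ) ≤ 2)]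
    have hmax : max 1 (h / η h) ≤ 2 * M := max_le (by linarith) hdiv
    have : ψ h ≤ 2 * C * M * ω h := by
      calc ψ h ≤ C * max 1 (h / η h) * ω h := hψh
        _ ≤ C * (2 * M) * ω h := by
            apply mul_le_mul_of_nonneg_right _ hωh
            exact mul_le_mul_of_nonneg_left hmax hC.le
        _ = 2 * C * M * ω h := by ring
    linarith
  · -- Case 2 : h ≤ x
    rcases lt_or_ge h (η h) with h2i | h2ii
    · -- 2i : h < η h, so max 1 (h/η h) = 1
      have hd := decr h x h hh.le hcase hh
      have hsub := psi_subadd ψ hψ_nonneg hψ_conc hh hh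
      have hψh := h2 h hh
      have hmax : max 1 (h / η h) = 1 := max_eq_left (by
        rw [div_le_one hηh]; linarith)
      rw [hmax, mul_one] at hψh
      have hfin : C * ω h ≤ 2 * C * M * ω h := by
        nlinarith [mul_nonneg (mul_nonneg hC.le hωh) (show (0:ℝ) ≤ 2 * M - 1 by linarith)]
      have hψh0 : 0 ≤ ψ h := hψ_nonneg h hh.le
      linarith
    · -- 2ii : η h ≤ h
      rcases le_or_gt (η x) h with h2a | h2b
      · -- 2ii-a : η x ≤ h, apply h1 at x with slope scaling
        have hηx : 0 < η x := hη_pos x hx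
        have hηxx : η x ≤ x := le_trans h2a hcase
        have hkey := h1 x hx hηxx
        have hωcmp : ω (η x) ≤ ω h := hω_mono hηx.le (by positivity : (0:ℝ) ≤ h) h2a
        -- slope scaling : η x * (ψ(x+h) - ψ x) ≤ h * (ψ(x+η x) - ψ x)
        have hscale : η x * (ψ (x + h) - ψ x) ≤ h * (ψ (x + η x) - ψ x) := by
          have hd : 0 < h := hh
          have hlam1 : (0:ℝ) ≤ η x / h := by positivity
          have hlam0 : (0:ℝ) ≤ 1 - η x / h := by
            rw [sub_nonneg, div_le_one hd]; exact h2a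
          have hc : (1 - η x / h) * x + (η x / h) * (x + h) = x + η x := by
            field_simp; ring
          have := hψ_conc.2 (show x ∈ Set.Ici (0:ℝ) from hx.le)
            (show x + h ∈ Set.Ici (0:ℝ) by simp only [Set.mem_Ici]; linarith)
            hlam0 hlam1 (by ring)
          simp only [smul_eq_mul, hc] at this
          have h4 : h * ((1 - η x / h) * ψ x + η x / h * ψ (x + h)) ≤ h * ψ (x + η x) :=
            mul_le_mul_of_nonneg_left this hd.le
          have h5 : h * ((1 - η x / h) * ψ x + η x / h * ψ (x + h))
              = (h - η x) * ψ x + η x * ψ (x + h) := by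
            field_simp
          rw [h5] at h4
          linarith
        -- η x ≥ η(x+h)/2 : ratio lemma with a = x, b = x+h, using h ≤ x
        have hr := eta_ratio η hη_pos hη_conc hx (show x ≤ x + h by linarith)
        have hr2 : η (x + h) ≤ 2 * η x := by nlinarith
        -- combine
        have hstep : ψ (x + h) - ψ x ≤ (h / η x) * (C * ω h) := by
          rw [div_mul_eq_mul_div, le_div_iff₀ hηx]
          calc (ψ (x + h) - ψ x) * η x = η x * (ψ (x + h) - ψ x) := by ring
            _ ≤ h * (ψ (x + η x) - ψ x) := hscale
            _ ≤ h * (C * ω h) := by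
                apply mul_le_mul_of_nonneg_left _ hh.le
                calc ψ (x + η x) - ψ x ≤ C * ω (η x) := hkey
                  _ ≤ C * ω h := mul_le_mul_of_nonneg_left hωcmp hC.le
            _ = h * (C * ω h) := rfl
        have hdiv : h / η x ≤ 2 * M := by
          have h0 : h / η x ≤ 2 * (h / η (x + h)) := by
            rw [div_le_iff₀ hηx, mul_comm 2 (h / η (x+h)), mul_assoc, div_mul_eq_mul_div,
              le_div_iff₀ hηxh]
            nlinarith
          linarith [mul_le_mul_of_nonneg_left hMr (by norm_num : (0:ℝ) ≤ 2)]
        calc ψ (x + h) - ψ x ≤ (h / η x) * (C * ω h) := hstep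
          _ ≤ (2 * M) * (C * ω h) := by
              apply mul_le_mul_of_nonneg_right hdiv (by positivity)
          _ = 2 * C * M * ω h := by ring
      · -- 2ii-b : η h ≤ h < η x : IVT gives t ∈ [h,x] with η t = h
        have hxx : h ≤ x := hcase
        have hcont : ContinuousOn η (Set.Icc h x) := by
          apply (hη_conc.continuousOn isOpen_Ioi).mono
          intro y hy
          exact lt_of_lt_of_le hh hy.1
        have hIcc : h ∈ Set.Icc (η h) (η x) := ⟨h2ii, h2b.le⟩
        obtain ⟨t, htmem, hteq⟩ := intermediate_value_Icc hxx hcont hIcc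
        have hht : h ≤ t := htmem.1
        have htx : t ≤ x := htmem.2
        have ht0 : 0 < t := lt_of_lt_of_le hh hht
        have hηt : η t ≤ t := by rw [hteq]; exact hht
        have hkey := h1 t ht0 hηt
        rw [hteq] at hkey
        have hd := decr t x h ht0.le htx hh
        have hfin : C * ω h ≤ 2 * C * M * ω h := by
          nlinarith [mul_nonneg (mul_nonneg hC.le hωh) (show (0:ℝ) ≤ 2 * M - 1 by linarith)]
        linarith
end

section
/- Let η:(0,∞)→(0,∞) and ω:[0,∞)→[0,∞) be concave, ω a modulus, g:(0,∞)→ℝ differentiable, C>0. Assume: (1) |g(x+h)−g(x)| ≤ C·max{1,h/η(x+h)}·ω(h) for all x,h>0; (2) η(x)|g'(x)| ≤ Cω(η(x)) for all x>0; (3) η(x)|g'(x)−g'(x+h)| ≤ Cω(h) for all x,h>0. Let G = {(x,y)∈ℝ² : x>0, |y|<η(x)} and f(x,y)=g(x)y. Then f is both (5Cω)-semiconvex and (5Cω)-semiconcave on G. -/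
/-- `f` is semiconvex with modulus `ω` on an (open convex) set `G ⊆ ℝ²`. -/
def SemiconvexWith (ω : ℝ → ℝ) (G : Set (EuclideanSpace ℝ (Fin 2)))
    (f : EuclideanSpace ℝ (Fin 2) → ℝ) : Prop :=
  ∀ p ∈ G, ∀ q ∈ G, ∀ l ∈ Set.Icc (0:ℝ) 1,
    f (l • p + (1 - l) • q) ≤
      l * f p + (1 - l) * f q + l * (1 - l) * ‖p - q‖ * ω ‖p - q‖

/-- A nonnegative concave function on `[0,∞)` has nonincreasing ratio `ω t / t`. -/
private lemma ratio_aux {ω : ℝ → ℝ} (hω_nonneg : ∀ x ≥ (0:ℝ), 0 ≤ ω x)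
    (hω_conc : ConcaveOn ℝ (Set.Ici 0) ω) :
    ∀ s t : ℝ, 0 < s → s ≤ t → s * ω t ≤ t * ω s := by
  intro s t hs hst
  have ht : 0 < t := lt_of_lt_of_le hs hst
  have hb : (0:ℝ) ≤ 1 - s / t := by
    rw [sub_nonneg]; exact (div_le_one ht).mpr hst
  have key := hω_conc.2 (Set.mem_Ici.mpr ht.le) (Set.mem_Ici.mpr le_rfl)
      (by positivity : (0:ℝ) ≤ s / t) hb (by ring)
  simp only [smul_eq_mul, mul_zero, add_zero] at key
  rw [show s / t * t = s by field_simp] at key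
  have h0 : 0 ≤ ω 0 := hω_nonneg 0 le_rfl
  have hstep : s / t * ω t ≤ ω s := by nlinarith [mul_nonneg hb h0]
  have := mul_le_mul_of_nonneg_left hstep ht.le
  have heq : t * (s / t * ω t) = s * ω t := by field_simp
  linarith [heq ▸ this]

/-- A positive concave function on `(0,∞)` is nondecreasing. -/
private lemma conc_mono {η : ℝ → ℝ} (hη_pos : ∀ x > (0:ℝ), 0 < η x)
    (hη_conc : ConcaveOn ℝ (Set.Ioi 0) η) :
    ∀ s t : ℝ, 0 < s → s ≤ t → η s ≤ η t := by
  intro s t hs hst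
  rcases eq_or_lt_of_le hst with rfl | hlt
  · exact le_rfl
  by_contra hcon
  push_neg at hcon
  have hδ : 0 < η s - η t := by linarith
  have hηs : 0 < η s := hη_pos s hs
  set w : ℝ := s + (t - s) * ((η s + (η s - η t)) / (η s - η t)) with hwdef
  have hq : 1 < (η s + (η s - η t)) / (η s - η t) := by
    rw [lt_div_iff₀ hδ]; nlinarith
  have hw_gt : t < w := by
    have := mul_lt_mul_of_pos_left hq (show (0:ℝ) < t - s by linarith)
    rw [hwdef]; nlinarith
  have hw_pos : 0 < w := by linarith
  have hηw : 0 < η w := hη_pos w hw_pos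
  have hws : 0 < w - s := by linarith
  set ν : ℝ := (t - s) / (w - s) with hνdef
  have hν_pos : 0 < ν := div_pos (by linarith) hws
  have hν_le : ν ≤ 1 := by
    rw [hνdef, div_le_one hws]; linarith
  have hν_ws : ν * (w - s) = t - s := by
    rw [hνdef]; field_simp
  have hcomb : (1 - ν) * s + ν * w = t := by linear_combination hν_ws
  have key := hη_conc.2 (Set.mem_Ioi.mpr hs) (Set.mem_Ioi.mpr hw_pos)
      (by linarith : (0:ℝ) ≤ 1 - ν) hν_pos.le (by ring)
  simp only [smul_eq_mul] at key
  rw [hcomb] at key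
  -- key : (1 - ν) * η s + ν * η w ≤ η t
  have hδw : (η s - η t) * (w - s) = (t - s) * (η s + (η s - η t)) := by
    rw [hwdef]
    field_simp
    ring
  have hνeq : ν * (η s + (η s - η t)) = η s - η t := by
    have hcancel : ν * (η s + (η s - η t)) * (w - s) = (η s - η t) * (w - s) := by
      linear_combination (η s + (η s - η t)) * hν_ws - hδw
    exact mul_right_cancel₀ (ne_of_gt hws) hcancel
  nlinarith [mul_pos hν_pos hηw, mul_pos hν_pos hδ, key, hνeq]

set_option maxHeartbeats 1600000 in
/-- Key Taylor-type estimate for `f(x,y) = g(x)·y` on `G`. -/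
private lemma key_taylor
    (η ω g g' : ℝ → ℝ) (C : ℝ) (hC : 0 < C)
    (hη_pos : ∀ x > (0:ℝ), 0 < η x)
    (hη_mono : ∀ s t : ℝ, 0 < s → s ≤ t → η s ≤ η t)
    (hω_nonneg : ∀ x ≥ (0:ℝ), 0 ≤ ω x)
    (hω_mono : MonotoneOn ω (Set.Ici 0))
    (hratio : ∀ s t : ℝ, 0 < s → s ≤ t → s * ω t ≤ t * ω s)
    (hg : ∀ x > (0:ℝ), HasDerivAt g (g' x) x)
    (h1 : ∀ x > (0:ℝ), ∀ h > (0:ℝ),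
      |g (x + h) - g x| ≤ C * max 1 (h / η (x + h)) * ω h)
    (h2 : ∀ x > (0:ℝ), η x * |g' x| ≤ C * ω (η x))
    (h3 : ∀ x > (0:ℝ), ∀ h > (0:ℝ), η x * |g' x - g' (x + h)| ≤ C * ω h)
    (u x v y : ℝ) (hu : 0 < u) (hx : 0 < x)
    (hv : |v| < η u) (hy : |y| < η x) :
    |y * (g x - g u) - v * g' u * (x - u)| ≤
      5/2 * C * (Real.sqrt ((x - u)^2 + (y - v)^2) *
        ω (Real.sqrt ((x - u)^2 + (y - v)^2))) := by
  set ρ : ℝ := Real.sqrt ((x - u)^2 + (y - v)^2) with hρdef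
  have hρ0 : 0 ≤ ρ := Real.sqrt_nonneg _
  have hωρ0 : 0 ≤ ω ρ := hω_nonneg ρ hρ0
  have hηu : 0 < η u := hη_pos u hu
  have hηx : 0 < η x := hη_pos x hx
  have hρsq : ρ^2 = (x - u)^2 + (y - v)^2 := Real.sq_sqrt (by positivity)
  have hr0 : 0 ≤ |y - v| := abs_nonneg _
  have hr2 : |y - v|^2 = (y - v)^2 := sq_abs _
  have hrρ : |y - v| ≤ ρ := by
    rw [← Real.sqrt_sq_eq_abs]
    exact Real.sqrt_le_sqrt (by nlinarith [sq_nonneg (x - u)])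
  have hyv : |y| ≤ |v| + |y - v| := by
    have h := abs_add_le v (y - v)
    rwa [show v + (y - v) = y by ring] at h
  have hRHS0 : 0 ≤ C * (ρ * ω ρ) := mul_nonneg hC.le (mul_nonneg hρ0 hωρ0)
  rcases lt_trichotomy x u with hxu | hxu | hxu
  · -- x < u (step to the left)
    have hk : 0 < u - x := by linarith
    have hkρ : u - x ≤ ρ := by
      calc u - x = |x - u| := by rw [abs_of_neg (by linarith : x - u < 0)]; ring
        _ = Real.sqrt ((x - u)^2) := (Real.sqrt_sq_eq_abs _).symm
        _ ≤ ρ := Real.sqrt_le_sqrt (by nlinarith [sq_nonneg (y - v)])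
    have hρpos : 0 < ρ := lt_of_lt_of_le hk hkρ
    have hωk0 : 0 ≤ ω (u - x) := hω_nonneg _ hk.le
    have hωkρ : ω (u - x) ≤ ω ρ :=
      hω_mono (Set.mem_Ici.mpr hk.le) (Set.mem_Ici.mpr hρ0) hkρ
    have hsum : (u - x)^2 + |y - v|^2 = ρ^2 := by rw [hρsq, hr2]; ring
    have hrk : |y - v| * (u - x) ≤ ρ^2 / 2 := by
      nlinarith [sq_nonneg (|y - v| - (u - x))]
    have hgd : |g x - g u| ≤ C * max 1 ((u - x) / η u) * ω (u - x) := by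
      have h := h1 x hx (u - x) hk
      rw [show x + (u - x) = u by ring] at h
      rwa [abs_sub_comm] at h
    -- Mean value theorem on [x, u]
    have hcont : ContinuousOn g (Set.Icc x u) := fun t ht =>
      ((hg t (lt_of_lt_of_le hx ht.1)).continuousAt).continuousWithinAt
    have hderiv : ∀ t ∈ Set.Ioo x u, HasDerivAt g (g' t) t := fun t ht =>
      hg t (lt_trans hx ht.1)
    obtain ⟨ξ, hξ, hξslope⟩ := exists_hasDerivAt_eq_slope g g' hxu hcont hderiv
    have hξpos : 0 < ξ := lt_trans hx hξ.1
    have hgux : g u - g x = g' ξ * (u - x) := by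
      rw [hξslope]; field_simp
    have hd3 : η x * |g' ξ - g' u| ≤ C * ω (u - x) := by
      have h := h3 ξ hξpos (u - ξ) (by linarith [hξ.2])
      rw [show ξ + (u - ξ) = u by ring] at h
      have hmx : η x ≤ η ξ := hη_mono x ξ hx hξ.1.le
      have hmo : ω (u - ξ) ≤ ω (u - x) :=
        hω_mono (Set.mem_Ici.mpr (by linarith [hξ.2])) (Set.mem_Ici.mpr hk.le)
          (by linarith [hξ.1])
      calc η x * |g' ξ - g' u| ≤ η ξ * |g' ξ - g' u| :=
            mul_le_mul_of_nonneg_right hmx (abs_nonneg _)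
        _ ≤ C * ω (u - ξ) := h
        _ ≤ C * ω (u - x) := mul_le_mul_of_nonneg_left hmo hC.le
    have hREMeq : g x - g u - g' u * (x - u) = (g' u - g' ξ) * (u - x) := by
      have : g x - g u = -(g' ξ * (u - x)) := by rw [← hgux]; ring
      rw [this]; ring
    by_cases hB : ρ ≤ η u
    · -- Case B2
      have hg'u : ρ * |g' u| ≤ C * ω ρ := by
        have h2u := h2 u hu
        have hr := hratio ρ (η u) hρpos hB
        have chain : η u * (ρ * |g' u|) ≤ η u * (C * ω ρ) := by
          calc η u * (ρ * |g' u|) = ρ * (η u * |g' u|) := by ring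
            _ ≤ ρ * (C * ω (η u)) := mul_le_mul_of_nonneg_left h2u hρ0
            _ = C * (ρ * ω (η u)) := by ring
            _ ≤ C * (η u * ω ρ) := mul_le_mul_of_nonneg_left hr hC.le
            _ = η u * (C * ω ρ) := by ring
        exact le_of_mul_le_mul_left chain hηu
      have hcross : |y - v| * |g' u| * (u - x) ≤ 1/2 * (C * (ρ * ω ρ)) := by
        calc |y - v| * |g' u| * (u - x) = (|y - v| * (u - x)) * |g' u| := by ring
          _ ≤ (ρ^2 / 2) * |g' u| := mul_le_mul_of_nonneg_right hrk (abs_nonneg _)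
          _ = (ρ/2) * (ρ * |g' u|) := by ring
          _ ≤ (ρ/2) * (C * ω ρ) := mul_le_mul_of_nonneg_left hg'u (by positivity)
          _ = 1/2 * (C * (ρ * ω ρ)) := by ring
      have hyREM : |y| * |g x - g u - g' u * (x - u)| ≤ C * (ρ * ω ρ) := by
        rw [hREMeq, abs_mul, abs_of_pos hk]
        have hd3' : η x * |g' u - g' ξ| ≤ C * ω (u - x) := by
          rw [abs_sub_comm]; exact hd3
        calc |y| * (|g' u - g' ξ| * (u - x))
            ≤ η x * (|g' u - g' ξ| * (u - x)) :=
              mul_le_mul_of_nonneg_right hy.le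
                (mul_nonneg (abs_nonneg _) hk.le)
          _ = (η x * |g' u - g' ξ|) * (u - x) := by ring
          _ ≤ (C * ω (u - x)) * (u - x) := mul_le_mul_of_nonneg_right hd3' hk.le
          _ ≤ (C * ω ρ) * ρ := by
              apply mul_le_mul (mul_le_mul_of_nonneg_left hωkρ hC.le) hkρ hk.le
              exact mul_nonneg hC.le hωρ0
          _ = C * (ρ * ω ρ) := by ring
      calc |y * (g x - g u) - v * g' u * (x - u)|
          = |y * (g x - g u - g' u * (x - u)) + (y - v) * g' u * (x - u)| := by
            ring_nf
        _ ≤ |y * (g x - g u - g' u * (x - u))| + |(y - v) * g' u * (x - u)| :=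
            abs_add_le _ _
        _ = |y| * |g x - g u - g' u * (x - u)| + |y - v| * |g' u| * (u - x) := by
            rw [abs_mul, abs_mul, abs_mul, abs_of_neg (by linarith : x - u < 0)]
            ring
        _ ≤ C * (ρ * ω ρ) + 1/2 * (C * (ρ * ω ρ)) := add_le_add hyREM hcross
        _ ≤ 5/2 * C * (ρ * ω ρ) := by linarith [hRHS0]
    · -- Case A, x < u
      push_neg at hB
      have hA2 : |v| * |g' u| * (u - x) ≤ (C * ω ρ) * (u - x) := by
        have t1 : |v| * |g' u| ≤ η u * |g' u| :=
          mul_le_mul_of_nonneg_right hv.le (abs_nonneg _)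
        have t2 := h2 u hu
        have t3 : ω (η u) ≤ ω ρ :=
          hω_mono (Set.mem_Ici.mpr hηu.le) (Set.mem_Ici.mpr hρ0) hB.le
        have : |v| * |g' u| ≤ C * ω ρ := by
          calc |v| * |g' u| ≤ η u * |g' u| := t1
            _ ≤ C * ω (η u) := t2
            _ ≤ C * ω ρ := mul_le_mul_of_nonneg_left t3 hC.le
        exact mul_le_mul_of_nonneg_right this hk.le
      have habs : |y * (g x - g u) - v * g' u * (x - u)| ≤
          |y| * |g x - g u| + |v| * |g' u| * (u - x) := by
        calc |y * (g x - g u) - v * g' u * (x - u)|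
            ≤ |y * (g x - g u)| + |v * g' u * (x - u)| := abs_sub _ _
          _ = |y| * |g x - g u| + |v| * |g' u| * (u - x) := by
              rw [abs_mul, abs_mul, abs_mul,
                abs_of_neg (by linarith : x - u < 0)]
              ring
      by_cases hke : η u ≤ u - x
      · -- A1c
        have hmax : max 1 ((u - x) / η u) = (u - x) / η u :=
          max_eq_right ((one_le_div hηu).mpr hke)
        rw [hmax] at hgd
        have hA1 : |y| * |g x - g u| ≤ C * (ρ * ω ρ) := by
          have hyx : |y| ≤ η u := le_trans hy.le (hη_mono x u hx hxu.le)
          calc |y| * |g x - g u| ≤ η u * (C * ((u - x) / η u) * ω (u - x)) :=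
              mul_le_mul hyx hgd (abs_nonneg _) hηu.le
            _ = C * ((u - x) * ω (u - x)) := by field_simp
            _ ≤ C * (ρ * ω ρ) := by
                apply mul_le_mul_of_nonneg_left _ hC.le
                exact mul_le_mul hkρ hωkρ hωk0 hρ0
        calc |y * (g x - g u) - v * g' u * (x - u)|
            ≤ |y| * |g x - g u| + |v| * |g' u| * (u - x) := habs
          _ ≤ C * (ρ * ω ρ) + (C * ω ρ) * (u - x) := add_le_add hA1 hA2
          _ ≤ C * (ρ * ω ρ) + (C * ω ρ) * ρ := by
              apply add_le_add_right
              exact mul_le_mul_of_nonneg_left hkρ (mul_nonneg hC.le hωρ0)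
          _ = 2 * (C * (ρ * ω ρ)) := by ring
          _ ≤ 5/2 * C * (ρ * ω ρ) := by linarith [hRHS0]
      · -- A1d
        push_neg at hke
        have hmax : max 1 ((u - x) / η u) = 1 :=
          max_eq_left ((div_le_one hηu).mpr hke.le)
        rw [hmax, mul_one] at hgd
        have hA1 : |y| * |g x - g u| ≤ ρ * (C * ω ρ) := by
          have hyx : |y| ≤ ρ := by
            have := hη_mono x u hx hxu.le
            linarith [hy.le, hB.le]
          have hgd' : |g x - g u| ≤ C * ω ρ := by
            calc |g x - g u| ≤ C * ω (u - x) := hgd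
              _ ≤ C * ω ρ := mul_le_mul_of_nonneg_left hωkρ hC.le
          exact mul_le_mul hyx hgd' (abs_nonneg _) hρ0
        calc |y * (g x - g u) - v * g' u * (x - u)|
            ≤ |y| * |g x - g u| + |v| * |g' u| * (u - x) := habs
          _ ≤ ρ * (C * ω ρ) + (C * ω ρ) * (u - x) := add_le_add hA1 hA2
          _ ≤ ρ * (C * ω ρ) + (C * ω ρ) * ρ := by
              apply add_le_add_right
              exact mul_le_mul_of_nonneg_left hkρ (mul_nonneg hC.le hωρ0)
          _ = 2 * (C * (ρ * ω ρ)) := by ring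
          _ ≤ 5/2 * C * (ρ * ω ρ) := by linarith [hRHS0]
  · -- x = u
    have hz : y * (g x - g u) - v * g' u * (x - u) = 0 := by rw [hxu]; ring
    rw [hz, abs_zero]
    linarith [hRHS0]
  · -- u < x (step to the right)
    have hk : 0 < x - u := by linarith
    have hkρ : x - u ≤ ρ := by
      calc x - u = |x - u| := (abs_of_pos hk).symm
        _ = Real.sqrt ((x - u)^2) := (Real.sqrt_sq_eq_abs _).symm
        _ ≤ ρ := Real.sqrt_le_sqrt (by nlinarith [sq_nonneg (y - v)])
    have hρpos : 0 < ρ := lt_of_lt_of_le hk hkρ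
    have hωk0 : 0 ≤ ω (x - u) := hω_nonneg _ hk.le
    have hωkρ : ω (x - u) ≤ ω ρ :=
      hω_mono (Set.mem_Ici.mpr hk.le) (Set.mem_Ici.mpr hρ0) hkρ
    have hsum : (x - u)^2 + |y - v|^2 = ρ^2 := by rw [hρsq, hr2]
    have hrk : |y - v| * (x - u) ≤ ρ^2 / 2 := by
      nlinarith [sq_nonneg (|y - v| - (x - u))]
    have hgd : |g x - g u| ≤ C * max 1 ((x - u) / η x) * ω (x - u) := by
      have h := h1 u hu (x - u) hk
      rwa [show u + (x - u) = x by ring] at h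
    -- Mean value theorem on [u, x]
    have hcont : ContinuousOn g (Set.Icc u x) := fun t ht =>
      ((hg t (lt_of_lt_of_le hu ht.1)).continuousAt).continuousWithinAt
    have hderiv : ∀ t ∈ Set.Ioo u x, HasDerivAt g (g' t) t := fun t ht =>
      hg t (lt_trans hu ht.1)
    obtain ⟨ξ, hξ, hξslope⟩ := exists_hasDerivAt_eq_slope g g' hxu hcont hderiv
    have hξpos : 0 < ξ := lt_trans hu hξ.1
    have hgux : g x - g u = g' ξ * (x - u) := by
      rw [hξslope]; field_simp
    have hd3 : η u * |g' ξ - g' u| ≤ C * ω (x - u) := by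
      have h := h3 u hu (ξ - u) (by linarith [hξ.1])
      rw [show u + (ξ - u) = ξ by ring] at h
      have hmo : ω (ξ - u) ≤ ω (x - u) :=
        hω_mono (Set.mem_Ici.mpr (by linarith [hξ.1])) (Set.mem_Ici.mpr hk.le)
          (by linarith [hξ.2])
      calc η u * |g' ξ - g' u| = η u * |g' u - g' ξ| := by rw [abs_sub_comm]
        _ ≤ C * ω (ξ - u) := h
        _ ≤ C * ω (x - u) := mul_le_mul_of_nonneg_left hmo hC.le
    have hREMeq : g x - g u - g' u * (x - u) = (g' ξ - g' u) * (x - u) := by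
      rw [hgux]; ring
    by_cases hB : ρ ≤ η u
    · -- Case B1
      have hg'u : ρ * |g' u| ≤ C * ω ρ := by
        have h2u := h2 u hu
        have hr := hratio ρ (η u) hρpos hB
        have chain : η u * (ρ * |g' u|) ≤ η u * (C * ω ρ) := by
          calc η u * (ρ * |g' u|) = ρ * (η u * |g' u|) := by ring
            _ ≤ ρ * (C * ω (η u)) := mul_le_mul_of_nonneg_left h2u hρ0
            _ = C * (ρ * ω (η u)) := by ring
            _ ≤ C * (η u * ω ρ) := mul_le_mul_of_nonneg_left hr hC.le
            _ = η u * (C * ω ρ) := by ring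
        exact le_of_mul_le_mul_left chain hηu
      have hcross : |y - v| * |g' u| * (x - u) ≤ 1/2 * (C * (ρ * ω ρ)) := by
        calc |y - v| * |g' u| * (x - u) = (|y - v| * (x - u)) * |g' u| := by ring
          _ ≤ (ρ^2 / 2) * |g' u| := mul_le_mul_of_nonneg_right hrk (abs_nonneg _)
          _ = (ρ/2) * (ρ * |g' u|) := by ring
          _ ≤ (ρ/2) * (C * ω ρ) := mul_le_mul_of_nonneg_left hg'u (by positivity)
          _ = 1/2 * (C * (ρ * ω ρ)) := by ring
      have hyb : |y| ≤ η u + |y - v| := by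
        calc |y| ≤ |v| + |y - v| := hyv
          _ ≤ η u + |y - v| := by linarith [hv.le]
      have hyREM : |y| * |g x - g u - g' u * (x - u)| ≤ 3/2 * (C * (ρ * ω ρ)) := by
        have step1 : η u * (|y| * |g x - g u - g' u * (x - u)|) ≤
            (η u + |y - v|) * (C * ω (x - u) * (x - u)) := by
          rw [hREMeq, abs_mul, abs_of_pos hk]
          calc η u * (|y| * (|g' ξ - g' u| * (x - u)))
              = |y| * ((η u * |g' ξ - g' u|) * (x - u)) := by ring
            _ ≤ (η u + |y - v|) * ((C * ω (x - u)) * (x - u)) := by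
                apply mul_le_mul hyb
                  (mul_le_mul_of_nonneg_right hd3 hk.le)
                  (mul_nonneg (mul_nonneg hηu.le (abs_nonneg _)) hk.le)
                  (by linarith [abs_nonneg (y - v), hηu])
            _ = (η u + |y - v|) * (C * ω (x - u) * (x - u)) := by ring
        have step2 : (η u + |y - v|) * (C * ω (x - u) * (x - u)) ≤
            η u * (3/2 * (C * (ρ * ω ρ))) := by
          have c1 : ω (x - u) * (x - u) ≤ ω ρ * ρ :=
            mul_le_mul hωkρ hkρ hk.le hωρ0
          have e1 : η u * (C * ω (x - u) * (x - u)) ≤ η u * (C * (ρ * ω ρ)) := by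
            apply mul_le_mul_of_nonneg_left _ hηu.le
            calc C * ω (x - u) * (x - u) = C * (ω (x - u) * (x - u)) := by ring
              _ ≤ C * (ω ρ * ρ) := mul_le_mul_of_nonneg_left c1 hC.le
              _ = C * (ρ * ω ρ) := by ring
          have e2 : |y - v| * (C * ω (x - u) * (x - u)) ≤
              η u * (1/2 * (C * (ρ * ω ρ))) := by
            have f2 : ρ^2 ≤ η u * ρ := by nlinarith
            calc |y - v| * (C * ω (x - u) * (x - u))
                = (C * ω (x - u)) * (|y - v| * (x - u)) := by ring
              _ ≤ (C * ω ρ) * (ρ^2 / 2) := by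
                  apply mul_le_mul (mul_le_mul_of_nonneg_left hωkρ hC.le) hrk
                    (mul_nonneg (abs_nonneg _) hk.le)
                    (mul_nonneg hC.le hωρ0)
              _ ≤ (C * ω ρ) * (η u * ρ / 2) := by
                  apply mul_le_mul_of_nonneg_left (by linarith)
                    (mul_nonneg hC.le hωρ0)
              _ = η u * (1/2 * (C * (ρ * ω ρ))) := by ring
          calc (η u + |y - v|) * (C * ω (x - u) * (x - u))
              = η u * (C * ω (x - u) * (x - u)) +
                |y - v| * (C * ω (x - u) * (x - u)) := by ring
            _ ≤ η u * (C * (ρ * ω ρ)) + η u * (1/2 * (C * (ρ * ω ρ))) :=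
                add_le_add e1 e2
            _ = η u * (3/2 * (C * (ρ * ω ρ))) := by ring
        exact le_of_mul_le_mul_left (step1.trans step2) hηu
      calc |y * (g x - g u) - v * g' u * (x - u)|
          = |y * (g x - g u - g' u * (x - u)) + (y - v) * g' u * (x - u)| := by
            ring_nf
        _ ≤ |y * (g x - g u - g' u * (x - u))| + |(y - v) * g' u * (x - u)| :=
            abs_add_le _ _
        _ = |y| * |g x - g u - g' u * (x - u)| + |y - v| * |g' u| * (x - u) := by
            rw [abs_mul, abs_mul, abs_mul, abs_of_pos hk]
        _ ≤ 3/2 * (C * (ρ * ω ρ)) + 1/2 * (C * (ρ * ω ρ)) :=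
            add_le_add hyREM hcross
        _ = 2 * (C * (ρ * ω ρ)) := by ring
        _ ≤ 5/2 * C * (ρ * ω ρ) := by linarith [hRHS0]
    · -- Case A, u < x
      push_neg at hB
      have hA2 : |v| * |g' u| * (x - u) ≤ (C * ω ρ) * (x - u) := by
        have t1 : |v| * |g' u| ≤ η u * |g' u| :=
          mul_le_mul_of_nonneg_right hv.le (abs_nonneg _)
        have t2 := h2 u hu
        have t3 : ω (η u) ≤ ω ρ :=
          hω_mono (Set.mem_Ici.mpr hηu.le) (Set.mem_Ici.mpr hρ0) hB.le
        have : |v| * |g' u| ≤ C * ω ρ := by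
          calc |v| * |g' u| ≤ η u * |g' u| := t1
            _ ≤ C * ω (η u) := t2
            _ ≤ C * ω ρ := mul_le_mul_of_nonneg_left t3 hC.le
        exact mul_le_mul_of_nonneg_right this hk.le
      have habs : |y * (g x - g u) - v * g' u * (x - u)| ≤
          |y| * |g x - g u| + |v| * |g' u| * (x - u) := by
        calc |y * (g x - g u) - v * g' u * (x - u)|
            ≤ |y * (g x - g u)| + |v * g' u * (x - u)| := abs_sub _ _
          _ = |y| * |g x - g u| + |v| * |g' u| * (x - u) := by
              rw [abs_mul, abs_mul, abs_mul, abs_of_pos hk]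
      by_cases hke : η x ≤ x - u
      · -- A1a
        have hmax : max 1 ((x - u) / η x) = (x - u) / η x :=
          max_eq_right ((one_le_div hηx).mpr hke)
        rw [hmax] at hgd
        have hA1 : |y| * |g x - g u| ≤ C * (ρ * ω ρ) := by
          calc |y| * |g x - g u| ≤ η x * (C * ((x - u) / η x) * ω (x - u)) :=
              mul_le_mul hy.le hgd (abs_nonneg _) hηx.le
            _ = C * ((x - u) * ω (x - u)) := by field_simp
            _ ≤ C * (ρ * ω ρ) := by
                apply mul_le_mul_of_nonneg_left _ hC.le
                exact mul_le_mul hkρ hωkρ hωk0 hρ0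
        calc |y * (g x - g u) - v * g' u * (x - u)|
            ≤ |y| * |g x - g u| + |v| * |g' u| * (x - u) := habs
          _ ≤ C * (ρ * ω ρ) + (C * ω ρ) * (x - u) := add_le_add hA1 hA2
          _ ≤ C * (ρ * ω ρ) + (C * ω ρ) * ρ := by
              apply add_le_add_right
              exact mul_le_mul_of_nonneg_left hkρ (mul_nonneg hC.le hωρ0)
          _ = 2 * (C * (ρ * ω ρ)) := by ring
          _ ≤ 5/2 * C * (ρ * ω ρ) := by linarith [hRHS0]
      · -- A1b
        push_neg at hke
        have hmax : max 1 ((x - u) / η x) = 1 :=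
          max_eq_left ((div_le_one hηx).mpr hke.le)
        rw [hmax, mul_one] at hgd
        have hy2 : |y| ≤ ρ + |y - v| := by
          calc |y| ≤ |v| + |y - v| := hyv
            _ ≤ ρ + |y - v| := by linarith [hv.le, hB.le]
        have h32 : |y - v| + (x - u) ≤ 3/2 * ρ := by
          have h9 : (|y - v| + (x - u))^2 ≤ (3/2 * ρ)^2 := by
            nlinarith [sq_nonneg (|y - v| - (x - u))]
          have h10 : 0 ≤ 3/2 * ρ := by linarith
          nlinarith [h9, h10, hr0, hk.le]
        have hA1 : |y| * |g x - g u| ≤ (ρ + |y - v|) * (C * ω ρ) := by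
          have hgd' : |g x - g u| ≤ C * ω ρ := by
            calc |g x - g u| ≤ C * ω (x - u) := hgd
              _ ≤ C * ω ρ := mul_le_mul_of_nonneg_left hωkρ hC.le
          apply mul_le_mul hy2 hgd' (abs_nonneg _) (by linarith [hr0])
        calc |y * (g x - g u) - v * g' u * (x - u)|
            ≤ |y| * |g x - g u| + |v| * |g' u| * (x - u) := habs
          _ ≤ (ρ + |y - v|) * (C * ω ρ) + (C * ω ρ) * (x - u) :=
              add_le_add hA1 hA2
          _ = (C * ω ρ) * (ρ + (|y - v| + (x - u))) := by ring
          _ ≤ (C * ω ρ) * (ρ + 3/2 * ρ) := by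
              apply mul_le_mul_of_nonneg_left (by linarith)
                (mul_nonneg hC.le hωρ0)
          _ = 5/2 * C * (ρ * ω ρ) := by ring

set_option maxHeartbeats 1600000 in
theorem semiconvex_product (η ω g g' : ℝ → ℝ) (C : ℝ) (hC : 0 < C)
    (hη_pos : ∀ x > (0:ℝ), 0 < η x)
    (hη_conc : ConcaveOn ℝ (Set.Ioi 0) η)
    (hω_nonneg : ∀ x ≥ (0:ℝ), 0 ≤ ω x)
    (hω_mono : MonotoneOn ω (Set.Ici 0))
    (hω_lim : Filter.Tendsto ω (nhdsWithin 0 (Set.Ioi 0)) (nhds 0))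
    (hω_conc : ConcaveOn ℝ (Set.Ici 0) ω)
    (hg : ∀ x > (0:ℝ), HasDerivAt g (g' x) x)
    (h1 : ∀ x > (0:ℝ), ∀ h > (0:ℝ),
      |g (x + h) - g x| ≤ C * max 1 (h / η (x + h)) * ω h)
    (h2 : ∀ x > (0:ℝ), η x * |g' x| ≤ C * ω (η x))
    (h3 : ∀ x > (0:ℝ), ∀ h > (0:ℝ), η x * |g' x - g' (x + h)| ≤ C * ω h) :
    SemiconvexWith (fun t => 5 * C * ω t)
      {p : EuclideanSpace ℝ (Fin 2) | 0 < p 0 ∧ |p 1| < η (p 0)}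
      (fun p => g (p 0) * p 1) ∧
    SemiconvexWith (fun t => 5 * C * ω t)
      {p : EuclideanSpace ℝ (Fin 2) | 0 < p 0 ∧ |p 1| < η (p 0)}
      (fun p => -(g (p 0) * p 1)) := by
  have hη_mono : ∀ s t : ℝ, 0 < s → s ≤ t → η s ≤ η t := conc_mono hη_pos hη_conc
  have hratio : ∀ s t : ℝ, 0 < s → s ≤ t → s * ω t ≤ t * ω s :=
    ratio_aux hω_nonneg hω_conc
  have MAIN : ∀ p ∈ {p : EuclideanSpace ℝ (Fin 2) | 0 < p 0 ∧ |p 1| < η (p 0)},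
      ∀ q ∈ {p : EuclideanSpace ℝ (Fin 2) | 0 < p 0 ∧ |p 1| < η (p 0)},
      ∀ l ∈ Set.Icc (0:ℝ) 1,
      |l * (g (p 0) * p 1) + (1 - l) * (g (q 0) * q 1) -
        g ((l • p + (1 - l) • q) 0) * ((l • p + (1 - l) • q) 1)| ≤
      l * (1 - l) * ‖p - q‖ * (5 * C * ω ‖p - q‖) := by
    intro p hp q hq l hl
    obtain ⟨hp1, hp2⟩ := hp
    obtain ⟨hq1, hq2⟩ := hq
    obtain ⟨hl0, hl1⟩ := hl
    have hc0 : (l • p + (1 - l) • q) 0 = l * p 0 + (1 - l) * q 0 := rfl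
    have hc1 : (l • p + (1 - l) • q) 1 = l * p 1 + (1 - l) * q 1 := rfl
    rcases eq_or_lt_of_le hl0 with h0 | h0
    · rw [← h0]
      norm_num
    rcases eq_or_lt_of_le hl1 with h1' | h1'
    · rw [h1']
      norm_num
    have h1l : 0 < 1 - l := by linarith
    have hu : 0 < l * p 0 + (1 - l) * q 0 := by
      nlinarith [mul_pos h0 hp1, mul_pos h1l hq1]
    have hva : |l * p 1 + (1 - l) * q 1| < η (l * p 0 + (1 - l) * q 0) := by
      have t1 : |l * p 1 + (1 - l) * q 1| ≤ l * |p 1| + (1 - l) * |q 1| := by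
        calc |l * p 1 + (1 - l) * q 1| ≤ |l * p 1| + |(1 - l) * q 1| := abs_add_le _ _
          _ = l * |p 1| + (1 - l) * |q 1| := by
              rw [abs_mul, abs_mul, abs_of_pos h0, abs_of_pos h1l]
      have t2 : l * |p 1| + (1 - l) * |q 1| < l * η (p 0) + (1 - l) * η (q 0) :=
        add_lt_add (mul_lt_mul_of_pos_left hp2 h0) (mul_lt_mul_of_pos_left hq2 h1l)
      have t3 : l * η (p 0) + (1 - l) * η (q 0) ≤ η (l * p 0 + (1 - l) * q 0) := by
        have := hη_conc.2 (Set.mem_Ioi.mpr hp1) (Set.mem_Ioi.mpr hq1)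
          hl0 (le_of_lt h1l) (by ring)
        simpa [smul_eq_mul] using this
      linarith
    have hD0 : 0 ≤ ‖p - q‖ := norm_nonneg _
    have hDeq : ‖p - q‖ = Real.sqrt ((p 0 - q 0)^2 + (p 1 - q 1)^2) := by
      rw [EuclideanSpace.norm_eq]
      congr 1
      rw [Fin.sum_univ_two]
      have e0 : (p - q) 0 = p 0 - q 0 := rfl
      have e1 : (p - q) 1 = p 1 - q 1 := rfl
      rw [e0, e1, Real.norm_eq_abs, Real.norm_eq_abs, sq_abs, sq_abs]
    have hK1 := key_taylor η ω g g' C hC hη_pos hη_mono hω_nonneg hω_mono hratio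
      hg h1 h2 h3 (l * p 0 + (1 - l) * q 0) (p 0) (l * p 1 + (1 - l) * q 1) (p 1)
      hu hp1 hva hp2
    have hK2 := key_taylor η ω g g' C hC hη_pos hη_mono hω_nonneg hω_mono hratio
      hg h1 h2 h3 (l * p 0 + (1 - l) * q 0) (q 0) (l * p 1 + (1 - l) * q 1) (q 1)
      hu hq1 hva hq2
    have hs1 : Real.sqrt ((p 0 - (l * p 0 + (1 - l) * q 0))^2 +
        (p 1 - (l * p 1 + (1 - l) * q 1))^2) = (1 - l) * ‖p - q‖ := by
      rw [hDeq,
        show (p 0 - (l * p 0 + (1 - l) * q 0))^2 +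
          (p 1 - (l * p 1 + (1 - l) * q 1))^2 =
          (1 - l)^2 * ((p 0 - q 0)^2 + (p 1 - q 1)^2) by ring,
        Real.sqrt_mul (sq_nonneg _), Real.sqrt_sq h1l.le]
    have hs2 : Real.sqrt ((q 0 - (l * p 0 + (1 - l) * q 0))^2 +
        (q 1 - (l * p 1 + (1 - l) * q 1))^2) = l * ‖p - q‖ := by
      rw [hDeq,
        show (q 0 - (l * p 0 + (1 - l) * q 0))^2 +
          (q 1 - (l * p 1 + (1 - l) * q 1))^2 =
          l^2 * ((p 0 - q 0)^2 + (p 1 - q 1)^2) by ring,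
        Real.sqrt_mul (sq_nonneg _), Real.sqrt_sq h0.le]
    rw [hs1] at hK1
    rw [hs2] at hK2
    rw [hc0, hc1]
    have hid : l * (g (p 0) * p 1) + (1 - l) * (g (q 0) * q 1) -
        g (l * p 0 + (1 - l) * q 0) * (l * p 1 + (1 - l) * q 1) =
        l * (p 1 * (g (p 0) - g (l * p 0 + (1 - l) * q 0)) -
          (l * p 1 + (1 - l) * q 1) * g' (l * p 0 + (1 - l) * q 0) *
            (p 0 - (l * p 0 + (1 - l) * q 0))) +
        (1 - l) * (q 1 * (g (q 0) - g (l * p 0 + (1 - l) * q 0)) -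
          (l * p 1 + (1 - l) * q 1) * g' (l * p 0 + (1 - l) * q 0) *
            (q 0 - (l * p 0 + (1 - l) * q 0))) := by ring
    rw [hid]
    have hm1 : (1 - l) * ‖p - q‖ ≤ ‖p - q‖ := by
      calc (1 - l) * ‖p - q‖ ≤ 1 * ‖p - q‖ :=
            mul_le_mul_of_nonneg_right (by linarith) hD0
        _ = ‖p - q‖ := one_mul _
    have hm2 : l * ‖p - q‖ ≤ ‖p - q‖ := by
      calc l * ‖p - q‖ ≤ 1 * ‖p - q‖ :=
            mul_le_mul_of_nonneg_right hl1 hD0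
        _ = ‖p - q‖ := one_mul _
    have m1 : ω ((1 - l) * ‖p - q‖) ≤ ω ‖p - q‖ :=
      hω_mono (Set.mem_Ici.mpr (mul_nonneg h1l.le hD0)) (Set.mem_Ici.mpr hD0) hm1
    have m2 : ω (l * ‖p - q‖) ≤ ω ‖p - q‖ :=
      hω_mono (Set.mem_Ici.mpr (mul_nonneg h0.le hD0)) (Set.mem_Ici.mpr hD0) hm2
    have c0 : 0 ≤ 5/2 * C * (l * ((1 - l) * ‖p - q‖)) :=
      mul_nonneg (mul_nonneg (by norm_num) hC.le)
        (mul_nonneg h0.le (mul_nonneg h1l.le hD0))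
    calc |l * (p 1 * (g (p 0) - g (l * p 0 + (1 - l) * q 0)) -
          (l * p 1 + (1 - l) * q 1) * g' (l * p 0 + (1 - l) * q 0) *
            (p 0 - (l * p 0 + (1 - l) * q 0))) +
        (1 - l) * (q 1 * (g (q 0) - g (l * p 0 + (1 - l) * q 0)) -
          (l * p 1 + (1 - l) * q 1) * g' (l * p 0 + (1 - l) * q 0) *
            (q 0 - (l * p 0 + (1 - l) * q 0)))|
        ≤ |l * (p 1 * (g (p 0) - g (l * p 0 + (1 - l) * q 0)) -
          (l * p 1 + (1 - l) * q 1) * g' (l * p 0 + (1 - l) * q 0) *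
            (p 0 - (l * p 0 + (1 - l) * q 0)))| +
          |(1 - l) * (q 1 * (g (q 0) - g (l * p 0 + (1 - l) * q 0)) -
          (l * p 1 + (1 - l) * q 1) * g' (l * p 0 + (1 - l) * q 0) *
            (q 0 - (l * p 0 + (1 - l) * q 0)))| := abs_add_le _ _
      _ = l * |p 1 * (g (p 0) - g (l * p 0 + (1 - l) * q 0)) -
          (l * p 1 + (1 - l) * q 1) * g' (l * p 0 + (1 - l) * q 0) *
            (p 0 - (l * p 0 + (1 - l) * q 0))| +
          (1 - l) * |q 1 * (g (q 0) - g (l * p 0 + (1 - l) * q 0)) -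
          (l * p 1 + (1 - l) * q 1) * g' (l * p 0 + (1 - l) * q 0) *
            (q 0 - (l * p 0 + (1 - l) * q 0))| := by
          rw [abs_mul, abs_mul, abs_of_pos h0, abs_of_pos h1l]
      _ ≤ l * (5/2 * C * (((1 - l) * ‖p - q‖) * ω ((1 - l) * ‖p - q‖))) +
          (1 - l) * (5/2 * C * ((l * ‖p - q‖) * ω (l * ‖p - q‖))) :=
          add_le_add (mul_le_mul_of_nonneg_left hK1 h0.le)
            (mul_le_mul_of_nonneg_left hK2 h1l.le)
      _ = (5/2 * C * (l * ((1 - l) * ‖p - q‖))) * ω ((1 - l) * ‖p - q‖) +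
          (5/2 * C * (l * ((1 - l) * ‖p - q‖))) * ω (l * ‖p - q‖) := by ring
      _ ≤ (5/2 * C * (l * ((1 - l) * ‖p - q‖))) * ω ‖p - q‖ +
          (5/2 * C * (l * ((1 - l) * ‖p - q‖))) * ω ‖p - q‖ :=
          add_le_add (mul_le_mul_of_nonneg_left m1 c0)
            (mul_le_mul_of_nonneg_left m2 c0)
      _ = l * (1 - l) * ‖p - q‖ * (5 * C * ω ‖p - q‖) := by ring
  constructor
  · intro p hp q hq l hl
    have h := MAIN p hp q hq l hl
    have h' := abs_le.mp h
    show g ((l • p + (1 - l) • q) 0) * ((l • p + (1 - l) • q) 1) ≤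
      l * (g (p 0) * p 1) + (1 - l) * (g (q 0) * q 1) +
        l * (1 - l) * ‖p - q‖ * (5 * C * ω ‖p - q‖)
    linarith [h'.1]
  · intro p hp q hq l hl
    have h := MAIN p hp q hq l hl
    have h' := abs_le.mp h
    show -(g ((l • p + (1 - l) • q) 0) * ((l • p + (1 - l) • q) 1)) ≤
      l * -(g (p 0) * p 1) + (1 - l) * -(g (q 0) * q 1) +
        l * (1 - l) * ‖p - q‖ * (5 * C * ω ‖p - q‖)
    linarith [h'.2]
end

section
/- Let G⊂ℝⁿ be an unbounded open convex set and let L:ℝⁿ→ℝᵐ be a linear surjection with rec(G)∩L⁻¹({0}) ⊂ rec(G)∩(−rec(G)). Then rec(L(G)) = L(rec(G)). -/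
open Filter Topology

/-- The recession cone of a set. -/
def recCone {E : Type*} [AddCommGroup E] [Module ℝ E] (A : Set E) : Set E :=
  {x | ∀ a ∈ A, ∀ l : ℝ, 0 ≤ l → a + l • x ∈ A}

lemma mem_recCone_of_ray {E : Type*} [NormedAddCommGroup E] [NormedSpace ℝ E]
    {C : Set E} (hC : IsClosed C) (hconv : Convex ℝ C) {a : E} (ha : a ∈ C)
    {x : E} (hx : ∀ l : ℝ, 0 ≤ l → a + l • x ∈ C) : x ∈ recCone C := by
  intro b hb l hl
  have hden : ∀ k : ℕ, (0:ℝ) < l + k + 1 := fun k => by positivity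
  have hlim : Tendsto (fun k : ℕ => b + (l / (l + k + 1)) • (a - b) + l • x) atTop
      (𝓝 (b + l • x)) := by
    have h1 : Tendsto (fun k : ℕ => (l + (k:ℝ) + 1)) atTop atTop := by
      have : Tendsto (fun k : ℕ => ((k:ℝ) + (l + 1))) atTop atTop :=
        tendsto_atTop_add_const_right _ _ tendsto_natCast_atTop_atTop
      convert this using 2 with k; ring
    have h2 : Tendsto (fun k : ℕ => l / (l + k + 1)) atTop (𝓝 0) := by
      simpa [div_eq_mul_inv] using h1.inv_tendsto_atTop.const_mul l
    have h3 : Tendsto (fun k : ℕ => b + (l / (l + k + 1)) • (a - b) + l • x) atTop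
        (𝓝 (b + (0:ℝ) • (a - b) + l • x)) :=
      ((tendsto_const_nhds.add (h2.smul_const (a - b))).add tendsto_const_nhds)
    simpa using h3
  refine hC.mem_of_tendsto hlim (Filter.Eventually.of_forall fun k => ?_)
  have hε0 : (0:ℝ) ≤ l / (l + k + 1) := div_nonneg hl (hden k).le
  have hε1 : l / (l + k + 1) ≤ 1 := by
    rw [div_le_one (hden k)]; push_cast; linarith [Nat.cast_nonneg (α := ℝ) k]
  have hεmul : (l / (l + k + 1)) * (l + k + 1) = l := div_mul_cancel₀ _ (hden k).ne'
  have hmem := hconv hb (hx (l + k + 1) (hden k).le) (by linarith : (0:ℝ) ≤ 1 - l / (l + k + 1))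
    hε0 (by ring)
  have heq : (1 - l / (l + k + 1)) • b + (l / (l + k + 1)) • (a + (l + k + 1) • x)
      = b + (l / (l + k + 1)) • (a - b) + l • x := by
    rw [smul_add, smul_smul, hεmul]
    module
  rwa [heq] at hmem

lemma recCone_closure_subset {E : Type*} [NormedAddCommGroup E] [NormedSpace ℝ E]
    {G : Set E} (hopen : IsOpen G) (hconv : Convex ℝ G) {x : E}
    (hx : x ∈ recCone (closure G)) : x ∈ recCone G := by
  intro b hb l hl
  have h2 : b + (2 * l) • x ∈ closure G :=
    hx b (subset_closure hb) (2 * l) (by linarith)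
  have hmem := hconv.combo_interior_closure_mem_interior
    (x := b) (y := b + (2 * l) • x) (by rwa [hopen.interior_eq]) h2
    (a := (1:ℝ)/2) (b := (1:ℝ)/2) (by norm_num) (by norm_num) (by norm_num)
  rw [hopen.interior_eq] at hmem
  have heq : ((1:ℝ)/2) • b + ((1:ℝ)/2) • (b + (2 * l) • x) = b + l • x := by
    match_scalars <;> ring
  rwa [heq] at hmem

set_option maxHeartbeats 1000000 in
lemma main_seq {n m : ℕ} {D : Set (EuclideanSpace ℝ (Fin n))}
    (hD : IsClosed D) (hDconv : Convex ℝ D)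
    (L : EuclideanSpace ℝ (Fin n) →ₗ[ℝ] EuclideanSpace ℝ (Fin m))
    (hrec : ∀ x ∈ recCone D, L x = 0 → x = 0)
    {p : EuclideanSpace ℝ (Fin n)} (hp : p ∈ D)
    {y : EuclideanSpace ℝ (Fin m)}
    (hseq : ∀ k : ℕ, ∃ c ∈ D, L c = L p + (k : ℝ) • y) :
    ∃ x ∈ recCone D, L x = y := by
  by_cases hy : y = 0
  · refine ⟨0, fun a ha l hl => by simpa using ha, by simp [hy]⟩
  choose c hcD hcL using hseq
  have hy' : (0:ℝ) < ‖y‖ := norm_pos_iff.mpr hy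
  set L' : EuclideanSpace ℝ (Fin n) →L[ℝ] EuclideanSpace ℝ (Fin m) :=
    LinearMap.toContinuousLinearMap L with hL'def
  have hL'coe : ∀ v, L' v = L v := fun v => rfl
  have hLy : ∀ k : ℕ, L (c k - p) = (k : ℝ) • y := fun k => by
    rw [map_sub, hcL k]; abel
  set N : ℕ → ℝ := fun k => ‖c (k + 1) - p‖ with hNdef
  have hNpos : ∀ k, 0 < N k := by
    intro k
    rw [norm_pos_iff, sub_ne_zero]
    intro h0
    have := hLy (k + 1)
    rw [← h0, sub_self, map_zero] at this
    have h2 : ((k:ℝ) + 1) • y = 0 := by push_cast at this; exact this.symm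
    rcases smul_eq_zero.mp h2 with h | h
    · nlinarith [Nat.cast_nonneg (α := ℝ) k]
    · exact hy h
  have hbd : ∀ k : ℕ, ((k:ℝ) + 1) * ‖y‖ ≤ ‖L'‖ * N k := by
    intro k
    have h1 : ‖L (c (k+1) - p)‖ ≤ ‖L'‖ * N k := by
      rw [← hL'coe]; exact L'.le_opNorm _
    rw [hLy (k+1), norm_smul, Real.norm_eq_abs] at h1
    push_cast at h1
    rwa [abs_of_nonneg (by positivity)] at h1
  have hC0 : (0:ℝ) < ‖L'‖ := by nlinarith [hbd 0, hNpos 0, norm_nonneg L']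
  set d : ℕ → EuclideanSpace ℝ (Fin n) := fun k => (N k)⁻¹ • (c (k + 1) - p) with hddef
  have hdsph : ∀ k, d k ∈ Metric.sphere (0 : EuclideanSpace ℝ (Fin n)) 1 := by
    intro k
    rw [mem_sphere_zero_iff_norm, hddef]
    rw [norm_smul, norm_inv, norm_norm]
    exact inv_mul_cancel₀ (hNpos k).ne'
  set r : ℕ → ℝ := fun k => ((k:ℝ) + 1) / N k with hrdef
  have hr0 : ∀ k, 0 ≤ r k := fun k => by positivity
  have hrbd : ∀ k, r k ≤ ‖L'‖ / ‖y‖ := by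
    intro k
    rw [hrdef, div_le_div_iff₀ (hNpos k) hy']
    nlinarith [hbd k]
  obtain ⟨dd, hddsph, φ, hφ, hdlim⟩ :=
    (isCompact_sphere (0 : EuclideanSpace ℝ (Fin n)) 1).tendsto_subseq hdsph
  obtain ⟨t, ht, ψ, hψ, hrlim⟩ :=
    (isCompact_Icc (a := (0:ℝ)) (b := ‖L'‖ / ‖y‖)).tendsto_subseq
      (x := fun k => r (φ k)) (fun k => ⟨hr0 _, hrbd _⟩)
  set σ : ℕ → ℕ := fun k => φ (ψ k) with hσdef
  have hσmono : StrictMono σ := hφ.comp hψ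
  have hdσ : Tendsto (fun k => d (σ k)) atTop (𝓝 dd) := by
    have := hdlim.comp hψ.tendsto_atTop
    exact this.congr fun k => rfl
  have hrσ : Tendsto (fun k => r (σ k)) atTop (𝓝 t) := hrlim.congr fun k => rfl
  -- N (σ k) → ∞
  have hNlow : ∀ k : ℕ, ((k:ℝ) + 1) * ‖y‖ / ‖L'‖ ≤ N (σ k) := by
    intro k
    have h1 : ((σ k : ℝ) + 1) * ‖y‖ ≤ ‖L'‖ * N (σ k) := hbd (σ k)
    have h2 : (k:ℝ) ≤ (σ k : ℝ) := by exact_mod_cast hσmono.le_apply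
    rw [div_le_iff₀ hC0]
    nlinarith
  have hNtop : Tendsto (fun k => N (σ k)) atTop atTop := by
    refine tendsto_atTop_mono hNlow ?_
    have h1 : Tendsto (fun k : ℕ => ((k:ℝ) + 1)) atTop atTop :=
      tendsto_atTop_add_const_right _ _ tendsto_natCast_atTop_atTop
    have h2 : Tendsto (fun k : ℕ => ((k:ℝ) + 1) * (‖y‖ / ‖L'‖)) atTop atTop :=
      h1.atTop_mul_const (by positivity)
    convert h2 using 2 with k; ring
  -- dd ∈ recCone D
  have hddrec : dd ∈ recCone D := by
    refine mem_recCone_of_ray hD hDconv hp fun l hl => ?_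
    have hlim2 : Tendsto (fun k => p + l • d (σ k)) atTop (𝓝 (p + l • dd)) :=
      tendsto_const_nhds.add (hdσ.const_smul l)
    refine hD.mem_of_tendsto hlim2 ?_
    filter_upwards [hNtop.eventually_ge_atTop l] with k hk
    set j := σ k
    set ε := l / N j with hεdef
    have hε0 : 0 ≤ ε := div_nonneg hl (hNpos j).le
    have hε1 : ε ≤ 1 := by rw [hεdef, div_le_one (hNpos j)]; exact hk
    have hmem := hDconv hp (hcD (j + 1)) (by linarith : (0:ℝ) ≤ 1 - ε) hε0 (by ring)
    have heq : (1 - ε) • p + ε • c (j + 1) = p + l • d j := by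
      have h3 : l • d j = ε • (c (j + 1) - p) := by
        rw [hddef]
        simp only [smul_smul]
        rw [hεdef, div_eq_mul_inv]
      rw [h3]; module
    rwa [heq] at hmem
  -- L dd = t • y
  have hLd : ∀ k, L' (d k) = r k • y := by
    intro k
    rw [hddef]
    simp only [map_smul, hL'coe]
    rw [hLy (k + 1), smul_smul, hrdef]
    push_cast
    rw [inv_mul_eq_div]
  have hLdd : L dd = t • y := by
    have h1 : Tendsto (fun k => L' (d (σ k))) atTop (𝓝 (L' dd)) :=
      (L'.continuous.tendsto _).comp hdσ
    have h2 : Tendsto (fun k => r (σ k) • y) atTop (𝓝 (t • y)) := hrσ.smul_const y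
    have h3 : (fun k => L' (d (σ k))) = fun k => r (σ k) • y := funext fun k => hLd (σ k)
    rw [h3] at h1
    rw [← hL'coe]
    exact tendsto_nhds_unique h1 h2
  have ht0 : 0 < t := by
    rcases ht.1.eq_or_lt with h | h
    · exfalso
      have : L dd = 0 := by rw [hLdd, ← h, zero_smul]
      have hz := hrec dd hddrec this
      rw [mem_sphere_zero_iff_norm] at hddsph
      rw [hz, norm_zero] at hddsph
      norm_num at hddsph
    · exact h
  refine ⟨t⁻¹ • dd, ?_, ?_⟩
  · intro b hb l hl
    have := hddrec b hb (l * t⁻¹) (by positivity)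
    rwa [← smul_smul] at this
  · rw [map_smul, hLdd, smul_smul, inv_mul_cancel₀ ht0.ne', one_smul]

theorem rec_image {n m : ℕ}
    (G : Set (EuclideanSpace ℝ (Fin n)))
    (hopen : IsOpen G) (hconv : Convex ℝ G)
    (hunb : ¬ Bornology.IsBounded G)
    (L : EuclideanSpace ℝ (Fin n) →ₗ[ℝ] EuclideanSpace ℝ (Fin m))
    (hsurj : Function.Surjective L)
    (hker : recCone G ∩ L ⁻¹' {0} ⊆ recCone G ∩ (-recCone G)) :
    recCone (L '' G) = L '' recCone G := by
  obtain ⟨a, ha⟩ : G.Nonempty := by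
    rw [Set.nonempty_iff_ne_empty]
    rintro rfl
    exact hunb Bornology.isBounded_empty
  -- basic closure properties of recCone G
  have hadd : ∀ x ∈ recCone G, ∀ z ∈ recCone G, x + z ∈ recCone G := by
    intro x hx z hz b hb l hl
    have : b + l • x + l • z ∈ G := hz _ (hx b hb l hl) l hl
    rwa [smul_add, ← add_assoc]
  have hsmul : ∀ x ∈ recCone G, ∀ c : ℝ, 0 ≤ c → c • x ∈ recCone G := by
    intro x hx c hc b hb l hl
    have : b + (l * c) • x ∈ G := hx b hb (l * c) (mul_nonneg hl hc)
    rwa [mul_smul] at this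
  have hzero : (0 : EuclideanSpace ℝ (Fin n)) ∈ recCone G := by
    intro b hb l hl; simpa using hb
  have hneg : ∀ x ∈ recCone G ∩ L ⁻¹' {0}, -x ∈ recCone G ∩ L ⁻¹' {0} := by
    intro x hx
    obtain ⟨h1, h2⟩ := hker hx
    refine ⟨h2, ?_⟩
    simp only [Set.mem_preimage, Set.mem_singleton_iff, map_neg]
    have : L x = 0 := hx.2
    rw [this, neg_zero]
  -- the lineality subspace
  set S : Submodule ℝ (EuclideanSpace ℝ (Fin n)) :=
    { carrier := recCone G ∩ L ⁻¹' {0}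
      add_mem' := by
        rintro x z ⟨hx1, hx2⟩ ⟨hz1, hz2⟩
        refine ⟨hadd x hx1 z hz1, ?_⟩
        simp only [Set.mem_preimage, Set.mem_singleton_iff, map_add] at *
        rw [hx2, hz2, add_zero]
      zero_mem' := ⟨hzero, by simp⟩
      smul_mem' := by
        intro t x hx
        rcases le_or_gt 0 t with htc | htc
        · refine ⟨hsmul x hx.1 t htc, ?_⟩
          simp only [Set.mem_preimage, Set.mem_singleton_iff, map_smul] at *
          rw [hx.2, smul_zero]
        · have hnx := hneg x hx
          have heq : t • x = (-t) • (-x) := by rw [smul_neg, neg_smul, neg_neg]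
          rw [heq]
          refine ⟨hsmul (-x) hnx.1 (-t) (by linarith), ?_⟩
          simp only [Set.mem_preimage, Set.mem_singleton_iff, map_smul] at *
          rw [hnx.2, smul_zero] } with hSdef
  have hSmem : ∀ x, x ∈ S ↔ x ∈ recCone G ∩ L ⁻¹' {0} := fun x => Iff.rfl
  -- projection away from S stays in G
  have hGproj : ∀ g ∈ G, (g - (S.orthogonalProjection g : EuclideanSpace ℝ (Fin n))) ∈ G ∧
      (g - (S.orthogonalProjection g : EuclideanSpace ℝ (Fin n))) ∈ Sᗮ ∧
      L (g - (S.orthogonalProjection g : EuclideanSpace ℝ (Fin n))) = L g := by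
    intro g hg
    set s : EuclideanSpace ℝ (Fin n) := (S.orthogonalProjection g : EuclideanSpace ℝ (Fin n))
      with hsdef
    have hsS : s ∈ S := SetLike.coe_mem _
    have hsrec : s ∈ recCone G ∩ L ⁻¹' {0} := (hSmem s).mp hsS
    have hnegs : -s ∈ recCone G := (hker hsrec).2
    refine ⟨?_, Submodule.sub_starProjection_mem_orthogonal (K := S) g, ?_⟩
    · have := hnegs g hg 1 zero_le_one
      rwa [one_smul, ← sub_eq_add_neg] at this
    · have hLs : L s = 0 := hsrec.2
      rw [map_sub, hLs, sub_zero]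
  -- the reduced set D
  set D : Set (EuclideanSpace ℝ (Fin n)) := closure G ∩ (Sᗮ : Set _) with hDdef
  have hDclosed : IsClosed D := isClosed_closure.inter (Submodule.closed_of_finiteDimensional _)
  have hDconv : Convex ℝ D := hconv.closure.inter (Sᗮ.convex)
  obtain ⟨hpG, hpSo, hpL⟩ := hGproj a ha
  set p : EuclideanSpace ℝ (Fin n) := a - (S.orthogonalProjection a : EuclideanSpace ℝ (Fin n))
    with hpdef
  have hpD : p ∈ D := ⟨subset_closure hpG, hpSo⟩
  -- rays from p in D give recession directions of G
  have hrayG : ∀ x : EuclideanSpace ℝ (Fin n),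
      (∀ l : ℝ, 0 ≤ l → p + l • x ∈ D) → x ∈ recCone G := by
    intro x hx
    refine recCone_closure_subset hopen hconv ?_
    exact mem_recCone_of_ray isClosed_closure hconv.closure (subset_closure hpG)
      (fun l hl => (hx l hl).1)
  have hrecD : ∀ x ∈ recCone D, L x = 0 → x = 0 := by
    intro x hx hLx
    have hray : ∀ l : ℝ, 0 ≤ l → p + l • x ∈ D := fun l hl => hx p hpD l hl
    have hxSo : x ∈ Sᗮ := by
      have h1 : p + (1:ℝ) • x ∈ Sᗮ := (hray 1 zero_le_one).2
      rw [one_smul] at h1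
      have := Sᗮ.sub_mem h1 hpSo
      rwa [add_sub_cancel_left] at this
    have hxG : x ∈ recCone G := hrayG x hray
    have hxS : x ∈ S := (hSmem x).mpr ⟨hxG, by simpa using hLx⟩
    have := (Submodule.mem_orthogonal S x).mp hxSo x hxS
    exact inner_self_eq_zero.mp this
  apply Set.Subset.antisymm
  · -- hard direction
    intro y hy
    have hseq : ∀ k : ℕ, ∃ c ∈ D, L c = L p + (k : ℝ) • y := by
      intro k
      have hmem : L a + (k : ℝ) • y ∈ L '' G :=
        hy (L a) ⟨a, ha, rfl⟩ (k : ℝ) (Nat.cast_nonneg k)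
      obtain ⟨g, hg, hLg⟩ := hmem
      obtain ⟨hgG, hgSo, hgL⟩ := hGproj g hg
      refine ⟨g - (S.orthogonalProjection g : EuclideanSpace ℝ (Fin n)),
        ⟨subset_closure hgG, hgSo⟩, ?_⟩
      rw [hgL, hLg, hpL]
    obtain ⟨x, hxD, hLx⟩ := main_seq hDclosed hDconv L hrecD hpD hseq
    exact ⟨x, hrayG x (fun l hl => hxD p hpD l hl), hLx⟩
  · rintro _ ⟨x, hx, rfl⟩ b ⟨g, hg, rfl⟩ l hl
    exact ⟨g + l • x, hx g hg l hl, by rw [map_add, map_smul]⟩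
end

section
/- Let n≥2 and let G⊂ℝⁿ be an open convex set with 1 ≤ dim(span(rec(G))) < n. Then there exists a linear surjection L:ℝⁿ→ℝ² such that (1,0) ∈ rec(L(G)) = L(rec(G)) ⊂ span{(1,0)}. -/
open Filter Topology Metric

local notation "⟪" x ", " y "⟫" => @inner ℝ _ _ x y

section Basic

variable {E : Type*} [NormedAddCommGroup E] [NormedSpace ℝ E] {A D G : Set E}

lemma recCone_zero_mem (A : Set E) : (0 : E) ∈ recCone A := by
  intro a ha l hl; simpa using ha

lemma recCone_smul_mem {x : E} {c : ℝ} (hx : x ∈ recCone A) (hc : 0 ≤ c) :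
    c • x ∈ recCone A := by
  intro a ha l hl
  have := hx a ha (l * c) (mul_nonneg hl hc)
  simpa [mul_smul] using this

lemma recCone_add_mem {x y : E} (hx : x ∈ recCone A) (hy : y ∈ recCone A) :
    x + y ∈ recCone A := by
  intro a ha l hl
  have h1 := hx a ha l hl
  have h2 := hy (a + l • x) h1 l hl
  simpa [smul_add, add_assoc] using h2

lemma recCone_convex (A : Set E) : Convex ℝ (recCone A) := by
  intro x hx y hy a b ha hb hab
  by_cases h : a = 0
  · subst h; simp only [zero_add] at hab; subst hab; simpa using recCone_smul_mem hy hb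
  · exact recCone_add_mem (recCone_smul_mem hx ha) (recCone_smul_mem hy hb)

lemma recCone_isClosed (hD : IsClosed D) : IsClosed (recCone D) := by
  have h : recCone D = ⋂ (a : D), ⋂ (l : {l : ℝ // 0 ≤ l}),
      (fun x : E => (a : E) + (l : ℝ) • x) ⁻¹' D := by
    ext x
    simp only [recCone, Set.mem_setOf_eq, Set.mem_iInter, Set.mem_preimage, Subtype.forall]
  rw [h]
  exact isClosed_iInter fun a => isClosed_iInter fun l =>
    hD.preimage (continuous_const.add (continuous_id.const_smul _))

lemma mem_recCone_of_basepoint (hD : IsClosed D) (hconv : Convex ℝ D) {b x : E}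
    (hb : b ∈ D) (h : ∀ l : ℝ, 0 ≤ l → b + l • x ∈ D) : x ∈ recCone D := by
  intro a ha l hl
  have key : Tendsto (fun k : ℕ => a + (l / ((k : ℝ) + 1)) • (b - a) + l • x) atTop
      (𝓝 (a + l • x)) := by
    have h0 : Tendsto (fun k : ℕ => l / ((k : ℝ) + 1)) atTop (𝓝 0) :=
      Tendsto.div_atTop tendsto_const_nhds
        (tendsto_atTop_add_const_right atTop 1 tendsto_natCast_atTop_atTop)
    have h1 := ((h0.smul_const (b - a)).const_add a).add_const (l • x)
    simpa using h1
  have mem : ∀ᶠ k : ℕ in atTop, a + (l / ((k : ℝ) + 1)) • (b - a) + l • x ∈ D := by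
    filter_upwards [eventually_ge_atTop (Nat.ceil l)] with k hk
    set θ : ℝ := l / ((k : ℝ) + 1) with hθdef
    have hk1 : (0:ℝ) < (k : ℝ) + 1 := by positivity
    have hθ0 : 0 ≤ θ := div_nonneg hl hk1.le
    have hθ1 : θ ≤ 1 := by
      rw [div_le_one hk1]
      calc l ≤ (Nat.ceil l : ℝ) := Nat.le_ceil l
        _ ≤ (k : ℝ) := by exact_mod_cast hk
        _ ≤ (k : ℝ) + 1 := by linarith
    have hmem := hconv ha (h ((k : ℝ) + 1) hk1.le) (by linarith : (0:ℝ) ≤ 1 - θ) hθ0 (by ring)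
    have heq : (1 - θ) • a + θ • (b + ((k : ℝ) + 1) • x) = a + θ • (b - a) + l • x := by
      have hll : θ * ((k : ℝ) + 1) = l := div_mul_cancel₀ l hk1.ne'
      rw [smul_add, smul_smul, hll, sub_smul, one_smul, smul_sub]
      abel
    rw [heq] at hmem
    exact hmem
  have := mem_closure_of_tendsto key mem
  rwa [hD.closure_eq] at this

lemma recCone_closure_eq (hopen : IsOpen G) (hconv : Convex ℝ G) :
    recCone (closure G) = recCone G := by
  ext x
  constructor
  · intro hx a ha l hl
    have hc : a + (l + 1) • x ∈ closure G := hx a (subset_closure ha) (l + 1) (by linarith)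
    have haG : a ∈ interior G := by rwa [hopen.interior_eq]
    have h1 : (0:ℝ) < 1 / (l + 1) := by positivity
    have h2 : (0:ℝ) ≤ l / (l + 1) := by positivity
    have h3 : 1 / (l + 1) + l / (l + 1) = 1 := by
      rw [← add_div, add_comm, div_self (by positivity : (l + 1 : ℝ) ≠ 0)]
    have hmem := hconv.combo_interior_closure_mem_interior haG hc h1 h2 h3
    have heq : (1 / (l + 1)) • a + (l / (l + 1)) • (a + (l + 1) • x) = a + l • x := by
      have hll : l / (l + 1) * (l + 1) = l := by field_simp
      rw [smul_add, smul_smul, hll, ← add_assoc, ← add_smul, h3, one_smul]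
    rw [heq] at hmem
    rwa [hopen.interior_eq] at hmem
  · intro hx a ha l hl
    have : (fun y : E => y + l • x) a ∈ closure G :=
      map_mem_closure (f := fun y : E => y + l • x)
        (continuous_id.add continuous_const) ha (fun y hy => hx y hy l hl)
    exact this

end Basic

section Dual

variable {E : Type*} [NormedAddCommGroup E] [InnerProductSpace ℝ E] [FiniteDimensional ℝ E]
variable {C : Set E}

lemma mem_of_dual_nonneg (hcl : IsClosed C) (hconv : Convex ℝ C) (h0 : (0:E) ∈ C)
    (hsm : ∀ c ∈ C, ∀ t : ℝ, 0 ≤ t → t • c ∈ C)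
    {z : E} (hz : ∀ y : E, (∀ c ∈ C, 0 ≤ ⟪y, c⟫) → 0 ≤ ⟪y, z⟫) : z ∈ C := by
  by_contra hzC
  obtain ⟨f, s, hfC, hsz⟩ := geometric_hahn_banach_closed_point hconv hcl hzC
  have hs0 : 0 < s := by simpa using hfC 0 h0
  have hfc : ∀ c ∈ C, f c ≤ 0 := by
    intro c hc
    by_contra hfc
    push_neg at hfc
    have ht : 0 ≤ s / f c + 1 := by positivity
    have := hfC _ (hsm c hc _ ht)
    rw [map_smul] at this
    simp only [smul_eq_mul] at this
    rw [add_mul, div_mul_cancel₀ _ hfc.ne', one_mul] at this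
    linarith
  set y : E := -(InnerProductSpace.toDual ℝ E).symm f with hy
  have hyx : ∀ x : E, ⟪y, x⟫ = -(f x) := by
    intro x
    rw [hy, inner_neg_left, InnerProductSpace.toDual_symm_apply]
  have := hz y (fun c hc => by rw [hyx]; linarith [hfc c hc])
  rw [hyx] at this
  linarith

lemma exists_good_functional (hcl : IsClosed C) (h0 : (0:E) ∈ C)
    (hconv : Convex ℝ C)
    (hsm : ∀ c ∈ C, ∀ t : ℝ, 0 ≤ t → t • c ∈ C)
    (hne : ∃ c ∈ C, c ≠ 0) :
    ∃ u w : E, w ∈ C ∧ ⟪u, w⟫ = 1 ∧ ∀ x ∈ C, ⟪u, x⟫ = 0 → -x ∈ C := by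
  classical
  set D : Set E := {y | ∀ c ∈ C, 0 ≤ ⟪y, c⟫} with hD
  obtain ⟨b, hbD, hbspan, hbli⟩ := exists_linearIndependent ℝ D
  have hbfin : b.Finite := hbli.setFinite
  set u : E := ∑ y ∈ hbfin.toFinset, y with hu
  have huD : ∀ x ∈ C, ⟪u, x⟫ = ∑ y ∈ hbfin.toFinset, ⟪y, x⟫ := by
    intro x _
    rw [hu, sum_inner]
  have key : ∀ x ∈ C, ⟪u, x⟫ = 0 → -x ∈ C := by
    intro x hx hux
    have hterms : ∀ y ∈ hbfin.toFinset, ⟪y, x⟫ = 0 := by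
      have hnn : ∀ y ∈ hbfin.toFinset, 0 ≤ ⟪y, x⟫ := by
        intro y hy
        exact hbD (hbfin.mem_toFinset.mp hy) x hx
      intro y hy
      have := (Finset.sum_eq_zero_iff_of_nonneg hnn).mp (by rw [← huD x hx]; exact hux)
      exact this y hy
    have hspanorth : ∀ y ∈ Submodule.span ℝ b, ⟪y, x⟫ = 0 := by
      intro y hy
      induction hy using Submodule.span_induction with
      | mem y hyb => exact hterms y (hbfin.mem_toFinset.mpr hyb)
      | zero => simp
      | add y z _ _ hy hz => rw [inner_add_left, hy, hz]; ring
      | smul t y _ hy => rw [real_inner_smul_left, hy]; ring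
    apply mem_of_dual_nonneg hcl hconv h0 hsm
    intro y hyD
    have : ⟪y, x⟫ = 0 := hspanorth y (hbspan ▸ Submodule.subset_span hyD)
    rw [inner_neg_right, this]
    simp
  by_cases hex : ∃ w ∈ C, ⟪u, w⟫ ≠ 0
  · obtain ⟨w₀, hw₀C, hw₀⟩ := hex
    have hpos : 0 < ⟪u, w₀⟫ := by
      rcases lt_or_gt_of_ne hw₀ with h | h
      · exfalso
        have : 0 ≤ ⟪u, w₀⟫ := by
          rw [huD w₀ hw₀C]
          exact Finset.sum_nonneg fun y hy => hbD (hbfin.mem_toFinset.mp hy) w₀ hw₀C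
        linarith
      · exact h
    refine ⟨u, (⟪u, w₀⟫)⁻¹ • w₀, hsm w₀ hw₀C _ (inv_nonneg.mpr hpos.le), ?_, key⟩
    rw [real_inner_smul_right]
    field_simp
  · push_neg at hex
    obtain ⟨c, hcC, hc0⟩ := hne
    refine ⟨c, (‖c‖^2)⁻¹ • c, hsm c hcC _ (inv_nonneg.mpr (by positivity)), ?_, ?_⟩
    · rw [real_inner_smul_right, real_inner_self_eq_norm_sq]
      have : ‖c‖ ^ 2 ≠ 0 := pow_ne_zero 2 (norm_ne_zero_iff.mpr hc0)
      field_simp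
    · intro x hx _
      exact key x hx (hex x hx)

end Dual

lemma recCone_image_subset
    {E F : Type*} [NormedAddCommGroup E] [InnerProductSpace ℝ E] [FiniteDimensional ℝ E]
    [NormedAddCommGroup F] [NormedSpace ℝ F]
    {G : Set E} (hopen : IsOpen G) (hconv : Convex ℝ G) {a₀ : E} (ha₀ : a₀ ∈ G)
    (L : E →ₗ[ℝ] F)
    (hker : ∀ x ∈ recCone G, L x = 0 → -x ∈ recCone G) :
    recCone (L '' G) ⊆ L '' recCone G := by
  classical
  intro v hv
  rcases eq_or_ne v 0 with rfl | hv0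
  · exact ⟨0, recCone_zero_mem G, map_zero L⟩
  set Lc := LinearMap.toContinuousLinearMap L with hLcdef
  have hLcL : ∀ x, L x = Lc x := fun x => rfl
  set cG := closure G with hcG
  have hcGcl : IsClosed cG := isClosed_closure
  have hcGconv : Convex ℝ cG := hconv.closure
  have hrc : recCone cG = recCone G := recCone_closure_eq hopen hconv
  have hfiber : ∀ m : ℕ, ∃ p : E, p ∈ cG ∧ L p = L a₀ + (m : ℝ) • v ∧
      ∀ q, q ∈ cG → L q = L a₀ + (m : ℝ) • v → ‖p‖ ≤ ‖q‖ := by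
    intro m
    obtain ⟨g₀, hg₀G, hg₀⟩ := hv (L a₀) ⟨a₀, ha₀, rfl⟩ (m : ℝ) (Nat.cast_nonneg m)
    set S : Set E := cG ∩ (Lc ⁻¹' {L a₀ + (m : ℝ) • v}) with hS
    have hScl : IsClosed S := hcGcl.inter (isClosed_singleton.preimage Lc.continuous)
    have hSne : S.Nonempty := ⟨g₀, subset_closure hg₀G, by
      simp only [Set.mem_preimage, Set.mem_singleton_iff, ← hLcL]; exact hg₀⟩
    obtain ⟨p, hpS, hpd⟩ := hScl.exists_infDist_eq_dist hSne 0
    refine ⟨p, hpS.1, by simpa [← hLcL] using hpS.2, ?_⟩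
    intro q hq1 hq2
    have hqS : q ∈ S := ⟨hq1, by
      simp only [Set.mem_preimage, Set.mem_singleton_iff, ← hLcL]; exact hq2⟩
    have h1 : infDist 0 S ≤ dist 0 q := infDist_le_dist_of_mem hqS
    rw [hpd] at h1
    simpa [dist_zero_left] using h1
  choose a haG haL hamin using hfiber
  have hvpos : 0 < ‖v‖ := norm_pos_iff.mpr hv0
  have hgrow : ∀ m : ℕ, (m : ℝ) * ‖v‖ - ‖L a₀‖ ≤ ‖Lc‖ * ‖a m‖ := by
    intro m
    have h1 : ‖(m : ℝ) • v‖ - ‖L a₀‖ ≤ ‖L a₀ + (m : ℝ) • v‖ := by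
      have h := norm_sub_le (L a₀ + (m : ℝ) • v) (L a₀)
      rw [add_sub_cancel_left] at h
      linarith
    have h2 : ‖L a₀ + (m : ℝ) • v‖ ≤ ‖Lc‖ * ‖a m‖ := by
      rw [← haL m, hLcL]
      exact Lc.le_opNorm _
    have h3 : ‖(m : ℝ) • v‖ = (m : ℝ) * ‖v‖ := by
      rw [norm_smul, Real.norm_natCast]
    linarith
  have hLcnz : Lc ≠ 0 := by
    intro h
    have h0 : L a₀ = 0 := by rw [hLcL, h]; rfl
    have h1 : L (a 1) = 0 := by rw [hLcL, h]; rfl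
    have := haL 1
    rw [h0, h1] at this
    simp at this
    exact hv0 this.symm
  have hLcpos : 0 < ‖Lc‖ := by
    rcases (norm_nonneg Lc).lt_or_eq with h | h
    · exact h
    · exact absurd (ContinuousLinearMap.opNorm_zero_iff Lc |>.mp h.symm) hLcnz
  have hnorm_top : Tendsto (fun m : ℕ => ‖a m‖) atTop atTop := by
    have hlow : Tendsto (fun m : ℕ => ((m : ℝ) * ‖v‖ - ‖L a₀‖) / ‖Lc‖) atTop atTop := by
      apply Tendsto.atTop_div_const hLcpos
      apply tendsto_atTop_add_const_right
      exact Tendsto.atTop_mul_const hvpos tendsto_natCast_atTop_atTop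
    apply tendsto_atTop_mono _ hlow
    intro m
    rw [div_le_iff₀ hLcpos]
    calc (m : ℝ) * ‖v‖ - ‖L a₀‖ ≤ ‖Lc‖ * ‖a m‖ := hgrow m
      _ = ‖a m‖ * ‖Lc‖ := mul_comm _ _
  obtain ⟨M, hM⟩ := eventually_atTop.mp (hnorm_top.eventually_ge_atTop 1)
  set b : ℕ → E := fun m => a (m + M) with hbdef
  set t : ℕ → ℝ := fun m => ‖a (m + M)‖ with htdef
  have ht1 : ∀ m, 1 ≤ t m := fun m => hM (m + M) (Nat.le_add_left M m)
  have ht0 : ∀ m, 0 < t m := fun m => lt_of_lt_of_le one_pos (ht1 m)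
  set r : ℕ → ℝ := fun m => ((m + M : ℕ) : ℝ) / t m with hrdef
  set R : ℝ := (‖Lc‖ + ‖L a₀‖) / ‖v‖ with hRdef
  have hrmem : ∀ m, r m ∈ Set.Icc (0:ℝ) R := by
    intro m
    constructor
    · exact div_nonneg (Nat.cast_nonneg _) (ht0 m).le
    · rw [hrdef]
      rw [div_le_iff₀ (ht0 m), hRdef, div_mul_eq_mul_div, le_div_iff₀ hvpos]
      have h2 : ‖L a₀‖ ≤ ‖L a₀‖ * t m := le_mul_of_one_le_right (norm_nonneg _) (ht1 m)
      calc ((m + M : ℕ) : ℝ) * ‖v‖ ≤ ‖Lc‖ * t m + ‖L a₀‖ := by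
            linarith [hgrow (m + M)]
        _ ≤ ‖Lc‖ * t m + ‖L a₀‖ * t m := by linarith
        _ = (‖Lc‖ + ‖L a₀‖) * t m := by ring
  set xs : ℕ → E := fun m => (t m)⁻¹ • b m with hxsdef
  have hxs_sphere : ∀ m, xs m ∈ sphere (0:E) 1 := by
    intro m
    rw [mem_sphere_iff_norm, sub_zero, hxsdef]
    simp only [norm_smul, norm_inv, Real.norm_eq_abs, abs_of_pos (ht0 m)]
    exact inv_mul_cancel₀ (ht0 m).ne'
  obtain ⟨x, hxsph, φ₁, hφ₁, hxt1⟩ :=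
    (isCompact_sphere (0:E) 1).tendsto_subseq hxs_sphere
  obtain ⟨ρ, hρmem, φ₂, hφ₂, hrt⟩ :=
    (isCompact_Icc (a := (0:ℝ)) (b := R)).tendsto_subseq (fun m => hrmem (φ₁ m))
  set φ : ℕ → ℕ := φ₁ ∘ φ₂ with hφdef
  have hφmono : StrictMono φ := hφ₁.comp hφ₂
  have hxt : Tendsto (fun m => xs (φ m)) atTop (𝓝 x) := hxt1.comp hφ₂.tendsto_atTop
  have hxnorm : ‖x‖ = 1 := by
    rw [mem_sphere_iff_norm, sub_zero] at hxsph; exact hxsph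
  have htφ : Tendsto (fun m => t (φ m)) atTop atTop := by
    have h1 : Tendsto (fun m : ℕ => φ m + M) atTop atTop :=
      tendsto_atTop_mono (fun m => le_trans (hφmono.le_apply) (Nat.le_add_right _ _)) tendsto_id
    exact hnorm_top.comp h1
  have htinv : Tendsto (fun m => (t (φ m))⁻¹) atTop (𝓝 0) := htφ.inv_tendsto_atTop
  have hxC : x ∈ recCone G := by
    rw [← hrc]
    apply mem_recCone_of_basepoint hcGcl hcGconv (subset_closure ha₀)
    intro l hl
    have htend : Tendsto
        (fun m => a₀ + l • (xs (φ m)) - (l * (t (φ m))⁻¹) • a₀) atTop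
        (𝓝 (a₀ + l • x)) := by
      have h1 : Tendsto (fun m => a₀ + l • (xs (φ m))) atTop (𝓝 (a₀ + l • x)) :=
        ((hxt.const_smul l).const_add a₀)
      have h2 : Tendsto (fun m => (l * (t (φ m))⁻¹) • a₀) atTop (𝓝 ((l * 0) • a₀)) :=
        ((htinv.const_mul l).smul_const a₀)
      simpa using h1.sub h2
    have hmem : ∀ᶠ m in atTop, a₀ + l • (xs (φ m)) - (l * (t (φ m))⁻¹) • a₀ ∈ cG := by
      filter_upwards [htφ.eventually_ge_atTop l] with m hm
      set θ : ℝ := l / (t (φ m)) with hθdef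
      have htp := ht0 (φ m)
      have hθ0 : 0 ≤ θ := div_nonneg hl htp.le
      have hθ1 : θ ≤ 1 := (div_le_one htp).mpr hm
      have hmem2 := hcGconv (subset_closure ha₀) (haG (φ m + M) : b (φ m) ∈ cG)
        (by linarith : (0:ℝ) ≤ 1 - θ) hθ0 (by ring)
      have heq : (1 - θ) • a₀ + θ • (b (φ m)) =
          a₀ + l • (xs (φ m)) - (l * (t (φ m))⁻¹) • a₀ := by
        rw [hxsdef]
        simp only [smul_smul, sub_smul, one_smul, hθdef, div_eq_mul_inv]
        abel
      rw [heq] at hmem2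
      exact hmem2
    have := mem_closure_of_tendsto htend hmem
    rwa [hcGcl.closure_eq] at this
  have hLx : L x = ρ • v := by
    have h1 : Tendsto (fun m => Lc (xs (φ m))) atTop (𝓝 (Lc x)) :=
      (Lc.continuous.tendsto x).comp hxt
    have h2 : ∀ m, Lc (xs (φ m)) = (t (φ m))⁻¹ • (L a₀) + (r (φ m)) • v := by
      intro m
      rw [hxsdef]
      simp only [map_smul]
      rw [← hLcL, hbdef]
      show (t (φ m))⁻¹ • (L (a (φ m + M))) = _
      rw [haL (φ m + M), smul_add, smul_smul]
      congr 1
      show ((t (φ m))⁻¹ * ((φ m + M : ℕ) : ℝ)) • v = (((φ m + M : ℕ) : ℝ) / t (φ m)) • v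
      rw [div_eq_inv_mul]
    have h3 : Tendsto (fun m => (t (φ m))⁻¹ • (L a₀) + (r (φ m)) • v) atTop
        (𝓝 ((0:ℝ) • (L a₀) + ρ • v)) :=
      (htinv.smul_const (L a₀)).add (hrt.smul_const v)
    rw [zero_smul, zero_add] at h3
    have h4 : Tendsto (fun m => Lc (xs (φ m))) atTop (𝓝 (ρ • v)) := by
      simpa only [h2] using h3
    have := tendsto_nhds_unique h1 h4
    rw [hLcL]; exact this
  rcases eq_or_ne ρ 0 with hρ0 | hρne
  · exfalso
    rw [hρ0, zero_smul] at hLx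
    have hnx : -x ∈ recCone cG := by rw [hrc]; exact hker x hxC hLx
    have hkey : ∀ m, ⟪xs m, x⟫ ≤ 1 / 2 := by
      intro m
      have hbm : b m - (t m) • x ∈ cG := by
        have := hnx (b m) (haG (m + M)) (t m) (ht0 m).le
        rwa [smul_neg, ← sub_eq_add_neg] at this
      have hLbm : L (b m - (t m) • x) = L a₀ + ((m + M : ℕ) : ℝ) • v := by
        rw [map_sub, map_smul, hLx, smul_zero, sub_zero, hbdef]
        exact haL (m + M)
      have hmin := hamin (m + M) _ hbm hLbm
      have hsq : ‖b m - (t m) • x‖ ^ 2 =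
          ‖b m‖ ^ 2 - 2 * ((t m) * ⟪b m, x⟫) + (t m) ^ 2 := by
        rw [norm_sub_sq_real, real_inner_smul_right, norm_smul, Real.norm_eq_abs,
          abs_of_pos (ht0 m), mul_pow, hxnorm]
        ring
      have hmin2 : ‖b m‖ ^ 2 ≤ ‖b m - (t m) • x‖ ^ 2 := by
        apply pow_le_pow_left₀ (norm_nonneg _) hmin
      have h5 : 2 * ((t m) * ⟪b m, x⟫) ≤ (t m) ^ 2 := by linarith [hsq, hmin2]
      have h6 : 2 * ⟪b m, x⟫ ≤ t m := by
        have h7 : (t m) * (2 * ⟪b m, x⟫) ≤ (t m) * (t m) := by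
          have hsq2 : (t m) ^ 2 = (t m) * (t m) := by ring
          linarith
        exact le_of_mul_le_mul_left h7 (ht0 m)
      rw [hxsdef]
      show ⟪(t m)⁻¹ • b m, x⟫ ≤ 1 / 2
      rw [real_inner_smul_left, inv_mul_le_iff₀ (ht0 m)]
      linarith
    have hlim : Tendsto (fun m => ⟪xs (φ m), x⟫) atTop (𝓝 ⟪x, x⟫) :=
      hxt.inner tendsto_const_nhds
    have hle : ⟪x, x⟫ ≤ 1 / 2 :=
      le_of_tendsto hlim (Eventually.of_forall fun m => hkey (φ m))
    rw [real_inner_self_eq_norm_sq, hxnorm] at hle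
    norm_num at hle
  · have hρpos : 0 < ρ := lt_of_le_of_ne hρmem.1 (Ne.symm hρne)
    refine ⟨ρ⁻¹ • x, recCone_smul_mem hxC (inv_nonneg.mpr hρpos.le), ?_⟩
    rw [map_smul, hLx, smul_smul, inv_mul_cancel₀ hρne, one_smul]

noncomputable def Lmap {E : Type*} [NormedAddCommGroup E] [InnerProductSpace ℝ E]
    (u y' : E) : E →ₗ[ℝ] EuclideanSpace ℝ (Fin 2) where
  toFun x := (WithLp.equiv 2 (Fin 2 → ℝ)).symm ![⟪u, x⟫, ⟪y', x⟫]
  map_add' a b := by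
    apply (WithLp.equiv 2 (Fin 2 → ℝ)).injective
    funext i
    fin_cases i <;> simp [inner_add_right]
  map_smul' c a := by
    apply (WithLp.equiv 2 (Fin 2 → ℝ)).injective
    funext i
    fin_cases i <;> simp [inner_smul_right]

section LmapLemmas
variable {E : Type*} [NormedAddCommGroup E] [InnerProductSpace ℝ E]

lemma Lmap_apply0 (u y' x : E) : Lmap u y' x 0 = ⟪u, x⟫ := rfl
lemma Lmap_apply1 (u y' x : E) : Lmap u y' x 1 = ⟪y', x⟫ := rfl

lemma Lmap_eq_single {u y' x : E} (h1 : ⟪u, x⟫ = 1) (h0 : ⟪y', x⟫ = 0) :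
    Lmap u y' x = EuclideanSpace.single (0 : Fin 2) (1:ℝ) := by
  apply (WithLp.equiv 2 (Fin 2 → ℝ)).injective
  funext i
  fin_cases i <;> simp [Lmap, h1, h0, EuclideanSpace.single_apply]

lemma Lmap_smul_single {u y' x : E} (h0 : ⟪y', x⟫ = 0) :
    Lmap u y' x = ⟪u, x⟫ • EuclideanSpace.single (0 : Fin 2) (1:ℝ) := by
  apply (WithLp.equiv 2 (Fin 2 → ℝ)).injective
  funext i
  fin_cases i <;> simp [Lmap, h0, EuclideanSpace.single_apply]

lemma Lmap_surjective {u y' w : E} (huw : ⟪u, w⟫ = 1) (hy'w : ⟪y', w⟫ = 0)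
    (hy'0 : y' ≠ 0) : Function.Surjective (Lmap u y') := by
  intro z
  have hy'y' : ⟪y', y'⟫ ≠ 0 := by
    rw [real_inner_self_eq_norm_sq]
    exact pow_ne_zero 2 (norm_ne_zero_iff.mpr hy'0)
  refine ⟨(z 0 - (z 1 / ⟪y', y'⟫) * ⟪u, y'⟫) • w + (z 1 / ⟪y', y'⟫) • y', ?_⟩
  apply (WithLp.equiv 2 (Fin 2 → ℝ)).injective
  funext i
  fin_cases i <;>
    simp [Lmap, inner_add_right, real_inner_smul_right, huw, hy'w] <;>
    field_simp

end LmapLemmas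

theorem exists_projection {n : ℕ} (hn : 2 ≤ n)
    (G : Set (EuclideanSpace ℝ (Fin n)))
    (hopen : IsOpen G) (hconv : Convex ℝ G)
    (hdim1 : 1 ≤ Module.finrank ℝ (Submodule.span ℝ (recCone G)))
    (hdim2 : Module.finrank ℝ (Submodule.span ℝ (recCone G)) < n) :
    ∃ L : EuclideanSpace ℝ (Fin n) →ₗ[ℝ] EuclideanSpace ℝ (Fin 2),
      Function.Surjective L ∧
      EuclideanSpace.single (0 : Fin 2) (1:ℝ) ∈ recCone (L '' G) ∧
      recCone (L '' G) = L '' recCone G ∧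
      recCone (L '' G) ⊆
        ↑(Submodule.span ℝ {EuclideanSpace.single (0 : Fin 2) (1:ℝ)}) := by
  classical
  have hfr : Module.finrank ℝ (EuclideanSpace ℝ (Fin n)) = n := finrank_euclideanSpace_fin
  have hGne : G.Nonempty := by
    rcases Set.eq_empty_or_nonempty G with h | h
    · exfalso
      have huniv : recCone G = Set.univ := by
        ext x
        constructor
        · intro _; trivial
        · intro _ a ha _ _; rw [h] at ha; exact absurd ha (Set.notMem_empty a)
      rw [huniv, Submodule.span_univ, finrank_top, hfr] at hdim2
      omega
    · exact h
  obtain ⟨a₀, ha₀⟩ := hGne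
  have hrc : recCone (closure G) = recCone G := recCone_closure_eq hopen hconv
  have hCcl : IsClosed (recCone G) := hrc ▸ recCone_isClosed isClosed_closure
  have h0C : (0 : EuclideanSpace ℝ (Fin n)) ∈ recCone G := recCone_zero_mem G
  have hCconv : Convex ℝ (recCone G) := recCone_convex G
  have hsm : ∀ c ∈ recCone G, ∀ t : ℝ, 0 ≤ t → t • c ∈ recCone G :=
    fun c hc t ht => recCone_smul_mem hc ht
  have hCne : ∃ c ∈ recCone G, c ≠ 0 := by
    by_contra h
    push_neg at h
    have hsub : recCone G ⊆ {(0 : EuclideanSpace ℝ (Fin n))} := fun c hc => h c hc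
    have hle : Submodule.span ℝ (recCone G) ≤ ⊥ := by
      rw [← Submodule.span_zero_singleton (R := ℝ) (M := EuclideanSpace ℝ (Fin n))]
      exact Submodule.span_mono hsub
    rw [le_bot_iff] at hle
    rw [hle, finrank_bot] at hdim1
    omega
  obtain ⟨u, w, hwC, huw, hukey⟩ := exists_good_functional hCcl h0C hCconv hsm hCne
  have hspan_ne : Submodule.span ℝ (recCone G) ≠ ⊤ := by
    intro h
    rw [h, finrank_top, hfr] at hdim2
    omega
  have horth : (Submodule.span ℝ (recCone G))ᗮ ≠ ⊥ := by
    rw [Ne, Submodule.orthogonal_eq_bot_iff]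
    exact hspan_ne
  obtain ⟨y', hy'S, hy'0⟩ := Submodule.exists_mem_ne_zero_of_ne_bot horth
  have hy'C : ∀ c ∈ recCone G, ⟪y', c⟫ = 0 := by
    intro c hc
    exact (Submodule.mem_orthogonal' _ _).mp hy'S c (Submodule.subset_span hc)
  set L := Lmap u y' with hLdef
  have hy'w : ⟪y', w⟫ = 0 := hy'C w hwC
  have hLw : L w = EuclideanSpace.single (0 : Fin 2) (1:ℝ) := Lmap_eq_single huw hy'w
  have hsurj : Function.Surjective L := Lmap_surjective huw hy'w hy'0
  have hmem_e0 : EuclideanSpace.single (0 : Fin 2) (1:ℝ) ∈ recCone (L '' G) := by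
    rintro p ⟨aa, haa, rfl⟩ l hl
    exact ⟨aa + l • w, hwC aa haa l hl, by rw [map_add, map_smul, hLw]⟩
  have hsub1 : L '' recCone G ⊆ recCone (L '' G) := by
    rintro p ⟨xx, hxx, rfl⟩ q ⟨aa, haa, rfl⟩ l hl
    exact ⟨aa + l • xx, hxx aa haa l hl, by rw [map_add, map_smul]⟩
  have hker : ∀ x ∈ recCone G, L x = 0 → -x ∈ recCone G := by
    intro x hx hLx
    apply hukey x hx
    have : L x 0 = 0 := by rw [hLx]; rfl
    rwa [hLdef, Lmap_apply0] at this
  have hsub2 : recCone (L '' G) ⊆ L '' recCone G :=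
    recCone_image_subset hopen hconv ha₀ L hker
  have heq : recCone (L '' G) = L '' recCone G := Set.Subset.antisymm hsub2 hsub1
  refine ⟨L, hsurj, hmem_e0, heq, ?_⟩
  intro p hp
  obtain ⟨xx, hxx, rfl⟩ := hsub2 hp
  exact Submodule.mem_span_singleton.mpr ⟨⟪u, xx⟫, (Lmap_smul_single (hy'C xx hxx)).symm⟩
end
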